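/- arXiv:2306.07945 — 10 statements merged into one kernel-verified Lean document; each statement's English description precedes it below -/
import Mathlib

section
/- Let K be a normalized kernel (K ≥ 0 measurable on ℝ with all absolute moments finite, m₀ = 1, m₁ = 0, m₂ = 1) and n ≥ 1. Given M = (M₀,…,M₂ₙ) ∈ ℝ^{2n+1}, define the auxiliary moments M*ⱼ(σ) = Σ_{k=0}^{j} b_k σ^k (j!/(j−k)!) M_{j−k} for j = 0,…,2n and set P_n(σ;M) = det H_n(M*(σ)). Then the following are equivalent: (i) there exists a unique W = (w₁,u₁,…,w_n,u_n,σ) ∈ Ω (i.e. with all wᵢ > 0, u₁ < ⋯ < u_n, σ > 0) such that Σ_{i=1}^{n} wᵢ Δⱼ(uᵢ,σ) = Mⱼ for all j = 0,…,2n; (ii) there exists a unique σ₀ > 0 such that P_n(σ₀;M) = 0 and the Hankel matrix H_{n−1}(M*(σ₀)) is positive definite. -/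
/-!
Substituting `ξ = u + σ t` shows that the kernel moments `Δⱼ(u, σ)` are the binomial convolution
of the powers of `u` with `(σᵏ mₖ)ₖ`. The recursion for `b` says that `∑ bₖ tᵏ` inverts
`∑ mₖ tᵏ / k!`, so passing from `M` to `M*(σ)` undoes that convolution: `(w, u, σ)` solves the
moment equations iff `M*(σ)` agrees up to order `2n` with the moments `∑ᵢ wᵢ uᵢʲ` of `n` atoms.

This reduces the statement to the truncated Hamburger moment problem. Moments of `n` atoms give
`Hₖ = Vᵀ diag(w) V` with `V` the `n × (k+1)` Vandermonde matrix, so `Hₙ₋₁` is positive definite and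
`Hₙ` is singular. Conversely, if `Hₙ₋₁(N) = BᵀB` is positive definite, then
`A = B⁻ᵀ Hₙ₋₁(N ∘ succ) B⁻¹` is symmetric and sends `B eₚ` to `B eₚ₊₁`, so `Nⱼ = ⟨B e₀, Aʲ B e₀⟩`
for `j < 2n`; diagonalising `A` writes these as moments of at most `n` atoms with positive weights
(Gauss quadrature), and positive definiteness forces exactly `n` of them. As `det Hₙ(N)` is affine
in `N₂ₙ` with slope `det Hₙ₋₁(N) ≠ 0`, the condition `det Hₙ(N) = 0` then matches `N₂ₙ` too.
The atoms are unique: the square of the nodal polynomial of one representation has degree `2n`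
and integrates to zero against the other.
-/

open MeasureTheory Finset Matrix PowerSeries
open scoped MatrixOrder

noncomputable section

section BinomialConv

def binomialConv (α X : ℕ → ℝ) (j : ℕ) : ℝ :=
  ∑ k ∈ range (j + 1), (j.choose k : ℝ) * α k * X (j - k)

def egf (X : ℕ → ℝ) : PowerSeries ℝ := PowerSeries.mk fun j => X j / j.factorial

lemma egf_injective : Function.Injective egf := by
  intro X Y h
  funext j
  have := congrArg (PowerSeries.coeff j) h
  simp only [egf, coeff_mk] at this
  exact (div_left_inj' (by positivity)).mp this

lemma egf_binomialConv (α X : ℕ → ℝ) : egf (binomialConv α X) = egf α * egf X := by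
  ext j
  simp only [egf, binomialConv, coeff_mk, coeff_mul, Finset.Nat.sum_antidiagonal_eq_sum_range_succ
    (fun k l => α k / k.factorial * (X l / l.factorial)), sum_div]
  refine sum_congr rfl fun k hk => ?_
  rw [Nat.cast_choose ℝ (Nat.lt_succ_iff.mp (mem_range.mp hk))]
  field_simp

lemma egf_single_zero : egf (Pi.single 0 1) = 1 := by
  ext j
  rcases eq_or_ne j 0 with rfl | hj <;> simp [egf, coeff_one, *]

lemma binomialConv_assoc (α β X : ℕ → ℝ) :
    binomialConv α (binomialConv β X) = binomialConv (binomialConv α β) X :=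
  egf_injective <| by simp only [egf_binomialConv, mul_assoc]

lemma binomialConv_comm (α β : ℕ → ℝ) : binomialConv α β = binomialConv β α :=
  egf_injective <| by simp only [egf_binomialConv, mul_comm]

lemma binomialConv_single_zero (X : ℕ → ℝ) : binomialConv (Pi.single 0 1) X = X :=
  egf_injective <| by rw [egf_binomialConv, egf_single_zero, one_mul]

lemma binomialConv_congr_of_le {α X Y : ℕ → ℝ} {J : ℕ} (h : ∀ j ≤ J, X j = Y j) :
    ∀ j ≤ J, binomialConv α X j = binomialConv α Y j := fun j hj =>
  sum_congr rfl fun k _ => by rw [h (j - k) (by omega)]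

lemma binomialConv_eqOn_iff {α β X Y : ℕ → ℝ} (hβα : binomialConv β α = Pi.single 0 1)
    (J : ℕ) : (∀ j ≤ J, X j = binomialConv α Y j) ↔ ∀ j ≤ J, binomialConv β X j = Y j := by
  constructor
  · intro h j hj
    rw [binomialConv_congr_of_le h j hj, binomialConv_assoc, hβα, binomialConv_single_zero]
  · intro h j hj
    rw [← binomialConv_congr_of_le h j hj, binomialConv_assoc, binomialConv_comm α, hβα,
      binomialConv_single_zero]

lemma sum_mul_binomialConv {ι : Type*} (s : Finset ι) (c : ι → ℝ) (α : ℕ → ℝ) (X : ι → ℕ → ℝ)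
    (j : ℕ) : ∑ i ∈ s, c i * binomialConv α (X i) j =
      binomialConv α (fun l => ∑ i ∈ s, c i * X i l) j := by
  simp only [binomialConv, mul_sum]
  rw [sum_comm]
  exact sum_congr rfl fun k _ => sum_congr rfl fun i _ => by ring

lemma mk_mul_mk_div_factorial_eq_one {b m : ℕ → ℝ} (hm0 : m 0 = 1) (hb0 : b 0 = 1)
    (hb : ∀ k, 1 ≤ k → b k = -∑ l ∈ Icc 1 k, m l / (l.factorial : ℝ) * b (k - l)) :
    mk b * mk (fun l => m l / l.factorial) = 1 := by
  ext j
  rw [coeff_mul, ← Finset.Nat.sum_antidiagonal_swap]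
  simp only [Prod.fst_swap, Prod.snd_swap, coeff_mk, coeff_one]
  rw [Finset.Nat.sum_antidiagonal_eq_sum_range_succ (fun l k => b k * (m l / l.factorial)),
    sum_range_succ']
  rcases Nat.eq_zero_or_pos j with rfl | hj
  · simp [hm0, hb0]
  have hIcc : ∑ l ∈ Icc 1 j, m l / (l.factorial : ℝ) * b (j - l) =
      ∑ l ∈ range j, b (j - (l + 1)) * (m (l + 1) / (l + 1).factorial) := by
    rw [← Finset.Ico_add_one_right_eq_Icc, sum_Ico_eq_sum_range]
    exact sum_congr (by simp) fun l _ => by rw [add_comm 1 l, mul_comm]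
  rw [if_neg hj.ne', ← hIcc, Nat.sub_zero, hb j hj, hm0]
  simp

lemma binomialConv_factorial_mul_eq_single_zero {b m : ℕ → ℝ} (hm0 : m 0 = 1) (hb0 : b 0 = 1)
    (hb : ∀ k, 1 ≤ k → b k = -∑ l ∈ Icc 1 k, m l / (l.factorial : ℝ) * b (k - l)) (σ : ℝ) :
    binomialConv (fun k => k.factorial * b k * σ ^ k) (fun k => σ ^ k * m k) = Pi.single 0 1 := by
  have hβ : egf (fun k => k.factorial * b k * σ ^ k) = rescale σ (mk b) := by
    ext k
    simp only [egf, coeff_mk, coeff_rescale]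
    field_simp
  have hα : egf (fun k => σ ^ k * m k) = rescale σ (mk fun l => m l / l.factorial) := by
    ext k
    simp only [egf, coeff_mk, coeff_rescale]
    ring
  apply egf_injective
  rw [egf_binomialConv, hβ, hα, ← map_mul, mk_mul_mk_div_factorial_eq_one hm0 hb0 hb, map_one,
    egf_single_zero]

end BinomialConv

section Hankel

def hankel (N : ℕ → ℝ) (k : ℕ) : Matrix (Fin k) (Fin k) ℝ := Matrix.of fun i j => N (i + j)

def atomicMoment {ι : Type*} [Fintype ι] (w t : ι → ℝ) (j : ℕ) : ℝ := ∑ i, w i * t i ^ j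

lemma hankel_congr {N N' : ℕ → ℝ} {k : ℕ} (h : ∀ j, j + 2 ≤ 2 * k → N j = N' j) :
    hankel N k = hankel N' k :=
  Matrix.ext fun i j => h _ (by omega)

lemma hankel_transpose (N : ℕ → ℝ) (k : ℕ) : (hankel N k)ᵀ = hankel N k :=
  Matrix.ext fun i j => by simp [hankel, add_comm]

lemma hankel_mulVec_single (N : ℕ → ℝ) {k p : ℕ} (hp : p < k) :
    hankel N k *ᵥ Pi.single ⟨p, hp⟩ 1 = fun i : Fin k => N (i + p) := by
  rw [mulVec_single_one]
  rfl

lemma single_dotProduct_hankel_mulVec_single (N : ℕ → ℝ) {k p r : ℕ} (hp : p < k) (hr : r < k) :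
    Pi.single ⟨p, hp⟩ 1 ⬝ᵥ (hankel N k *ᵥ Pi.single ⟨r, hr⟩ 1) = N (p + r) := by
  rw [hankel_mulVec_single N hr, single_dotProduct, one_mul]

lemma det_hankel_succ {N N' : ℕ → ℝ} {n : ℕ} (h : ∀ j < 2 * n, N j = N' j) :
    (hankel N' (n + 1)).det =
      (hankel N (n + 1)).det + (N' (2 * n) - N (2 * n)) * (hankel N n).det := by
  set B := hankel N (n + 1)
  have hrow : hankel N' (n + 1) = B.updateRow (Fin.last n)
      (B (Fin.last n) + (N' (2 * n) - N (2 * n)) • Pi.single (Fin.last n) 1) := by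
    ext i j
    rcases eq_or_ne i (Fin.last n) with rfl | hi
    · rcases eq_or_ne j (Fin.last n) with rfl | hj
      · simp [B, hankel, two_mul]
      · simp [B, hankel, hj, h _ (show n + (j : ℕ) < 2 * n by have := Fin.val_lt_last hj; omega)]
    · simp [B, hankel, hi, h _ (show (i : ℕ) + j < 2 * n by have := Fin.val_lt_last hi; omega)]
  have hminor : (B.updateRow (Fin.last n) (Pi.single (Fin.last n) 1)).det = (hankel N n).det := by
    rw [← adjugate_apply, adjugate_fin_succ_eq_det_submatrix, Fin.succAbove_last,
      Even.neg_one_pow ⟨_, rfl⟩, one_mul]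
    rfl
  rw [hrow, det_updateRow_add, det_updateRow_smul, updateRow_eq_self, hminor]

section Atomic

variable {ι : Type*} [Fintype ι] [DecidableEq ι] (w t : ι → ℝ)

lemma hankel_atomicMoment (k : ℕ) :
    hankel (atomicMoment w t) k =
      (rectVandermonde t 1 k)ᵀ * diagonal w * rectVandermonde t 1 k := by
  ext i j
  simp only [hankel, atomicMoment, rectVandermonde_apply, Pi.one_apply, one_pow, mul_one,
    of_apply, mul_apply, transpose_apply, diagonal_apply, mul_ite, mul_zero, sum_ite_eq',
    mem_univ, if_true, pow_add]
  exact sum_congr rfl fun l _ => by ring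

lemma det_hankel_atomicMoment_eq_zero {k : ℕ} (hk : Fintype.card ι < k) :
    (hankel (atomicMoment w t) k).det = 0 := by
  by_contra hdet
  have hrank := rank_of_isUnit (hankel (atomicMoment w t) k)
    ((isUnit_iff_isUnit_det _).mpr (isUnit_iff_ne_zero.mpr hdet))
  rw [hankel_atomicMoment] at hrank
  have := (rank_mul_le_right ((rectVandermonde t 1 k)ᵀ * diagonal w) _).trans
    (rank_le_card_height (rectVandermonde t 1 k))
  rw [hrank, Fintype.card_fin] at this
  omega

end Atomic

lemma posDef_hankel_atomicMoment {k : ℕ} {w t : Fin k → ℝ} (hw : ∀ i, 0 < w i)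
    (ht : Function.Injective t) : (hankel (atomicMoment w t) k).PosDef := by
  rw [hankel_atomicMoment, ← conjTranspose_eq_transpose_of_trivial]
  refine (posDef_diagonal_iff.mpr hw).conjTranspose_mul_mul_same
    (mulVec_injective_iff_isUnit.mpr ?_)
  rw [← projVandermonde, ← vandermonde_eq_projVandermonde, isUnit_iff_isUnit_det,
    isUnit_iff_ne_zero]
  exact det_vandermonde_ne_zero_iff.mpr ht

end Hankel

section Realization

lemma exists_strictMono_atomicMoment_eq {ι : Type*} [Fintype ι] {w : ι → ℝ} (hw : ∀ i, 0 ≤ w i)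
    (t : ι → ℝ) : ∃ k ≤ Fintype.card ι, ∃ w' u : Fin k → ℝ,
      (∀ i, 0 < w' i) ∧ StrictMono u ∧ atomicMoment w t = atomicMoment w' u := by
  classical
  set s := univ.filter fun i => w i ≠ 0
  set T := s.image t
  set W : ℝ → ℝ := fun τ => ∑ i ∈ s with t i = τ, w i
  set u := T.orderEmbOfFin rfl
  refine ⟨T.card, card_image_le.trans (card_filter_le _ _), fun i => W (u i), u, fun i => ?_,
    u.strictMono, funext fun j => ?_⟩
  · obtain ⟨l, hl, hlu⟩ := mem_image.mp (T.orderEmbOfFin_mem rfl i)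
    exact sum_pos' (fun l _ => hw l) ⟨l, mem_filter.mpr ⟨hl, hlu⟩,
      (hw l).lt_of_ne (mem_filter.mp hl).2.symm⟩
  calc atomicMoment w t j = ∑ i ∈ s, w i * t i ^ j :=
        (sum_filter_of_ne fun i _ h => left_ne_zero_of_mul h).symm
    _ = ∑ τ ∈ T, W τ * τ ^ j := by
        rw [← sum_fiberwise_of_maps_to fun i hi => mem_image_of_mem t hi]
        exact sum_congr rfl fun τ _ => by
          rw [sum_mul]
          exact sum_congr rfl fun i hi => by rw [(mem_filter.mp hi).2]
    _ = atomicMoment (fun i => W (u i)) u j := by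
        refine Eq.trans ?_ (sum_map univ u.toEmbedding fun τ => W τ * τ ^ j)
        simp only [u, map_orderEmbOfFin_univ]

lemma Matrix.IsHermitian.exists_dotProduct_pow_mulVec_eq {ι : Type*} [Fintype ι] [DecidableEq ι]
    {A : Matrix ι ι ℝ} (hA : A.IsHermitian) (v : ι → ℝ) :
    ∃ y : ι → ℝ, ∀ j, v ⬝ᵥ (A ^ j *ᵥ v) = atomicMoment (fun i => y i ^ 2) hA.eigenvalues j := by
  set U : Matrix ι ι ℝ := (hA.eigenvectorUnitary : Matrix ι ι ℝ)
  refine ⟨star U *ᵥ v, fun j => ?_⟩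
  have hpow : A ^ j = U * diagonal (hA.eigenvalues ^ j) * star U := by
    conv_lhs => rw [hA.spectral_theorem]
    rw [← map_pow, Unitary.conjStarAlgAut_apply, diagonal_pow]
    rfl
  rw [hpow, ← mulVec_mulVec, ← mulVec_mulVec, dotProduct_mulVec, star_eq_conjTranspose,
    conjTranspose_eq_transpose_of_trivial, ← mulVec_transpose]
  simp only [atomicMoment, dotProduct, mulVec_diagonal, Pi.pow_apply]
  exact sum_congr rfl fun i _ => by ring

lemma Matrix.IsHermitian.pow_mulVec_dotProduct_pow_mulVec {ι : Type*} [Fintype ι] [DecidableEq ι]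
    {A : Matrix ι ι ℝ} (hA : A.IsHermitian) (x : ι → ℝ) (p r : ℕ) :
    (A ^ p *ᵥ x) ⬝ᵥ (A ^ r *ᵥ x) = x ⬝ᵥ (A ^ (p + r) *ᵥ x) := by
  have hAp : (A ^ p)ᵀ = A ^ p := by
    rw [transpose_pow, ← conjTranspose_eq_transpose_of_trivial, hA]
  rw [← vecMul_transpose, hAp, ← dotProduct_mulVec, mulVec_mulVec, ← pow_add]

lemma Matrix.PosDef.exists_eq_transpose_mul_self {ι : Type*} [Fintype ι] [DecidableEq ι]
    {H : Matrix ι ι ℝ} (hH : H.PosDef) : ∃ B : Matrix ι ι ℝ, IsUnit B.det ∧ H = Bᵀ * B := by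
  obtain ⟨B, hB⟩ := CStarAlgebra.nonneg_iff_eq_star_mul_self.mp hH.posSemidef.nonneg
  rw [star_eq_conjTranspose, conjTranspose_eq_transpose_of_trivial] at hB
  refine ⟨B, isUnit_iff_ne_zero.mpr fun h => hH.det_pos.ne' ?_, hB⟩
  rw [hB, det_mul, h, mul_zero]

lemma eq_dotProduct_pow_mulVec_of_shift {ι : Type*} [Fintype ι] [DecidableEq ι] {A : Matrix ι ι ℝ}
    (hA : A.IsHermitian) {N : ℕ → ℝ} {n : ℕ} (v : ℕ → ι → ℝ)
    (hshift : ∀ p, p + 1 < n → A *ᵥ v p = v (p + 1))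
    (hN : ∀ p < n, v p ⬝ᵥ v p = N (p + p) ∧ v p ⬝ᵥ (A *ᵥ v p) = N (p + p + 1)) :
    ∀ j < 2 * n, N j = v 0 ⬝ᵥ (A ^ j *ᵥ v 0) := by
  have hpow : ∀ p < n, A ^ p *ᵥ v 0 = v p := by
    intro p hp
    induction p with
    | zero => rw [pow_zero, one_mulVec]
    | succ p ih => rw [pow_succ', ← mulVec_mulVec, ih (by omega), hshift p hp]
  intro j hj
  obtain ⟨q, rfl | rfl⟩ := Nat.even_or_odd' j
  · calc N (2 * q) = v q ⬝ᵥ v q := by rw [two_mul, (hN q (by omega)).1]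
      _ = _ := by rw [← hpow q (by omega), hA.pow_mulVec_dotProduct_pow_mulVec, two_mul]
  · calc N (2 * q + 1) = v q ⬝ᵥ (A *ᵥ v q) := by rw [two_mul, (hN q (by omega)).2]
      _ = _ := by
        rw [← hpow q (by omega), mulVec_mulVec, ← pow_succ', hA.pow_mulVec_dotProduct_pow_mulVec]
        ring_nf

lemma exists_atomicMoment_of_posDef {N : ℕ → ℝ} {n : ℕ} (hH : (hankel N n).PosDef) :
    ∃ y t : Fin n → ℝ, ∀ j < 2 * n, N j = atomicMoment (fun i => y i ^ 2) t j := by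
  obtain ⟨B, hBdet, hB⟩ := hH.exists_eq_transpose_mul_self
  -- multiplication by the variable, in a basis orthonormal for the inner product `hankel N n`
  set A := (B⁻¹)ᵀ * hankel (fun j => N (j + 1)) n * B⁻¹ with hAdef
  have hA : A.IsHermitian := by
    rw [IsHermitian, conjTranspose_eq_transpose_of_trivial]
    simp only [A, transpose_mul, transpose_transpose, hankel_transpose, mul_assoc]
  set e : ℕ → Fin n → ℝ := fun p i => if (i : ℕ) = p then 1 else 0
  have he : ∀ p (hp : p < n), e p = Pi.single ⟨p, hp⟩ 1 := fun p hp => by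
    ext i
    simp [e, Pi.single_apply, Fin.ext_iff]
  have hBinv : ∀ x, B⁻¹ *ᵥ (B *ᵥ x) = x := fun x => by
    rw [mulVec_mulVec, nonsing_inv_mul B hBdet, one_mulVec]
  have hBinvT : ∀ x y, x ⬝ᵥ ((B⁻¹)ᵀ *ᵥ y) = (B⁻¹ *ᵥ x) ⬝ᵥ y := fun x y => by
    rw [dotProduct_mulVec, vecMul_transpose]
  have hBB : ∀ x y, x ⬝ᵥ (hankel N n *ᵥ y) = (B *ᵥ x) ⬝ᵥ (B *ᵥ y) := fun x y => by
    rw [hB, ← mulVec_mulVec, dotProduct_mulVec, vecMul_transpose]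
  have hshift : ∀ p, p + 1 < n → A *ᵥ (B *ᵥ e p) = B *ᵥ e (p + 1) := by
    intro p hp
    have hS : (fun i : Fin n => N (i + p + 1)) = Bᵀ *ᵥ (B *ᵥ Pi.single ⟨p + 1, hp⟩ 1) := by
      rw [mulVec_mulVec, ← hB]
      exact (hankel_mulVec_single N hp).symm
    rw [hAdef, ← mulVec_mulVec, hBinv, ← mulVec_mulVec, he p (by omega), hankel_mulVec_single, hS,
      mulVec_mulVec, ← transpose_mul, mul_nonsing_inv B hBdet, transpose_one, one_mulVec, he]
  obtain ⟨y, hy⟩ := hA.exists_dotProduct_pow_mulVec_eq (B *ᵥ e 0)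
  refine ⟨y, hA.eigenvalues, fun j hj => ?_⟩
  refine (eq_dotProduct_pow_mulVec_of_shift hA (fun p => B *ᵥ e p) hshift
    (fun p hp => ⟨?_, ?_⟩) j hj).trans (hy j)
  · rw [← hBB, he p hp, single_dotProduct_hankel_mulVec_single]
  · rw [hAdef, ← mulVec_mulVec, ← mulVec_mulVec, hBinvT, hBinv, he p hp,
      single_dotProduct_hankel_mulVec_single]

lemma exists_atomicMoment_of_posDef_of_det_eq_zero {N : ℕ → ℝ} {n : ℕ}
    (hH : (hankel N n).PosDef) (hdet : (hankel N (n + 1)).det = 0) :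
    ∃ w u : Fin n → ℝ, (∀ i, 0 < w i) ∧ StrictMono u ∧ ∀ j ≤ 2 * n, N j = atomicMoment w u j := by
  obtain ⟨y, t, hyt⟩ := exists_atomicMoment_of_posDef hH
  obtain ⟨k, hk, w, u, hw, hu, hwu⟩ :=
    exists_strictMono_atomicMoment_eq (fun i => sq_nonneg (y i)) t
  rw [Fintype.card_fin] at hk
  have hlow : ∀ j < 2 * n, N j = atomicMoment w u j := fun j hj => (hyt j hj).trans (congrFun hwu j)
  obtain rfl : k = n := by
    refine hk.antisymm (not_lt.mp fun hlt => hH.det_pos.ne' ?_)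
    rw [hankel_congr fun j hj => hlow j (by omega)]
    exact det_hankel_atomicMoment_eq_zero w u (by simpa using hlt)
  refine ⟨w, u, hw, hu, fun j hj => hj.lt_or_eq.elim (hlow j) ?_⟩
  rintro rfl
  have := det_hankel_succ hlow
  rw [det_hankel_atomicMoment_eq_zero w u (by simp), hdet, zero_add, eq_comm, mul_eq_zero,
    sub_eq_zero] at this
  exact (this.resolve_right hH.det_pos.ne').symm

lemma exists_atomicMoment_iff {N : ℕ → ℝ} {n : ℕ} :
    (∃ w u : Fin n → ℝ, (∀ i, 0 < w i) ∧ StrictMono u ∧ ∀ j ≤ 2 * n, N j = atomicMoment w u j) ↔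
      (hankel N (n + 1)).det = 0 ∧ (hankel N n).PosDef := by
  refine ⟨fun ⟨w, u, hw, hu, h⟩ => ⟨?_, ?_⟩, fun ⟨hdet, hH⟩ =>
    exists_atomicMoment_of_posDef_of_det_eq_zero hH hdet⟩
  · rw [hankel_congr fun j hj => h j (by omega)]
    exact det_hankel_atomicMoment_eq_zero w u (by simp)
  · rw [hankel_congr fun j hj => h j (by omega)]
    exact posDef_hankel_atomicMoment hw hu.injective

end Realization

section Uniqueness

open Polynomial

lemma sum_mul_eval_eq_sum_coeff_mul_atomicMoment {ι : Type*} [Fintype ι] (w t : ι → ℝ)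
    {p : ℝ[X]} {J : ℕ} (hp : p.natDegree ≤ J) :
    ∑ i, w i * p.eval (t i) = ∑ j ∈ range (J + 1), p.coeff j * atomicMoment w t j := by
  simp only [eval_eq_sum_range' (Nat.lt_succ_of_le hp), atomicMoment, mul_sum]
  rw [sum_comm]
  exact sum_congr rfl fun j _ => sum_congr rfl fun i _ => by ring

lemma sum_mul_eval_eq_of_atomicMoment_eq {ι κ : Type*} [Fintype ι] [Fintype κ] {w t : ι → ℝ}
    {w' t' : κ → ℝ} {J : ℕ} (h : ∀ j ≤ J, atomicMoment w t j = atomicMoment w' t' j)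
    {p : ℝ[X]} (hp : p.natDegree ≤ J) :
    ∑ i, w i * p.eval (t i) = ∑ i, w' i * p.eval (t' i) := by
  rw [sum_mul_eval_eq_sum_coeff_mul_atomicMoment w t hp,
    sum_mul_eval_eq_sum_coeff_mul_atomicMoment w' t' hp]
  exact sum_congr rfl fun j hj => by rw [h j (Nat.lt_succ_iff.mp (mem_range.mp hj))]

lemma range_subset_of_atomicMoment_eq {n : ℕ} {w u w' u' : Fin n → ℝ} (hw' : ∀ i, 0 < w' i)
    (h : ∀ j ≤ 2 * n, atomicMoment w u j = atomicMoment w' u' j) :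
    Set.range u' ⊆ Set.range u := by
  rintro _ ⟨i, rfl⟩
  set q := Lagrange.nodal univ u
  have hdeg : (q ^ 2).natDegree ≤ 2 * n := by
    rw [natDegree_pow, Lagrange.natDegree_nodal, card_univ, Fintype.card_fin, mul_comm]
  have hq : ∀ l, q.eval (u l) = 0 := fun l => Lagrange.eval_nodal_at_node (mem_univ l)
  have hzero := sum_mul_eval_eq_of_atomicMoment_eq h hdeg
  simp only [eval_pow, hq, ne_eq, OfNat.ofNat_ne_zero, not_false_eq_true, zero_pow, mul_zero,
    sum_const_zero] at hzero
  have hi := (sum_eq_zero_iff_of_nonneg fun l _ => mul_nonneg (hw' l).le (sq_nonneg _)).mp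
    hzero.symm i (mem_univ i)
  rw [mul_eq_zero, or_iff_right (hw' i).ne', sq_eq_zero_iff, Lagrange.eval_nodal] at hi
  obtain ⟨l, -, hl⟩ := prod_eq_zero_iff.mp hi
  exact ⟨l, (sub_eq_zero.mp hl).symm⟩

lemma eq_of_atomicMoment_eq {n : ℕ} {w u w' u' : Fin n → ℝ} (hw : ∀ i, 0 < w i)
    (hw' : ∀ i, 0 < w' i) (hu : StrictMono u) (hu' : StrictMono u')
    (h : ∀ j ≤ 2 * n, atomicMoment w u j = atomicMoment w' u' j) : w = w' ∧ u = u' := by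
  obtain rfl : u = u' := (hu.range_inj hu').mp <|
    (range_subset_of_atomicMoment_eq hw fun j hj => (h j hj).symm).antisymm
      (range_subset_of_atomicMoment_eq hw' h)
  refine ⟨funext fun i => ?_, rfl⟩
  have hinj : Set.InjOn u (univ : Finset (Fin n)) := hu.injective.injOn
  have hdeg : (Lagrange.basis univ u i).natDegree ≤ 2 * n := by
    rw [Lagrange.natDegree_basis hinj (mem_univ i), card_univ, Fintype.card_fin]
    omega
  have hbasis : ∀ v : Fin n → ℝ, ∑ l, v l * (Lagrange.basis univ u i).eval (u l) = v i := by
    intro v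
    rw [sum_eq_single i (fun l _ hl => by rw [Lagrange.eval_basis_of_ne hl.symm (mem_univ l),
      mul_zero]) (by simp), Lagrange.eval_basis_self hinj (mem_univ i), mul_one]
  simpa only [hbasis] using sum_mul_eval_eq_of_atomicMoment_eq h hdeg

end Uniqueness

section Kernel

variable {K : ℝ → ℝ} (hK : ∀ j : ℕ, Integrable (fun ξ => |ξ| ^ j * K ξ))
include hK

lemma integrable_pow_mul (k : ℕ) : Integrable (fun ξ => ξ ^ k * K ξ) := by
  have hK0 : Integrable K := by simpa using hK 0
  refine (hK k).mono ((continuous_pow k).aestronglyMeasurable.mul hK0.aestronglyMeasurable) ?_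
  exact ae_of_all _ fun ξ => by simp

lemma integral_pow_mul_kernel_scaled {m : ℕ → ℝ} (hm : ∀ j, m j = ∫ ξ, ξ ^ j * K ξ)
    {σ : ℝ} (hσ : 0 < σ) (u : ℝ) (j : ℕ) :
    ∫ ξ, ξ ^ j * (σ⁻¹ * K ((ξ - u) / σ)) = binomialConv (fun k => σ ^ k * m k) (u ^ ·) j := by
  set g : ℝ → ℝ := fun t => (σ * t + u) ^ j * K t
  have hsubst : ∫ ξ, ξ ^ j * (σ⁻¹ * K ((ξ - u) / σ)) = ∫ t, g t := by
    calc ∫ ξ, ξ ^ j * (σ⁻¹ * K ((ξ - u) / σ)) = σ⁻¹ * ∫ ξ, g ((ξ - u) / σ) := by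
          rw [← integral_const_mul]
          congr 1 with ξ
          simp only [g]
          rw [mul_div_cancel₀ _ hσ.ne', sub_add_cancel]
          ring
      _ = ∫ t, g t := by
          rw [integral_sub_right_eq_self (fun ξ => g (ξ / σ)) u, Measure.integral_comp_div,
            abs_of_pos hσ, smul_eq_mul, inv_mul_cancel_left₀ hσ.ne']
  have hg : g = fun t =>
      ∑ k ∈ range (j + 1), (j.choose k * (σ ^ k * u ^ (j - k))) * (t ^ k * K t) := by
    funext t
    simp only [g, add_pow, sum_mul]
    exact sum_congr rfl fun k _ => by ring
  rw [hsubst, hg, integral_finsetSum _ fun k _ => (integrable_pow_mul hK k).const_mul _]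
  refine sum_congr rfl fun k _ => ?_
  rw [integral_const_mul, ← hm]
  ring

lemma sum_mul_integral_kernel_eq_iff_atomicMoment {ι : Type*} [Fintype ι] {m b : ℕ → ℝ}
    (hm : ∀ j, m j = ∫ ξ, ξ ^ j * K ξ) (hm0 : m 0 = 1) (hb0 : b 0 = 1)
    (hb : ∀ k, 1 ≤ k → b k = -∑ l ∈ Icc 1 k, m l / (l.factorial : ℝ) * b (k - l))
    {σ : ℝ} (hσ : 0 < σ) (w u : ι → ℝ) (M : ℕ → ℝ) (J : ℕ) :
    (∀ j ≤ J, ∑ i, w i * ∫ ξ, ξ ^ j * (σ⁻¹ * K ((ξ - u i) / σ)) = M j) ↔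
      ∀ j ≤ J, ∑ k ∈ range (j + 1), b k * σ ^ k * (j.descFactorial k : ℝ) * M (j - k) =
        atomicMoment w u j := by
  have hmix : ∀ j, ∑ i, w i * ∫ ξ, ξ ^ j * (σ⁻¹ * K ((ξ - u i) / σ)) =
      binomialConv (fun k => σ ^ k * m k) (atomicMoment w u) j := fun j => by
    simp only [integral_pow_mul_kernel_scaled hK hm hσ]
    exact sum_mul_binomialConv _ _ _ _ j
  have hstar : ∀ j, ∑ k ∈ range (j + 1), b k * σ ^ k * (j.descFactorial k : ℝ) * M (j - k) =
      binomialConv (fun k => k.factorial * b k * σ ^ k) M j := fun j =>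
    sum_congr rfl fun k _ => by
      rw [Nat.descFactorial_eq_factorial_mul_choose]
      push_cast
      ring
  simp only [hmix, hstar, eq_comm (b := M _)]
  exact binomialConv_eqOn_iff (binomialConv_factorial_mul_eq_single_zero hm0 hb0 hb σ) J

end Kernel

end

theorem eqmom_realizability_criterion_general
    (K : ℝ → ℝ)
    (hKint : ∀ j : ℕ, Integrable (fun ξ => |ξ| ^ j * K ξ))
    (m : ℕ → ℝ) (hm : ∀ j, m j = ∫ ξ, ξ ^ j * K ξ)
    (hm0 : m 0 = 1)
    (b : ℕ → ℝ) (hb0 : b 0 = 1)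
    (hb : ∀ k, 1 ≤ k → b k = -∑ l ∈ Finset.Icc 1 k, m l / (l.factorial : ℝ) * b (k - l))
    (Δ : ℕ → ℝ → ℝ → ℝ)
    (hΔ : ∀ j u σ, Δ j u σ = ∫ ξ, ξ ^ j * (σ⁻¹ * K ((ξ - u) / σ)))
    (n : ℕ) (M : ℕ → ℝ)
    (Mstar : ℝ → ℕ → ℝ)
    (hMstar : ∀ σ j, Mstar σ j =
      ∑ k ∈ Finset.range (j + 1), b k * σ ^ k * (j.descFactorial k : ℝ) * M (j - k))
    (P : ℝ → ℝ)
    (hP : ∀ σ, P σ = (Matrix.of fun i j : Fin (n + 1) => Mstar σ (i.1 + j.1)).det) :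
    (∃! W : (Fin n → ℝ) × (Fin n → ℝ) × ℝ,
        (∀ i, 0 < W.1 i) ∧ StrictMono W.2.1 ∧ 0 < W.2.2 ∧
        ∀ j ≤ 2 * n, ∑ i, W.1 i * Δ j (W.2.1 i) W.2.2 = M j) ↔
    (∃! σ₀ : ℝ, 0 < σ₀ ∧ P σ₀ = 0 ∧
        (Matrix.of fun i j : Fin n => Mstar σ₀ (i.1 + j.1)).PosDef) := by
  have hsolution : ∀ σ > 0, ∀ w u : Fin n → ℝ,
      (∀ j ≤ 2 * n, ∑ i, w i * Δ j (u i) σ = M j) ↔ ∀ j ≤ 2 * n, Mstar σ j = atomicMoment w u j :=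
    fun σ hσ w u => by
      simpa only [hΔ, hMstar] using
        sum_mul_integral_kernel_eq_iff_atomicMoment hKint hm hm0 hb0 hb hσ w u M (2 * n)
  have hrealizable : ∀ σ > 0, (∃ w u : Fin n → ℝ, (∀ i, 0 < w i) ∧ StrictMono u ∧
      ∀ j ≤ 2 * n, ∑ i, w i * Δ j (u i) σ = M j) ↔
        P σ = 0 ∧ (Matrix.of fun i j : Fin n => Mstar σ (i.1 + j.1)).PosDef := fun σ hσ => by
    simp only [hsolution σ hσ, hP]
    exact exists_atomicMoment_iff
  constructor
  · rintro ⟨⟨w, u, σ⟩, ⟨hw, hu, hσ, hW⟩, huniq⟩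
    refine ⟨σ, ⟨hσ, (hrealizable σ hσ).mp ⟨w, u, hw, hu, hW⟩⟩, fun σ' ⟨hσ', hH'⟩ => ?_⟩
    obtain ⟨w', u', hw', hu', hW'⟩ := (hrealizable σ' hσ').mpr hH'
    exact congrArg (·.2.2) (huniq (w', u', σ') ⟨hw', hu', hσ', hW'⟩)
  · rintro ⟨σ, ⟨hσ, hH⟩, huniq⟩
    obtain ⟨w, u, hw, hu, hW⟩ := (hrealizable σ hσ).mpr hH
    refine ⟨(w, u, σ), ⟨hw, hu, hσ, hW⟩, ?_⟩
    rintro ⟨w', u', σ'⟩ ⟨hw', hu', hσ', hW'⟩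
    obtain rfl : σ' = σ := huniq σ' ⟨hσ', (hrealizable σ' hσ').mp ⟨w', u', hw', hu', hW'⟩⟩
    obtain ⟨rfl, rfl⟩ := eq_of_atomicMoment_eq hw' hw hu' hu fun j hj =>
      ((hsolution σ' hσ' w' u').mp hW' j hj).symm.trans ((hsolution σ' hσ' w u).mp hW j hj)
    rfl

/-- For a normalized kernel `K`, `n ≥ 1` and given moments
`M = (M₀,…,M₂ₙ)`, with auxiliary moments `M*ⱼ(σ) = Σ_{k≤j} b_k σ^k (j!/(j−k)!) M_{j−k}`
and `Pₙ(σ;M) = det Hₙ(M*(σ))`, the following are equivalent: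
(i) there is a unique `W = (w,u,σ) ∈ Ω` (all `wᵢ > 0`, `u₁ < ⋯ < u_n`, `σ > 0`)
with `Σᵢ wᵢ Δⱼ(uᵢ,σ) = Mⱼ` for `j = 0,…,2n`;
(ii) there is a unique `σ₀ > 0` with `Pₙ(σ₀;M) = 0` and `H_{n−1}(M*(σ₀))`
positive definite. -/
theorem eqmom_realizability_criterion
    (K : ℝ → ℝ) (hKmeas : Measurable K) (hKnonneg : ∀ ξ, 0 ≤ K ξ)
    (hKint : ∀ j : ℕ, Integrable (fun ξ => |ξ| ^ j * K ξ))
    (m : ℕ → ℝ) (hm : ∀ j, m j = ∫ ξ, ξ ^ j * K ξ)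
    (hm0 : m 0 = 1) (hm1 : m 1 = 0) (hm2 : m 2 = 1)
    (b : ℕ → ℝ) (hb0 : b 0 = 1)
    (hb : ∀ k, 1 ≤ k → b k = -∑ l ∈ Finset.Icc 1 k, m l / (l.factorial : ℝ) * b (k - l))
    (Δ : ℕ → ℝ → ℝ → ℝ)
    (hΔ : ∀ j u σ, Δ j u σ = ∫ ξ, ξ ^ j * (σ⁻¹ * K ((ξ - u) / σ)))
    (n : ℕ) (hn : 1 ≤ n) (M : ℕ → ℝ)
    (Mstar : ℝ → ℕ → ℝ)
    (hMstar : ∀ σ j, Mstar σ j =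
      ∑ k ∈ Finset.range (j + 1), b k * σ ^ k * (j.descFactorial k : ℝ) * M (j - k))
    (P : ℝ → ℝ)
    (hP : ∀ σ, P σ = (Matrix.of fun i j : Fin (n + 1) => Mstar σ (i.1 + j.1)).det) :
    (∃! W : (Fin n → ℝ) × (Fin n → ℝ) × ℝ,
        (∀ i, 0 < W.1 i) ∧ StrictMono W.2.1 ∧ 0 < W.2.2 ∧
        ∀ j ≤ 2 * n, ∑ i, W.1 i * Δ j (W.2.1 i) W.2.2 = M j) ↔
    (∃! σ₀ : ℝ, 0 < σ₀ ∧ P σ₀ = 0 ∧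
        (Matrix.of fun i j : Fin n => Mstar σ₀ (i.1 + j.1)).PosDef) :=
  eqmom_realizability_criterion_general K hKint m hm hm0 b hb0 hb Δ hΔ n M Mstar hMstar P hP
end

section
/- Let K be a normalized kernel with moments m_j and let n = 2. The EQMOM moment map 𝓜 : ℝ⁵ → ℝ⁵, 𝓜(W)_j = w₁Δⱼ(u₁,σ) + w₂Δⱼ(u₂,σ) for j = 0,…,4, where W = (w₁,u₁,w₂,u₂,σ), is injective on the set Ω = {w₁ > 0, w₂ > 0, u₁ < u₂, σ > 0} if and only if the kernel moments satisfy m₄ ≥ 3 + (9/8)·m₃². -/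
/-!
Write `p k = w₁ u₁ ^ k + w₂ u₂ ^ k`. Expanding `(u + σ t) ^ j` shows that the moments of the
mixture are binomial combinations of the `p k` and the kernel moments. After rescaling to mass `1`
and translating to mean `0`, the first four moments `(1, 0, A, B)` fix `p 2 = A - σ ^ 2` and
`p 3 = B - m₃ σ ^ 3`, and the vanishing `3 × 3` Hankel determinant of a two-atom measure,
`p 2 * p 4 = p 3 ^ 2 + p 2 ^ 3`, makes the fourth moment a function `φ(σ)` of the width alone:
`φ(σ) = (B - m₃ σ³)² / (A - σ²) + (A - σ²)² + 6 σ² (A - σ²) + m₄ σ⁴`, with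
`φ'(σ) = 2σ ((q - 3 m₃ σ / 2)² + 4 (A - σ²) + 2 σ² (m₄ - 3 - 9 m₃² / 8))` where
`q = (B - m₃ σ³) / (A - σ²)`. If `m₄ ≥ 3 + 9 m₃² / 8` then `φ` is strictly increasing on
`(0, √A)`, so the moments determine `σ`, and then the two nodes and weights. Otherwise, choosing
`B` so that the square vanishes at some `σ` close to `√A = 1` makes `φ'` change sign; a continuous
`φ` is then not injective on `(0, 1)`, and two parameter vectors with different widths share all
five moments.
-/

open MeasureTheory Finset

theorem integral_pow_mul_rescaled_eq_sum {K : ℝ → ℝ}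
    (hK : ∀ k : ℕ, Integrable (fun ξ => ξ ^ k * K ξ)) (j : ℕ) (u : ℝ) {σ : ℝ} (hσ : 0 < σ) :
    ∫ ξ, ξ ^ j * (σ⁻¹ * K ((ξ - u) / σ)) =
      ∑ k ∈ range (j + 1), (j.choose k : ℝ) * u ^ k * σ ^ (j - k) * ∫ ξ, ξ ^ (j - k) * K ξ := by
  set g : ℝ → ℝ := fun t => (u + σ * t) ^ j * K t
  have hg : ∀ ξ, ξ ^ j * (σ⁻¹ * K ((ξ - u) / σ)) = σ⁻¹ * g ((ξ - u) / σ) := fun ξ => by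
    simp only [g]; field_simp; ring_nf
  have hsub : ∫ ξ, g ((ξ - u) / σ) = σ * ∫ t, g t := by
    rw [integral_sub_right_eq_self (fun x => g (x / σ)) u, Measure.integral_comp_div,
      abs_of_pos hσ, smul_eq_mul]
  have hexp : g = fun t =>
      ∑ k ∈ range (j + 1), (j.choose k * u ^ k * σ ^ (j - k) : ℝ) * (t ^ (j - k) * K t) := by
    ext t
    simp only [g, add_pow, sum_mul]
    refine sum_congr rfl fun k _ => by ring
  simp_rw [hg]
  rw [integral_const_mul, hsub, inv_mul_cancel_left₀ hσ.ne', hexp,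
    integral_finsetSum _ fun k _ => (hK (j - k)).const_mul _]
  simp_rw [integral_const_mul]

def twoNodePowerSum (w₁ u₁ w₂ u₂ : ℝ) (k : ℕ) : ℝ := w₁ * u₁ ^ k + w₂ * u₂ ^ k

section PowerSum
variable (w₁ u₁ w₂ u₂ : ℝ)
local notation "S" => twoNodePowerSum w₁ u₁ w₂ u₂

theorem twoNodePowerSum_det : S 0 * S 2 - S 1 ^ 2 = w₁ * w₂ * (u₂ - u₁) ^ 2 := by
  simp only [twoNodePowerSum]; ring

theorem twoNodePowerSum_det_mul_add :
    w₁ * w₂ * (u₂ - u₁) ^ 2 * (u₁ + u₂) = S 0 * S 3 - S 1 * S 2 := by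
  simp only [twoNodePowerSum]; ring

theorem twoNodePowerSum_det_mul_mul :
    w₁ * w₂ * (u₂ - u₁) ^ 2 * (u₁ * u₂) = S 1 * S 3 - S 2 ^ 2 := by
  simp only [twoNodePowerSum]; ring

theorem twoNodePowerSum_hankel :
    (S 0 * S 2 - S 1 ^ 2) * S 4 = S 0 * S 3 ^ 2 - 2 * S 1 * S 2 * S 3 + S 2 ^ 3 := by
  simp only [twoNodePowerSum]; ring

end PowerSum

theorem eq_of_twoNodePowerSum_eq {w₁ u₁ w₂ u₂ v₁ x₁ v₂ x₂ : ℝ} (hw₁ : w₁ ≠ 0) (hw₂ : w₂ ≠ 0)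
    (hu : u₁ < u₂) (hx : x₁ ≤ x₂)
    (h : ∀ k < 4, twoNodePowerSum w₁ u₁ w₂ u₂ k = twoNodePowerSum v₁ x₁ v₂ x₂ k) :
    w₁ = v₁ ∧ u₁ = x₁ ∧ w₂ = v₂ ∧ u₂ = x₂ := by
  have hH : w₁ * w₂ * (u₂ - u₁) ^ 2 ≠ 0 := by
    have := sub_ne_zero.2 hu.ne'
    positivity
  have hdet : w₁ * w₂ * (u₂ - u₁) ^ 2 = v₁ * v₂ * (x₂ - x₁) ^ 2 := by
    rw [← twoNodePowerSum_det, ← twoNodePowerSum_det, h 0 (by norm_num), h 1 (by norm_num),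
      h 2 (by norm_num)]
  have hsum : u₁ + u₂ = x₁ + x₂ := mul_left_cancel₀ hH <| by
    rw [twoNodePowerSum_det_mul_add, hdet, twoNodePowerSum_det_mul_add, h 0 (by norm_num),
      h 1 (by norm_num), h 2 (by norm_num), h 3 (by norm_num)]
  have hprod : u₁ * u₂ = x₁ * x₂ := mul_left_cancel₀ hH <| by
    rw [twoNodePowerSum_det_mul_mul, hdet, twoNodePowerSum_det_mul_mul, h 1 (by norm_num),
      h 2 (by norm_num), h 3 (by norm_num)]
  have hgap : u₂ - u₁ = x₂ - x₁ :=
    (pow_left_inj₀ (sub_nonneg.2 hu.le) (sub_nonneg.2 hx) two_ne_zero).1 <| by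
      linear_combination (u₁ + u₂ + x₁ + x₂) * hsum - 4 * hprod
  obtain rfl : u₁ = x₁ := by linarith
  obtain rfl : u₂ = x₂ := by linarith
  have h0 := h 0 (by norm_num)
  have h1 := h 1 (by norm_num)
  simp only [twoNodePowerSum, pow_zero, pow_one, mul_one] at h0 h1
  have hw : (w₁ - v₁) * (u₁ - u₂) = 0 := by linear_combination h1 - u₂ * h0
  obtain rfl : w₁ = v₁ := sub_eq_zero.1 ((mul_eq_zero.1 hw).resolve_right (sub_ne_zero.2 hu.ne))
  exact ⟨rfl, rfl, by linarith, rfl⟩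

theorem exists_twoNodePowerSum_eq {e : ℝ} (he : 0 < e) (q : ℝ) :
    ∃ w₁ u₁ w₂ u₂ : ℝ, 0 < w₁ ∧ 0 < w₂ ∧ u₁ < u₂ ∧
      twoNodePowerSum w₁ u₁ w₂ u₂ 0 = 1 ∧ twoNodePowerSum w₁ u₁ w₂ u₂ 1 = 0 ∧
      twoNodePowerSum w₁ u₁ w₂ u₂ 2 = e ∧ twoNodePowerSum w₁ u₁ w₂ u₂ 3 = q := by
  obtain ⟨u₁, u₂, hu₁, hu₂, rfl, rfl⟩ :
      ∃ u₁ u₂ : ℝ, u₁ < 0 ∧ 0 < u₂ ∧ q = e * (u₁ + u₂) ∧ e = -(u₁ * u₂) := by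
    have hδ : √((q / e) ^ 2 + 4 * e) ^ 2 = (q / e) ^ 2 + 4 * e := Real.sq_sqrt (by positivity)
    obtain ⟨hδ₁, hδ₂⟩ := abs_lt.1 <| abs_lt_of_sq_lt_sq (by linarith) (Real.sqrt_nonneg _)
    exact ⟨(q / e - √((q / e) ^ 2 + 4 * e)) / 2, (q / e + √((q / e) ^ 2 + 4 * e)) / 2,
      by linarith, by linarith, by field_simp; ring, by linear_combination -hδ / 4⟩
  have hgap : u₂ - u₁ ≠ 0 := by linarith
  refine ⟨u₂ / (u₂ - u₁), u₁, -u₁ / (u₂ - u₁), u₂, div_pos hu₂ (by linarith),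
    div_pos (by linarith) (by linarith), by linarith, ?_, ?_, ?_, ?_⟩ <;>
    simp only [twoNodePowerSum] <;> field_simp <;> ring

/-- The fourth moment of a two-node mixture of width `s`, mass `1`, mean `0` and second and third
moments `A` and `B`, for a normalized kernel with `m₃ = c` and `m₄ = d`. -/
noncomputable def fourthMomentCurve (c d A B s : ℝ) : ℝ :=
  (B - c * s ^ 3) ^ 2 / (A - s ^ 2) + (A - s ^ 2) ^ 2 + 6 * s ^ 2 * (A - s ^ 2) + d * s ^ 4

section FourthMomentCurve
variable {c d A B : ℝ}

theorem hasDerivAt_fourthMomentCurve {s : ℝ} (hs : A - s ^ 2 ≠ 0) :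
    HasDerivAt (fourthMomentCurve c d A B)
      (2 * s * (((B - c * s ^ 3) / (A - s ^ 2) - 3 / 2 * c * s) ^ 2 + 4 * (A - s ^ 2)
        + 2 * s ^ 2 * (d - 3 - 9 / 8 * c ^ 2))) s := by
  have h2 : HasDerivAt (fun t : ℝ => A - t ^ 2) (-(2 * s)) s := by
    simpa using (hasDerivAt_pow 2 s).const_sub A
  have h3 : HasDerivAt (fun t : ℝ => B - c * t ^ 3) (-(c * (3 * s ^ 2))) s := by
    simpa using ((hasDerivAt_pow 3 s).const_mul c).const_sub B
  have h4 : HasDerivAt (fun t : ℝ => t ^ 4) (4 * s ^ 3) s := by simpa using hasDerivAt_pow 4 s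
  have := ((((h3.pow 2).div h2 hs).add (h2.pow 2)).add
    (((hasDerivAt_pow 2 s).const_mul 6).mul h2)).add (h4.const_mul d)
  refine this.congr_deriv ?_
  simp only [Pi.pow_apply]
  field_simp
  ring

theorem continuousOn_fourthMomentCurve :
    ContinuousOn (fourthMomentCurve c d A B) {s | A - s ^ 2 ≠ 0} :=
  fun _ hs => (hasDerivAt_fourthMomentCurve hs).continuousAt.continuousWithinAt

theorem strictMonoOn_fourthMomentCurve (hcd : 3 + 9 / 8 * c ^ 2 ≤ d) :
    StrictMonoOn (fourthMomentCurve c d A B) (Set.Ioo 0 √A) := by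
  have hpos : ∀ s ∈ Set.Ioo 0 √A, 0 < A - s ^ 2 := fun s hs => by
    have := (Real.lt_sqrt hs.1.le).1 hs.2; linarith
  refine strictMonoOn_of_deriv_pos (convex_Ioo 0 √A)
    (continuousOn_fourthMomentCurve.mono fun s hs => (hpos s hs).ne') fun s hs => ?_
  rw [interior_Ioo] at hs
  rw [(hasDerivAt_fourthMomentCurve (hpos s hs).ne').deriv]
  have hX : 0 ≤ 2 * s ^ 2 * (d - 3 - 9 / 8 * c ^ 2) := by
    have : 0 ≤ d - 3 - 9 / 8 * c ^ 2 := by linarith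
    positivity
  have hq := sq_nonneg ((B - c * s ^ 3) / (A - s ^ 2) - 3 / 2 * c * s)
  exact mul_pos (by linarith [hs.1]) (by linarith [hpos s hs])

theorem not_injOn_fourthMomentCurve (hcd : d < 3 + 9 / 8 * c ^ 2) :
    ∃ B, ¬ Set.InjOn (fourthMomentCurve c d 1 B) (Set.Ioo 0 1) := by
  obtain ⟨ε, hε, rfl⟩ : ∃ ε > 0, d = 3 + 9 / 8 * c ^ 2 - ε :=
    ⟨3 + 9 / 8 * c ^ 2 - d, by linarith, by ring⟩
  -- `φ'(s) = 2 s (q(s) ^ 2 + 4 - (4 + 2 ε) s ^ 2)`: `B` is chosen with `q(s₀) = 0` for some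
  -- `s₀ > r`, so `φ'(s₀) < 0`, while `φ'(s₁) > 0` for `s₁ < r`
  set r := √(4 / (4 + 2 * ε))
  have hr0 : 0 < r := Real.sqrt_pos.2 (by positivity)
  have hr : r ^ 2 * (4 + 2 * ε) = 4 := by
    rw [Real.sq_sqrt (by positivity)]; field_simp
  have hr1 : r < 1 := by nlinarith [mul_pos (mul_pos hr0 hr0) hε]
  obtain ⟨s₀, hrs₀, hs₀1⟩ := exists_between hr1
  obtain ⟨s₁, hs₁0, hs₁r⟩ := exists_between hr0
  have hs₀ : s₀ ∈ Set.Ioo 0 1 := ⟨hr0.trans hrs₀, hs₀1⟩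
  have hs₁ : s₁ ∈ Set.Ioo 0 1 := ⟨hs₁0, hs₁r.trans hr1⟩
  have hIoo : ∀ s ∈ Set.Ioo (0 : ℝ) 1, 1 - s ^ 2 ≠ 0 := fun s hs => by nlinarith [hs.1, hs.2]
  set B := c * s₀ ^ 3 + 3 / 2 * c * s₀ * (1 - s₀ ^ 2)
  refine ⟨B, fun hinj => ?_⟩
  have hderiv := fun s (hs : s ∈ Set.Ioo (0 : ℝ) 1) =>
    (hasDerivAt_fourthMomentCurve (c := c) (d := 3 + 9 / 8 * c ^ 2 - ε) (B := B)
      (hIoo s hs)).hasDerivWithinAt (s := Set.Ioo 0 1)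
  rcases (continuousOn_fourthMomentCurve.mono hIoo).strictMonoOn_of_injOn_Ioo one_pos hinj with
    hmono | hanti
  · have h := (hderiv s₀ hs₀).nonneg_of_monotoneOn (isOpen_Ioo.preperfect s₀ hs₀) hmono.monotoneOn
    have hq : (B - c * s₀ ^ 3) / (1 - s₀ ^ 2) - 3 / 2 * c * s₀ = 0 := by
      field_simp [hIoo s₀ hs₀]; ring
    have hsq : r ^ 2 * (4 + 2 * ε) < s₀ ^ 2 * (4 + 2 * ε) := by gcongr
    rw [hq] at h
    exact h.not_gt (mul_neg_of_pos_of_neg (by linarith) (by linarith))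
  · have h := (hderiv s₁ hs₁).nonpos_of_antitoneOn (isOpen_Ioo.preperfect s₁ hs₁) hanti.antitoneOn
    have hsq : s₁ ^ 2 * (4 + 2 * ε) < r ^ 2 * (4 + 2 * ε) := by gcongr
    have := sq_nonneg ((B - c * s₁ ^ 3) / (1 - s₁ ^ 2) - 3 / 2 * c * s₁)
    exact h.not_gt (mul_pos (by linarith) (by linarith))
end FourthMomentCurve

/-- The moments of order `≤ 4` of `ξ ↦ ∑ᵢ wᵢ σ⁻¹ K ((ξ - uᵢ) / σ)` for `W = (w₁, u₁, w₂, u₂, σ)`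
and a normalized kernel with `m₃ = c` and `m₄ = d`. -/
def twoNodeMoments (c d : ℝ) (W : ℝ × ℝ × ℝ × ℝ × ℝ) : Fin 5 → ℝ :=
  let p := twoNodePowerSum W.1 W.2.1 W.2.2.1 W.2.2.2.1
  let σ := W.2.2.2.2
  ![p 0, p 1, p 2 + σ ^ 2 * p 0, p 3 + 3 * σ ^ 2 * p 1 + c * σ ^ 3 * p 0,
    p 4 + 6 * σ ^ 2 * p 2 + 4 * c * σ ^ 3 * p 1 + d * σ ^ 4 * p 0]

def translateMoments (t : ℝ) (M : Fin 5 → ℝ) : Fin 5 → ℝ :=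
  ![M 0, M 1 + t * M 0, M 2 + 2 * t * M 1 + t ^ 2 * M 0,
    M 3 + 3 * t * M 2 + 3 * t ^ 2 * M 1 + t ^ 3 * M 0,
    M 4 + 4 * t * M 3 + 6 * t ^ 2 * M 2 + 4 * t ^ 3 * M 1 + t ^ 4 * M 0]

def eqmomDomain : Set (ℝ × ℝ × ℝ × ℝ × ℝ) :=
  {W | 0 < W.1 ∧ 0 < W.2.2.1 ∧ W.2.1 < W.2.2.2.1 ∧ 0 < W.2.2.2.2}

section TwoNodeMoments
variable {c d : ℝ}

theorem twoNodeMoments_affine (a t w₁ u₁ w₂ u₂ σ : ℝ) :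
    twoNodeMoments c d (a * w₁, u₁ + t, a * w₂, u₂ + t, σ) =
      a • translateMoments t (twoNodeMoments c d (w₁, u₁, w₂, u₂, σ)) := by
  ext j
  fin_cases j <;>
    simp only [twoNodeMoments, twoNodePowerSum, translateMoments, pow_zero, pow_one, mul_one,
      Fin.zero_eta, Fin.mk_one, Fin.reduceFinMk, Fin.isValue, Matrix.cons_val_zero,
      Matrix.cons_val_one, Matrix.cons_val, Pi.smul_apply, smul_eq_mul] <;>
    ring

theorem twoNodeMoments_of_normalized {w₁ u₁ w₂ u₂ σ : ℝ} {M : Fin 5 → ℝ} (hw₁ : 0 < w₁)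
    (hw₂ : 0 < w₂) (hu : u₁ ≠ u₂) (h0 : twoNodePowerSum w₁ u₁ w₂ u₂ 0 = 1)
    (h1 : twoNodePowerSum w₁ u₁ w₂ u₂ 1 = 0) (hM : twoNodeMoments c d (w₁, u₁, w₂, u₂, σ) = M) :
    σ ^ 2 < M 2 ∧ M 4 = fourthMomentCurve c d (M 2) (M 3) σ := by
  subst hM
  have hp2 : twoNodePowerSum w₁ u₁ w₂ u₂ 2 = w₁ * w₂ * (u₂ - u₁) ^ 2 := by
    simpa [h0, h1] using twoNodePowerSum_det w₁ u₁ w₂ u₂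
  have hp2pos : 0 < twoNodePowerSum w₁ u₁ w₂ u₂ 2 := by
    have := sub_ne_zero.2 hu.symm
    rw [hp2]; positivity
  have hankel := twoNodePowerSum_hankel w₁ u₁ w₂ u₂
  rw [h0, h1] at hankel
  have hM2 : twoNodeMoments c d (w₁, u₁, w₂, u₂, σ) 2 - σ ^ 2 =
      twoNodePowerSum w₁ u₁ w₂ u₂ 2 := by
    simp [twoNodeMoments, h0]
  have hM3 : twoNodeMoments c d (w₁, u₁, w₂, u₂, σ) 3 - c * σ ^ 3 =
      twoNodePowerSum w₁ u₁ w₂ u₂ 3 := by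
    simp [twoNodeMoments, h0, h1]
  have hM4 : twoNodeMoments c d (w₁, u₁, w₂, u₂, σ) 4 = twoNodePowerSum w₁ u₁ w₂ u₂ 4 +
      6 * σ ^ 2 * twoNodePowerSum w₁ u₁ w₂ u₂ 2 + d * σ ^ 4 := by
    simp [twoNodeMoments, h0, h1]
  refine ⟨by linarith, ?_⟩
  rw [fourthMomentCurve, hM2, hM3, hM4]
  field_simp
  linear_combination hankel

theorem twoNodePowerSum_eq_of_twoNodeMoments_eq {w₁ u₁ w₂ u₂ v₁ x₁ v₂ x₂ σ : ℝ}
    (h : twoNodeMoments c d (w₁, u₁, w₂, u₂, σ) = twoNodeMoments c d (v₁, x₁, v₂, x₂, σ)) :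
    ∀ k < 4, twoNodePowerSum w₁ u₁ w₂ u₂ k = twoNodePowerSum v₁ x₁ v₂ x₂ k := by
  have h0 := congrFun h 0
  have h1 := congrFun h 1
  have h2 := congrFun h 2
  have h3 := congrFun h 3
  simp only [twoNodeMoments, Fin.isValue, Matrix.cons_val_zero, Matrix.cons_val_one,
    Matrix.cons_val] at h0 h1 h2 h3
  intro k hk
  interval_cases k
  · exact h0
  · exact h1
  · linear_combination h2 - σ ^ 2 * h0
  · linear_combination h3 - 3 * σ ^ 2 * h1 - c * σ ^ 3 * h0

theorem width_eq_of_twoNodeMoments_eq (hcd : 3 + 9 / 8 * c ^ 2 ≤ d) {W V : ℝ × ℝ × ℝ × ℝ × ℝ}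
    (hW : W ∈ eqmomDomain) (hV : V ∈ eqmomDomain)
    (h : twoNodeMoments c d W = twoNodeMoments c d V) :
    W.2.2.2.2 = V.2.2.2.2 := by
  obtain ⟨w₁, u₁, w₂, u₂, σ⟩ := W
  obtain ⟨v₁, x₁, v₂, x₂, τ⟩ := V
  obtain ⟨hw₁, hw₂, hu, hσ⟩ : 0 < w₁ ∧ 0 < w₂ ∧ u₁ < u₂ ∧ 0 < σ := hW
  obtain ⟨hv₁, hv₂, hx, hτ⟩ : 0 < v₁ ∧ 0 < v₂ ∧ x₁ < x₂ ∧ 0 < τ := hV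
  have h0 := congrFun h 0
  have h1 := congrFun h 1
  simp only [twoNodeMoments, twoNodePowerSum, pow_zero, mul_one, pow_one, Fin.isValue,
    Matrix.cons_val_zero, Matrix.cons_val_one] at h0 h1
  -- rescale to mass `1` and translate to mean `0`; this is the same affine map for `W` and `V`
  obtain ⟨a, ha⟩ : ∃ a, w₁ + w₂ = a := ⟨_, rfl⟩
  have ha0 : a ≠ 0 := by rw [← ha]; positivity
  obtain ⟨μ, hμ⟩ : ∃ μ, w₁ * u₁ + w₂ * u₂ = μ * a := ⟨(w₁ * u₁ + w₂ * u₂) / a, by field_simp⟩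
  have hnormalize : ∀ w₁ u₁ w₂ u₂ : ℝ, w₁ + w₂ = a → w₁ * u₁ + w₂ * u₂ = μ * a →
      twoNodePowerSum (a⁻¹ * w₁) (u₁ + -μ) (a⁻¹ * w₂) (u₂ + -μ) 0 = 1 ∧
      twoNodePowerSum (a⁻¹ * w₁) (u₁ + -μ) (a⁻¹ * w₂) (u₂ + -μ) 1 = 0 := by
    intro w₁ u₁ w₂ u₂ h0 h1
    simp only [twoNodePowerSum]
    constructor
    · field_simp; linear_combination h0
    · field_simp; linear_combination h1 - μ * h0
  obtain ⟨hW0, hW1⟩ := hnormalize w₁ u₁ w₂ u₂ ha hμ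
  obtain ⟨hV0, hV1⟩ := hnormalize v₁ x₁ v₂ x₂ (h0 ▸ ha) (h1 ▸ hμ)
  have h' : twoNodeMoments c d (a⁻¹ * w₁, u₁ + -μ, a⁻¹ * w₂, u₂ + -μ, σ) =
      twoNodeMoments c d (a⁻¹ * v₁, x₁ + -μ, a⁻¹ * v₂, x₂ + -μ, τ) := by
    rw [twoNodeMoments_affine, twoNodeMoments_affine, h]
  have hapos : 0 < a⁻¹ := by rw [← ha]; positivity
  obtain ⟨hσM, hσ4⟩ := twoNodeMoments_of_normalized (mul_pos hapos hw₁) (mul_pos hapos hw₂)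
    (by simpa using hu.ne) hW0 hW1 rfl
  obtain ⟨hτM, hτ4⟩ := twoNodeMoments_of_normalized (mul_pos hapos hv₁) (mul_pos hapos hv₂)
    (by simpa using hx.ne) hV0 hV1 h'.symm
  exact (strictMonoOn_fourthMomentCurve hcd).injOn ⟨hσ, (Real.lt_sqrt hσ.le).2 hσM⟩
    ⟨hτ, (Real.lt_sqrt hτ.le).2 hτM⟩ (hσ4.symm.trans hτ4)

theorem exists_twoNodeMoments_eq (B : ℝ) {s : ℝ} (hs : s ∈ Set.Ioo 0 1) :
    ∃ W ∈ eqmomDomain, W.2.2.2.2 = s ∧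
      twoNodeMoments c d W = ![1, 0, 1, B, fourthMomentCurve c d 1 B s] := by
  obtain ⟨w₁, u₁, w₂, u₂, hw₁, hw₂, hu, h0, h1, h2, h3⟩ :=
    exists_twoNodePowerSum_eq (e := 1 - s ^ 2) (by nlinarith [hs.1, hs.2]) (B - c * s ^ 3)
  obtain ⟨-, h4⟩ := twoNodeMoments_of_normalized (c := c) (d := d) (σ := s) hw₁ hw₂ hu.ne h0 h1 rfl
  have hM2 : twoNodeMoments c d (w₁, u₁, w₂, u₂, s) 2 = 1 := by
    simp [twoNodeMoments, h0, h2]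
  have hM3 : twoNodeMoments c d (w₁, u₁, w₂, u₂, s) 3 = B := by
    simp [twoNodeMoments, h0, h1, h3]
  rw [hM2, hM3] at h4
  refine ⟨(w₁, u₁, w₂, u₂, s), ⟨hw₁, hw₂, hu, hs.1⟩, rfl, ?_⟩
  ext j
  fin_cases j
  · simp [twoNodeMoments, h0]
  · simp [twoNodeMoments, h1]
  · exact hM2
  · exact hM3
  · exact h4

theorem injOn_fourthMomentCurve_of_injOn (h : Set.InjOn (twoNodeMoments c d) eqmomDomain)
    (B : ℝ) : Set.InjOn (fourthMomentCurve c d 1 B) (Set.Ioo 0 1) := by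
  intro s hs t ht hst
  obtain ⟨W, hW, rfl, hWM⟩ := exists_twoNodeMoments_eq (c := c) (d := d) B hs
  obtain ⟨V, hV, rfl, hVM⟩ := exists_twoNodeMoments_eq (c := c) (d := d) B ht
  rw [h hW hV (by rw [hWM, hVM, hst])]

theorem injOn_twoNodeMoments_iff :
    Set.InjOn (twoNodeMoments c d) eqmomDomain ↔ 3 + 9 / 8 * c ^ 2 ≤ d := by
  refine ⟨fun hinj => ?_, fun hcd => ?_⟩
  · by_contra! hcd
    obtain ⟨B, hB⟩ := not_injOn_fourthMomentCurve hcd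
    exact hB (injOn_fourthMomentCurve_of_injOn hinj B)
  · rintro ⟨w₁, u₁, w₂, u₂, σ⟩ hW ⟨v₁, x₁, v₂, x₂, τ⟩ hV h
    obtain rfl : σ = τ := width_eq_of_twoNodeMoments_eq hcd hW hV h
    obtain ⟨rfl, rfl, rfl, rfl⟩ := eq_of_twoNodePowerSum_eq hW.1.ne' hW.2.1.ne' hW.2.2.1
      hV.2.2.1.le (twoNodePowerSum_eq_of_twoNodeMoments_eq h)
    rfl

end TwoNodeMoments

theorem two_node_eqmom_injective_iff_general
    (K : ℝ → ℝ) (hKint : ∀ j : ℕ, Integrable (fun ξ => |ξ| ^ j * K ξ))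
    (m : ℕ → ℝ) (hm : ∀ j, m j = ∫ ξ, ξ ^ j * K ξ)
    (hm0 : m 0 = 1) (hm1 : m 1 = 0) (hm2 : m 2 = 1)
    (Δ : ℕ → ℝ → ℝ → ℝ)
    (hΔ : ∀ j u σ, Δ j u σ = ∫ ξ, ξ ^ j * (σ⁻¹ * K ((ξ - u) / σ))) :
    Set.InjOn
      (fun W : ℝ × ℝ × ℝ × ℝ × ℝ => fun j : Fin 5 =>
        W.1 * Δ (j : ℕ) W.2.1 W.2.2.2.2 + W.2.2.1 * Δ (j : ℕ) W.2.2.2.1 W.2.2.2.2)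
      {W : ℝ × ℝ × ℝ × ℝ × ℝ |
        0 < W.1 ∧ 0 < W.2.2.1 ∧ W.2.1 < W.2.2.2.1 ∧ 0 < W.2.2.2.2} ↔
    3 + 9 / 8 * (m 3) ^ 2 ≤ m 4 := by
  have hK : ∀ k : ℕ, Integrable (fun ξ => ξ ^ k * K ξ) := fun k =>
    (hKint k).mono ((continuous_pow k).aestronglyMeasurable.mul
      (by simpa using (hKint 0).aestronglyMeasurable))
      (ae_of_all _ fun ξ => by simp)
  have hΔm : ∀ j u σ, 0 < σ →
      Δ j u σ = ∑ k ∈ range (j + 1), (j.choose k : ℝ) * u ^ k * σ ^ (j - k) * m (j - k) :=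
    fun j u σ hσ => by simp only [hΔ, integral_pow_mul_rescaled_eq_sum hK j u hσ, hm]
  refine Iff.trans (Set.EqOn.injOn_iff ?_) injOn_twoNodeMoments_iff
  rintro ⟨w₁, u₁, w₂, u₂, σ⟩ ⟨-, -, -, hσ⟩
  funext j
  fin_cases j <;>
    simp only [hΔm _ _ _ hσ, sum_range_succ, range_one, sum_singleton, Nat.choose, Nat.cast_one,
      Nat.cast_ofNat, Nat.reduceAdd, Nat.reduceSub, Nat.add_one_sub_one, tsub_zero, tsub_self,
      zero_tsub, pow_zero, pow_one, mul_one, one_mul, mul_zero, add_zero, zero_add, hm0, hm1, hm2,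
      twoNodeMoments, twoNodePowerSum, Fin.zero_eta, Fin.mk_one, Fin.reduceFinMk, Fin.isValue,
      Matrix.cons_val_zero, Matrix.cons_val_one, Matrix.cons_val] <;>
    ring

/-- For a normalized kernel `K` with moments `m_j`, the two-node
EQMOM moment map `𝓜(w₁,u₁,w₂,u₂,σ)_j = w₁Δⱼ(u₁,σ) + w₂Δⱼ(u₂,σ)`, `j = 0,…,4`, is
injective on `Ω = {w₁ > 0, w₂ > 0, u₁ < u₂, σ > 0}` iff `m₄ ≥ 3 + (9/8)m₃²`. -/
theorem two_node_eqmom_injective_iff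
    (K : ℝ → ℝ) (hKmeas : Measurable K) (hKnonneg : ∀ ξ, 0 ≤ K ξ)
    (hKint : ∀ j : ℕ, Integrable (fun ξ => |ξ| ^ j * K ξ))
    (m : ℕ → ℝ) (hm : ∀ j, m j = ∫ ξ, ξ ^ j * K ξ)
    (hm0 : m 0 = 1) (hm1 : m 1 = 0) (hm2 : m 2 = 1)
    (Δ : ℕ → ℝ → ℝ → ℝ)
    (hΔ : ∀ j u σ, Δ j u σ = ∫ ξ, ξ ^ j * (σ⁻¹ * K ((ξ - u) / σ))) :
    Set.InjOn
      (fun W : ℝ × ℝ × ℝ × ℝ × ℝ => fun j : Fin 5 =>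
        W.1 * Δ (j : ℕ) W.2.1 W.2.2.2.2 + W.2.2.1 * Δ (j : ℕ) W.2.2.2.1 W.2.2.2.2)
      {W : ℝ × ℝ × ℝ × ℝ × ℝ |
        0 < W.1 ∧ 0 < W.2.2.1 ∧ W.2.1 < W.2.2.2.1 ∧ 0 < W.2.2.2.2} ↔
    3 + 9 / 8 * (m 3) ^ 2 ≤ m 4 :=
  two_node_eqmom_injective_iff_general K hKint m hm hm0 hm1 hm2 Δ hΔ
end

section
/- Let (b_j)_{j≥0} be real numbers with b₀ = 1 and suppose the b-polynomial p(t) = Σ_{j=0}^{2n+1} b_{2n+1−j} t^j has 2n+1 real roots counting multiplicity, of which at least two are nonzero. Then for every σ > 0, all distinct reals u₁ < ⋯ < u_n, and every ũ ∈ ℝ, the polynomial c(u) = Σ_{k=0}^{2n+1} b_k σ^k g^{(k)}(u), where g(u) = (u−u₁)²⋯(u−u_n)²(u−ũ), has 2n+1 distinct real roots. (c(u) is the characteristic polynomial of the coefficient matrix of the n-node EQMOM moment closure system, so under this condition that system is strictly hyperbolic.) -/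
/-!
Since `∑ₖ bₖ tᵏ` is the reversal of the monic, real-rooted `p`, it equals `∏ (1 - r t)` over the
roots `r` of `p`, so `c = ∏ (1 - rσ D) g` with `D` the derivative. For `a ≠ 0` the operator
`1 - a D` keeps a real-rooted polynomial real-rooted of the same degree, lowers the multiplicity
of each root by one, and all its other roots are simple: `f - a f'` is, up to a nonvanishing
factor, the derivative of `e^{-t/a} f(t)`, so Rolle's theorem gives a new root between
consecutive roots of `f` and one beyond the extreme root on the side where `e^{-t/a} f(t) → 0`,
and these already exhaust the degree. The roots of `g` have multiplicity at most `3`, so two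
nonzero roots of `p` make all roots of `c` simple.
-/

open Polynomial Finset Filter Topology

namespace Finset

theorem card_le_card_sdiff_of_forall_exists_between_of_forall_exists_gt {α : Type*}
    [LinearOrder α] {s t : Finset α} (hgap : ∀ x ∈ s, ∀ y ∈ s, x < y → ∃ z ∈ t, x < z ∧ z < y)
    (hend : ∀ x ∈ s, ∃ z ∈ t, x < z) : #s ≤ #(t \ s) := by
  classical
  induction s using Finset.induction_on_max generalizing t with
  | empty => simp
  | insert a s hlt ih =>
    have hs : #s ≤ #({z ∈ t | z < a} \ s) := by
      refine ih (fun x hx y hy hxy => ?_) fun x hx => ?_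
      · obtain ⟨z, hz, hxz, hzy⟩ := hgap x (mem_insert_of_mem hx) y (mem_insert_of_mem hy) hxy
        exact ⟨z, mem_filter.2 ⟨hz, hzy.trans (hlt y hy)⟩, hxz, hzy⟩
      · obtain ⟨z, hz, hxz, hza⟩ :=
          hgap x (mem_insert_of_mem hx) a (mem_insert_self a s) (hlt x hx)
        exact ⟨z, mem_filter.2 ⟨hz, hza⟩, hxz⟩
    obtain ⟨z, hz, haz⟩ := hend a (mem_insert_self a s)
    have hsub : insert z ({z ∈ t | z < a} \ s) ⊆ t \ insert a s := by
      intro y hy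
      simp only [mem_insert, mem_sdiff, mem_filter] at hy ⊢
      rcases hy with rfl | ⟨⟨hyt, hya⟩, hys⟩
      · exact ⟨hz, by rintro (rfl | hys); exacts [haz.false, (haz.trans (hlt y hys)).false]⟩
      · exact ⟨hyt, by rintro (rfl | hys'); exacts [hya.false, hys hys']⟩
    calc #(insert a s) = #s + 1 := card_insert_of_notMem fun h => (hlt a h).false
      _ ≤ #({z ∈ t | z < a} \ s) + 1 := by omega
      _ = #(insert z ({z ∈ t | z < a} \ s)) :=
        (card_insert_of_notMem fun h => (mem_filter.1 (mem_sdiff.1 h).1).2.not_gt haz).symm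
      _ ≤ #(t \ insert a s) := card_le_card hsub

end Finset

theorem exists_gt_hasDerivAt_eq_zero_of_tendsto_atTop {F F' : ℝ → ℝ}
    (hF : ∀ t, HasDerivAt F (F' t) t) {x : ℝ} (hx : F x = 0) (hlim : Tendsto F atTop (𝓝 0)) :
    ∃ z, x < z ∧ F' z = 0 := by
  -- `s ↦ x - log s` maps `(0, 1)` onto `(x, ∞)`, reducing to Rolle's theorem on `(0, 1)`.
  have hderiv : ∀ s ∈ Set.Ioo (0 : ℝ) 1,
      HasDerivAt (fun s => F (x - Real.log s)) (F' (x - Real.log s) * -s⁻¹) s := fun s hs =>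
    (hF _).comp s ((Real.hasDerivAt_log hs.1.ne').const_sub x)
  have hzero : Tendsto (fun s => F (x - Real.log s)) (𝓝[>] 0) (𝓝 0) := by
    refine hlim.comp ?_
    simpa only [sub_eq_add_neg, Function.comp_def] using
      tendsto_atTop_add_const_left _ x (tendsto_neg_atBot_atTop.comp Real.tendsto_log_nhdsGT_zero)
  have hone : Tendsto (fun s => F (x - Real.log s)) (𝓝[<] 1) (𝓝 0) := by
    have hcont : ContinuousAt (fun s => F (x - Real.log s)) 1 :=
      (hF _).continuousAt.comp (continuousAt_const.sub (Real.continuousAt_log one_ne_zero))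
    simpa [hx] using hcont.tendsto.mono_left nhdsWithin_le_nhds
  obtain ⟨s, hs, hs0⟩ := exists_hasDerivAt_eq_zero' zero_lt_one hzero hone hderiv
  exact ⟨x - Real.log s, by linarith [Real.log_neg hs.1 hs.2], by simpa [hs.1.ne'] using hs0⟩

theorem exists_lt_hasDerivAt_eq_zero_of_tendsto_atBot {F F' : ℝ → ℝ}
    (hF : ∀ t, HasDerivAt F (F' t) t) {x : ℝ} (hx : F x = 0) (hlim : Tendsto F atBot (𝓝 0)) :
    ∃ z, z < x ∧ F' z = 0 := by
  obtain ⟨z, hxz, hz⟩ := exists_gt_hasDerivAt_eq_zero_of_tendsto_atTop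
    (F := fun t => F (-t)) (F' := fun t => F' (-t) * -1)
    (fun t => (hF (-t)).comp t (hasDerivAt_neg t)) (x := -x) (by simpa using hx)
    (hlim.comp tendsto_neg_atTop_atBot)
  exact ⟨-z, by linarith, by simpa using hz⟩

namespace Polynomial

section Laguerre

variable {R : Type*} [Ring R]

theorem coeff_sub_C_mul_derivative_natDegree (f : R[X]) (a : R) :
    (f - C a * derivative f).coeff f.natDegree = f.leadingCoeff := by
  simp [coeff_derivative]

theorem natDegree_sub_C_mul_derivative (f : R[X]) (a : R) :
    (f - C a * derivative f).natDegree = f.natDegree := by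
  rcases eq_or_ne f 0 with rfl | hf
  · simp
  refine le_antisymm (natDegree_sub_le_iff_left ?_ |>.2 le_rfl) ?_
  · exact (natDegree_C_mul_le _ _).trans ((natDegree_derivative_le f).trans tsub_le_self)
  · exact le_natDegree_of_ne_zero <| by
      rw [coeff_sub_C_mul_derivative_natDegree]; exact leadingCoeff_ne_zero.2 hf

theorem leadingCoeff_sub_C_mul_derivative (f : R[X]) (a : R) :
    (f - C a * derivative f).leadingCoeff = f.leadingCoeff := by
  rw [leadingCoeff, natDegree_sub_C_mul_derivative, coeff_sub_C_mul_derivative_natDegree]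

theorem sub_C_mul_derivative_ne_zero {f : R[X]} (hf : f ≠ 0) (a : R) :
    f - C a * derivative f ≠ 0 := by
  rw [← leadingCoeff_ne_zero, leadingCoeff_sub_C_mul_derivative]
  exact leadingCoeff_ne_zero.2 hf

end Laguerre

theorem rootMultiplicity_C_mul {R : Type*} [CommRing R] [IsDomain R] {a : R} (ha : a ≠ 0)
    (p : R[X]) (x : R) : (C a * p).rootMultiplicity x = p.rootMultiplicity x := by
  rcases eq_or_ne p 0 with rfl | hp
  · simp
  rw [rootMultiplicity_mul (mul_ne_zero (C_ne_zero.2 ha) hp), rootMultiplicity_C, zero_add]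

theorem rootMultiplicity_sub_C_mul_derivative {K : Type*} [Field K] [CharZero K] {f : K[X]}
    (hf : f ≠ 0) {a : K} (ha : a ≠ 0) {x : K} (hx : f.IsRoot x) :
    (f - C a * derivative f).rootMultiplicity x = f.rootMultiplicity x - 1 := by
  have hf' : derivative f ≠ 0 := fun h0 => hf <| by
    rw [eq_C_of_derivative_eq_zero h0] at hx ⊢
    simpa using hx
  have hd := derivative_rootMultiplicity_of_root hx
  have hm : 0 < f.rootMultiplicity x := (rootMultiplicity_pos hf).2 hx
  -- the two summands have different multiplicities, so the sum has the smaller one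
  have hle := rootMultiplicity_add (p := f) (q := C (-a) * derivative f) x
    (by simpa [sub_eq_add_neg] using sub_C_mul_derivative_ne_zero hf a)
  have hge := rootMultiplicity_add (p := f) (q := C (-1) * (f - C a * derivative f)) x
    (by simpa using mul_ne_zero (C_ne_zero.2 ha) hf')
  rw [rootMultiplicity_C_mul (neg_ne_zero.2 ha), hd,
    show f + C (-a) * derivative f = f - C a * derivative f by rw [C_neg]; ring] at hle
  rw [rootMultiplicity_C_mul (neg_ne_zero.2 one_ne_zero),
    show f + C (-1) * (f - C a * derivative f) = C a * derivative f by rw [C_neg, C_1]; ring,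
    rootMultiplicity_C_mul ha, hd] at hge
  omega

theorem count_roots_sub_dedup_add {K : Type*} [CommRing K] [IsDomain K] [DecidableEq K]
    {f h : K[X]} (hf : f ≠ 0) (x : K) :
    (f.roots - f.roots.dedup + (h.roots.dedup - f.roots.dedup)).count x =
      if f.IsRoot x then f.rootMultiplicity x - 1 else if x ∈ h.roots then 1 else 0 := by
  rw [Multiset.count_add, Multiset.count_sub, Multiset.count_sub, Multiset.count_dedup,
    Multiset.count_dedup, count_roots]
  by_cases hx : f.IsRoot x
  · simp only [mem_roots hf, hx, if_true]
    split_ifs <;> omega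
  · simp only [mem_roots hf, hx, if_false, rootMultiplicity_eq_zero hx]
    omega

theorem roots_sub_dedup_add_le_roots_sub_C_mul_derivative {K : Type*} [Field K] [CharZero K]
    [DecidableEq K] {f : K[X]} (hf : f ≠ 0) {a : K} (ha : a ≠ 0) :
    f.roots - f.roots.dedup + ((f - C a * derivative f).roots.dedup - f.roots.dedup) ≤
      (f - C a * derivative f).roots := by
  refine Multiset.le_iff_count.2 fun x => ?_
  rw [count_roots_sub_dedup_add hf]
  split_ifs with hx hh
  · rw [count_roots, rootMultiplicity_sub_C_mul_derivative hf ha hx]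
  · exact Multiset.one_le_count_iff_mem.2 hh
  · exact Nat.zero_le _

theorem hasDerivAt_exp_mul_eval (f : ℝ[X]) {a : ℝ} (ha : a ≠ 0) (t : ℝ) :
    HasDerivAt (fun t => Real.exp (-(t / a)) * f.eval t)
      (-a⁻¹ * Real.exp (-(t / a)) * (f - C a * derivative f).eval t) t := by
  have hexp : HasDerivAt (fun t => Real.exp (-(t / a))) (Real.exp (-(t / a)) * -(1 / a)) t :=
    (Real.hasDerivAt_exp _).comp t ((hasDerivAt_id' t).div_const a).neg
  refine (hexp.mul (f.hasDerivAt t)).congr_deriv ?_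
  simp only [eval_sub, eval_mul, eval_C]
  field_simp
  ring

theorem tendsto_exp_mul_eval_atTop (f : ℝ[X]) {a : ℝ} (ha : 0 < a) :
    Tendsto (fun t => Real.exp (-(t / a)) * f.eval t) atTop (𝓝 0) := by
  refine ((f.comp (C a * X)).tendsto_div_exp_atTop.comp (tendsto_id.atTop_div_const ha)).congr
    fun t => ?_
  simp only [Function.comp_apply, id, eval_comp, eval_mul, eval_C, eval_X, Real.exp_neg,
    div_eq_inv_mul, mul_inv_cancel_left₀ ha.ne']

theorem tendsto_exp_mul_eval_atBot (f : ℝ[X]) {a : ℝ} (ha : a < 0) :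
    Tendsto (fun t => Real.exp (-(t / a)) * f.eval t) atBot (𝓝 0) := by
  refine ((tendsto_exp_mul_eval_atTop (f.comp (-X)) (neg_pos.2 ha)).comp
    tendsto_neg_atBot_atTop).congr fun t => ?_
  simp [neg_div_neg_eq]

theorem card_roots_toFinset_le_card_roots_sub_C_mul_derivative_sdiff {f : ℝ[X]} (hf : f ≠ 0)
    {a : ℝ} (ha : a ≠ 0) :
    #f.roots.toFinset ≤ #((f - C a * derivative f).roots.toFinset \ f.roots.toFinset) := by
  classical
  set h := f - C a * derivative f
  have hF := hasDerivAt_exp_mul_eval f ha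
  have hcrit : ∀ z, -a⁻¹ * Real.exp (-(z / a)) * h.eval z = 0 → z ∈ h.roots.toFinset := by
    intro z hz
    rw [Multiset.mem_toFinset, mem_roots (sub_C_mul_derivative_ne_zero hf a), IsRoot.def]
    simpa only [mul_eq_zero, neg_eq_zero, inv_eq_zero, ha, Real.exp_ne_zero, or_false,
      false_or] using hz
  have hzero : ∀ x ∈ f.roots.toFinset, Real.exp (-(x / a)) * f.eval x = 0 := by
    intro x hx
    rw [Multiset.mem_toFinset, mem_roots hf] at hx
    rw [hx.eq_zero, mul_zero]
  have hgap : ∀ x ∈ f.roots.toFinset, ∀ y ∈ f.roots.toFinset, x < y →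
      ∃ z ∈ h.roots.toFinset, x < z ∧ z < y := by
    intro x hx y hy hxy
    obtain ⟨z, hz, hz0⟩ := exists_hasDerivAt_eq_zero hxy
      (fun t _ => (hF t).continuousAt.continuousWithinAt) ((hzero x hx).trans (hzero y hy).symm)
      (fun t _ => hF t)
    exact ⟨z, hcrit z hz0, hz⟩
  rcases ha.lt_or_gt with hneg | hpos
  · refine card_le_card_sdiff_of_forall_exists_between_of_forall_exists_gt (α := ℝᵒᵈ)
      (fun x hx y hy hxy => ?_) fun x hx => ?_
    · obtain ⟨z, hz, hyz, hzx⟩ := hgap y hy x hx hxy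
      exact ⟨z, hz, hzx, hyz⟩
    · obtain ⟨z, hzx, hz⟩ := exists_lt_hasDerivAt_eq_zero_of_tendsto_atBot hF (hzero x hx)
        (tendsto_exp_mul_eval_atBot f hneg)
      exact ⟨z, hcrit z hz, hzx⟩
  · refine card_le_card_sdiff_of_forall_exists_between_of_forall_exists_gt hgap fun x hx => ?_
    obtain ⟨z, hxz, hz⟩ := exists_gt_hasDerivAt_eq_zero_of_tendsto_atTop hF (hzero x hx)
      (tendsto_exp_mul_eval_atTop f hpos)
    exact ⟨z, hcrit z hz, hxz⟩

theorem Splits.sub_C_mul_derivative {f : ℝ[X]} (hs : f.Splits) {a : ℝ} (ha : a ≠ 0) :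
    (f - C a * derivative f).Splits ∧
      ∀ x, (f - C a * derivative f).rootMultiplicity x ≤ max (f.rootMultiplicity x - 1) 1 := by
  classical
  rcases eq_or_ne f 0 with rfl | hf
  · simp
  have hcard := card_roots_toFinset_le_card_roots_sub_C_mul_derivative_sdiff hf ha
  simp only [Finset.card_def, Finset.sdiff_val, Multiset.toFinset_val] at hcard
  have hdeg := natDegree_sub_C_mul_derivative f a
  have hle := roots_sub_dedup_add_le_roots_sub_C_mul_derivative hf ha
  have hcard_le : (f - C a * derivative f).roots.card ≤ f.natDegree :=
    hdeg ▸ card_roots' _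
  have hdeg_le : f.natDegree ≤
      (f.roots - f.roots.dedup + ((f - C a * derivative f).roots.dedup - f.roots.dedup)).card := by
    rw [Multiset.card_add, Multiset.card_sub (Multiset.dedup_le _), ← splits_iff_card_roots.1 hs]
    have := Multiset.card_le_card (Multiset.dedup_le f.roots)
    omega
  -- the roots found so far already exhaust the degree
  have hroots := Multiset.eq_of_le_of_card_le hle (hcard_le.trans hdeg_le)
  refine ⟨splits_iff_card_roots.2 (le_antisymm (card_roots' _) ?_), fun x => ?_⟩
  · rw [hdeg, ← hroots]; exact hdeg_le
  · rw [← count_roots, ← hroots, count_roots_sub_dedup_add hf]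
    split_ifs <;> omega

section Operator

variable {R : Type*} [CommRing R]

theorem aeval_derivative_one_sub_C_mul_X (a : R) (f : R[X]) :
    aeval derivative (1 - C a * X) f = f - C a * derivative f := by
  simp [Module.algebraMap_end_apply, smul_eq_C_mul]

theorem aeval_derivative_sum_C_mul_X_pow (s : Finset ℕ) (c : ℕ → R) (f : R[X]) :
    aeval derivative (∑ k ∈ s, C (c k) * X ^ k) f =
      ∑ k ∈ s, C (c k) * derivative^[k] f := by
  simp [Module.algebraMap_end_apply, smul_eq_C_mul, Module.End.pow_apply]

end Operator

theorem Splits.aeval_derivative_prod_one_sub_C_mul_X {f : ℝ[X]} (hs : f.Splits)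
    (M : Multiset ℝ) :
    (aeval derivative (M.map fun a => 1 - C a * X).prod f).Splits ∧
      (aeval derivative (M.map fun a => 1 - C a * X).prod f).natDegree = f.natDegree ∧
      ∀ x, (aeval derivative (M.map fun a => 1 - C a * X).prod f).rootMultiplicity x ≤
        max (f.rootMultiplicity x - Multiset.card (M.filter (· ≠ 0))) 1 := by
  induction M using Multiset.induction_on with
  | empty => simp [hs]
  | cons a M ih =>
    obtain ⟨hgs, hgdeg, hgmult⟩ := ih
    rw [Multiset.map_cons, Multiset.prod_cons, map_mul, Module.End.mul_apply,
      aeval_derivative_one_sub_C_mul_X]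
    by_cases ha : a = 0
    · subst ha
      rw [C_0, zero_mul, sub_zero, Multiset.filter_cons_of_neg (p := (· ≠ 0)) _ (not_not.2 rfl)]
      exact ⟨hgs, hgdeg, hgmult⟩
    · obtain ⟨hs', hmult⟩ := hgs.sub_C_mul_derivative ha
      refine ⟨hs', (natDegree_sub_C_mul_derivative _ _).trans hgdeg, fun x => ?_⟩
      rw [Multiset.filter_cons_of_pos (p := (· ≠ 0)) _ ha, Multiset.card_cons]
      have := hmult x
      have := hgmult x
      omega

section Reversal

variable {R : Type*} [CommRing R]

theorem reflect_sum_range_C_mul_X_pow (N : ℕ) (c : ℕ → R) :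
    reflect N (∑ j ∈ range (N + 1), C (c (N - j)) * X ^ j) =
      ∑ j ∈ range (N + 1), C (c j) * X ^ j := by
  ext i
  simp only [coeff_reflect, finsetSum_coeff, coeff_C_mul_X_pow, Finset.sum_ite_eq, mem_range]
  rcases le_or_gt i N with hi | hi
  · rw [revAt_le hi, if_pos (by omega), if_pos (by omega), Nat.sub_sub_self hi]
  · rw [revAt_eq_self_of_lt hi, if_neg (by omega), if_neg (by omega)]

theorem monic_sum_range_C_mul_X_pow [Nontrivial R] {N : ℕ} {c : ℕ → R} (hc : c N = 1) :
    (∑ j ∈ range (N + 1), C (c j) * X ^ j).Monic ∧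
      (∑ j ∈ range (N + 1), C (c j) * X ^ j).natDegree = N := by
  have hle : (∑ j ∈ range (N + 1), C (c j) * X ^ j).natDegree ≤ N :=
    natDegree_sum_le_of_forall_le _ _ fun j hj =>
      (natDegree_C_mul_X_pow_le _ _).trans (Nat.lt_succ_iff.1 (mem_range.1 hj))
  have hcoeff : (∑ j ∈ range (N + 1), C (c j) * X ^ j).coeff N = 1 := by
    simp [finsetSum_coeff, hc]
  exact ⟨monic_of_natDegree_le_of_coeff_eq_one N hle hcoeff,
    natDegree_eq_of_le_of_coeff_ne_zero hle (hcoeff ▸ one_ne_zero)⟩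

theorem reverse_multiset_prod_X_sub_C [IsDomain R] (s : Multiset R) :
    (s.map fun a => X - C a).prod.reverse = (s.map fun a => 1 - C a * X).prod := by
  induction s using Multiset.induction_on with
  | empty => simpa using reverse_C (1 : R)
  | cons a s ih =>
    rw [Multiset.map_cons, Multiset.prod_cons, reverse_mul_of_domain, ih, Multiset.map_cons,
      Multiset.prod_cons]
    congr 1
    ext n
    rcases n with _ | _ | n <;> simp [coeff_reverse, revAt, coeff_X, coeff_C, coeff_one]

theorem roots_prod_X_sub_C_sq_mul_X_sub_C [IsDomain R] {n : ℕ} (u : Fin n → R) (v : R) :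
    ((∏ i, (X - C (u i)) ^ 2) * (X - C v)).roots = 2 • univ.val.map u + {v} := by
  have : (∏ i, (X - C (u i)) ^ 2) * (X - C v) =
      ((2 • univ.val.map u + {v}).map fun a => X - C a).prod := by
    rw [Multiset.map_add, Multiset.map_nsmul, Multiset.prod_add, Multiset.prod_nsmul,
      Multiset.map_singleton, Multiset.prod_singleton, Multiset.map_map, Finset.prod_pow]
    rfl
  rw [this, roots_multiset_prod_X_sub_C]

theorem rootMultiplicity_prod_X_sub_C_sq_mul_X_sub_C_le [IsDomain R] [DecidableEq R] {n : ℕ}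
    {u : Fin n → R} (hu : Function.Injective u) (v x : R) :
    ((∏ i, (X - C (u i)) ^ 2) * (X - C v)).rootMultiplicity x ≤ 3 := by
  have := Multiset.nodup_iff_count_le_one.1 (univ.nodup.map hu) x
  rw [← count_roots, roots_prod_X_sub_C_sq_mul_X_sub_C, Multiset.count_add, Multiset.count_nsmul,
    Multiset.count_singleton]
  split_ifs <;> omega

theorem sum_C_mul_pow_mul_X_pow_eq_prod_one_sub_C_mul_X [IsDomain R] {N : ℕ} {b : ℕ → R}
    {p : R[X]} (hp : p = ∑ j ∈ range (N + 1), C (b (N - j)) * X ^ j) (hdeg : p.natDegree = N)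
    (hprod : (p.roots.map fun a => X - C a).prod = p) (σ : R) :
    ∑ k ∈ range (N + 1), C (b k * σ ^ k) * X ^ k =
      ((p.roots.map (· * σ)).map fun a => 1 - C a * X).prod := by
  calc ∑ k ∈ range (N + 1), C (b k * σ ^ k) * X ^ k = p.reverse.comp (C σ * X) := by
        rw [reverse, hdeg, hp, reflect_sum_range_C_mul_X_pow]
        simp [mul_pow, mul_assoc]
    _ = _ := by
        rw [← hprod, reverse_multiset_prod_X_sub_C]
        simp [multiset_prod_comp, Multiset.map_map, mul_assoc]

end Reversal

end Polynomial

theorem eqmom_strict_hyperbolicity_of_b_polynomial_general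
    (n : ℕ) (b : ℕ → ℝ) (hb0 : b 0 = 1)
    (p : Polynomial ℝ)
    (hp : p = ∑ j ∈ Finset.range (2 * n + 2), C (b (2 * n + 1 - j)) * X ^ j)
    (hreal : p.roots.card = 2 * n + 1)
    (hnz : 2 ≤ (p.roots.filter (· ≠ 0)).card)
    (σ : ℝ) (hσ : 0 < σ) (u : Fin n → ℝ) (hu : StrictMono u) (ut : ℝ)
    (g c : Polynomial ℝ)
    (hg : g = (∏ i, (X - C (u i)) ^ 2) * (X - C ut))
    (hc : c = ∑ k ∈ Finset.range (2 * n + 2), C (b k * σ ^ k) * derivative^[k] g) :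
    c.roots.card = 2 * n + 1 ∧ c.roots.Nodup := by
  classical
  obtain ⟨hpm, hpdeg⟩ := monic_sum_range_C_mul_X_pow (N := 2 * n + 1)
    (c := fun j => b (2 * n + 1 - j)) (by simpa using hb0)
  rw [← hp] at hpm hpdeg
  have hprod := prod_multiset_X_sub_C_of_monic_of_roots_card_eq hpm (hreal.trans hpdeg.symm)
  have hcq : c = aeval derivative (((p.roots.map (· * σ)).map fun a => 1 - C a * X).prod) g := by
    rw [hc, ← sum_C_mul_pow_mul_X_pow_eq_prod_one_sub_C_mul_X hp hpdeg hprod σ,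
      aeval_derivative_sum_C_mul_X_pow]
  have hgs : g.Splits :=
    hg ▸ (Splits.prod fun i _ => (Splits.X_sub_C _).pow 2).mul (Splits.X_sub_C _)
  have hscaled : 2 ≤ Multiset.card ((p.roots.map (· * σ)).filter (· ≠ 0)) := by
    simpa [Multiset.filter_map, Function.comp_def, hσ.ne'] using hnz
  obtain ⟨hcs, hcdeg, hcmult⟩ := hgs.aeval_derivative_prod_one_sub_C_mul_X (p.roots.map (· * σ))
  rw [← hcq] at hcs hcdeg hcmult
  refine ⟨?_, Multiset.nodup_iff_count_le_one.2 fun x => ?_⟩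
  · rw [splits_iff_card_roots.1 hcs, hcdeg, hgs.natDegree_eq_card_roots, hg,
      roots_prod_X_sub_C_sq_mul_X_sub_C]
    simp
  · have := hcmult x
    have := hg ▸ rootMultiplicity_prod_X_sub_C_sq_mul_X_sub_C_le hu.injective ut x
    rw [count_roots]
    omega

/-- Suppose `b₀ = 1` and the b-polynomial
`p(t) = Σ_{j=0}^{2n+1} b_{2n+1−j} t^j` has `2n+1` real roots counting multiplicity,
at least two of which are nonzero. Then for every `σ > 0`, distinct `u₁ < ⋯ < u_n`
and `ũ ∈ ℝ`, the polynomial `c(u) = Σ_{k=0}^{2n+1} b_k σ^k g⁽ᵏ⁾(u)`, where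
`g(u) = (u−u₁)²⋯(u−u_n)²(u−ũ)`, has `2n+1` distinct real roots (so the `n`-node
EQMOM moment system is strictly hyperbolic). -/
theorem eqmom_strict_hyperbolicity_of_b_polynomial
    (n : ℕ) (hn : 1 ≤ n) (b : ℕ → ℝ) (hb0 : b 0 = 1)
    (p : Polynomial ℝ)
    (hp : p = ∑ j ∈ Finset.range (2 * n + 2), C (b (2 * n + 1 - j)) * X ^ j)
    (hreal : p.roots.card = 2 * n + 1)
    (hnz : 2 ≤ (p.roots.filter (· ≠ 0)).card)
    (σ : ℝ) (hσ : 0 < σ) (u : Fin n → ℝ) (hu : StrictMono u) (ut : ℝ)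
    (g c : Polynomial ℝ)
    (hg : g = (∏ i, (X - C (u i)) ^ 2) * (X - C ut))
    (hc : c = ∑ k ∈ Finset.range (2 * n + 2), C (b k * σ ^ k) * derivative^[k] g) :
    c.roots.card = 2 * n + 1 ∧ c.roots.Nodup :=
  eqmom_strict_hyperbolicity_of_b_polynomial_general n b hb0 p hp hreal hnz σ hσ u hu ut g c hg hc
end

section
/- Let K be an even normalized kernel with fourth moment m₄ ≥ 3, and set b₂ = −1/2 and b₄ = (6 − m₄)/24. For W = (w₁,u₁,w₂,u₂,σ) in Ω^{tot} = {w₁ > 0, w₂ > 0, u₁ ≤ u₂, σ > 0} define ũ(W) = (w₁u₁ + w₂u₂)/(w₁+w₂) + 4(m₄−3)σ²(w₁−w₂)(u₁−u₂) / ((w₁+w₂)[(u₁−u₂)² + 2(m₄−3)σ²]) (with the second term read as 0 when u₁ = u₂), and g(u;W) = (u−u₁)²(u−u₂)²(u−ũ(W)). Then the characteristic polynomial c(u;W) = g(u;W) + b₂σ² g''(u;W) + b₄σ⁴ g''''(u;W) has 5 distinct real roots for every W ∈ Ω^{tot} if and only if m₄ < 6. (Equivalently, the two-node EQMOM moment system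 is strictly hyperbolic on 𝓜(Ω^{tot}) if and only if 3 ≤ m₄ < 6.) -/
open MeasureTheory Finset Polynomial Filter

private lemma aux_five_roots (c : Polynomial ℝ) (hM : c.Monic) (hd : c.natDegree = 5)
    (x1 x2 x3 x4 : ℝ) (h12 : x1 < x2) (h23 : x2 < x3) (h34 : x3 < x4)
    (s1 : 0 < c.eval x1) (s2 : c.eval x2 < 0) (s3 : 0 < c.eval x3) (s4 : c.eval x4 < 0) :
    c.roots.card = 5 ∧ c.roots.Nodup := by
  have hc0 : c ≠ 0 := hM.ne_zero
  have hdeg : 0 < c.degree := by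
    rw [degree_eq_natDegree hc0, hd]; exact_mod_cast Nat.succ_pos 4
  have htop : Tendsto (fun x => c.eval x) atTop atTop :=
    c.tendsto_atTop_of_leadingCoeff_nonneg hdeg (by rw [hM.leadingCoeff]; norm_num)
  obtain ⟨x5, hx5gt, hx5pos⟩ : ∃ x5, x4 < x5 ∧ 0 < c.eval x5 := by
    have := (eventually_gt_atTop x4).and (htop.eventually_gt_atTop 0)
    rcases this.exists with ⟨x5, h1, h2⟩; exact ⟨x5, h1, h2⟩
  have hbot : Tendsto (fun x => c.eval (-x)) atTop atBot := by
    have hcomp : ∀ x : ℝ, c.eval (-x) = (c.comp (-X)).eval x := by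
      intro x; simp [eval_comp]
    have hdc : 0 < (c.comp (-X)).degree := by
      rw [degree_eq_natDegree, natDegree_comp]
      · simp only [natDegree_neg, natDegree_X, mul_one, hd]
        exact_mod_cast Nat.succ_pos 4
      · intro h
        have := natDegree_comp (p := c) (q := (-X : Polynomial ℝ))
        rw [h] at this
        simp [hd] at this
    have hlc : (c.comp (-X)).leadingCoeff ≤ 0 := by
      rw [leadingCoeff_comp (by simp)]
      simp only [hM.leadingCoeff, leadingCoeff_neg, leadingCoeff_X, hd]
      norm_num
    have := (c.comp (-X)).tendsto_atBot_of_leadingCoeff_nonpos hdc hlc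
    simpa only [← hcomp] using this
  obtain ⟨x0, hx0lt, hx0neg⟩ : ∃ x0, x0 < x1 ∧ c.eval x0 < 0 := by
    have := (eventually_gt_atTop (-x1)).and (hbot.eventually_lt_atBot 0)
    rcases this.exists with ⟨y, h1, h2⟩
    exact ⟨-y, by linarith, h2⟩
  have hcont : ∀ a b : ℝ, ContinuousOn (fun x => c.eval x) (Set.Icc a b) :=
    fun a b => (Polynomial.continuous c).continuousOn
  obtain ⟨r1, hr1m, hr1⟩ : ∃ r, r ∈ Set.Ioo x0 x1 ∧ c.eval r = 0 := by
    have h := intermediate_value_Ioo (le_of_lt hx0lt) (hcont x0 x1)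
    rcases h ⟨hx0neg, s1⟩ with ⟨r, hr, hr0⟩; exact ⟨r, hr, hr0⟩
  obtain ⟨r2, hr2m, hr2⟩ : ∃ r, r ∈ Set.Ioo x1 x2 ∧ c.eval r = 0 := by
    have h := intermediate_value_Ioo' (le_of_lt h12) (hcont x1 x2)
    rcases h ⟨s2, s1⟩ with ⟨r, hr, hr0⟩; exact ⟨r, hr, hr0⟩
  obtain ⟨r3, hr3m, hr3⟩ : ∃ r, r ∈ Set.Ioo x2 x3 ∧ c.eval r = 0 := by
    have h := intermediate_value_Ioo (le_of_lt h23) (hcont x2 x3)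
    rcases h ⟨s2, s3⟩ with ⟨r, hr, hr0⟩; exact ⟨r, hr, hr0⟩
  obtain ⟨r4, hr4m, hr4⟩ : ∃ r, r ∈ Set.Ioo x3 x4 ∧ c.eval r = 0 := by
    have h := intermediate_value_Ioo' (le_of_lt h34) (hcont x3 x4)
    rcases h ⟨s4, s3⟩ with ⟨r, hr, hr0⟩; exact ⟨r, hr, hr0⟩
  obtain ⟨r5, hr5m, hr5⟩ : ∃ r, r ∈ Set.Ioo x4 x5 ∧ c.eval r = 0 := by
    have h := intermediate_value_Ioo (le_of_lt hx5gt) (hcont x4 x5)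
    rcases h ⟨s4, hx5pos⟩ with ⟨r, hr, hr0⟩; exact ⟨r, hr, hr0⟩
  have o12 : r1 < r2 := lt_trans hr1m.2 hr2m.1
  have o23 : r2 < r3 := lt_trans hr2m.2 hr3m.1
  have o34 : r3 < r4 := lt_trans hr3m.2 hr4m.1
  have o45 : r4 < r5 := lt_trans hr4m.2 hr5m.1
  have hmem : ∀ r : ℝ, c.eval r = 0 → r ∈ c.roots.toFinset := by
    intro r hr; rw [Multiset.mem_toFinset, mem_roots']; exact ⟨hc0, hr⟩
  have hsub : ({r1, r2, r3, r4, r5} : Finset ℝ) ⊆ c.roots.toFinset := by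
    intro r hr
    simp only [Finset.mem_insert, Finset.mem_singleton] at hr
    rcases hr with h|h|h|h|h <;> subst h
    exacts [hmem _ hr1, hmem _ hr2, hmem _ hr3, hmem _ hr4, hmem _ hr5]
  have hcard5 : ({r1, r2, r3, r4, r5} : Finset ℝ).card = 5 := by
    have h1 : r1 ∉ ({r2, r3, r4, r5} : Finset ℝ) := by
      simp only [Finset.mem_insert, Finset.mem_singleton]
      push_neg
      exact ⟨ne_of_lt o12, ne_of_lt (by linarith), ne_of_lt (by linarith), ne_of_lt (by linarith)⟩
    rw [Finset.card_insert_of_notMem h1]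
    have h2 : r2 ∉ ({r3, r4, r5} : Finset ℝ) := by
      simp only [Finset.mem_insert, Finset.mem_singleton]
      push_neg
      exact ⟨ne_of_lt o23, ne_of_lt (by linarith), ne_of_lt (by linarith)⟩
    rw [Finset.card_insert_of_notMem h2]
    have h3 : r3 ∉ ({r4, r5} : Finset ℝ) := by
      simp only [Finset.mem_insert, Finset.mem_singleton]
      push_neg
      exact ⟨ne_of_lt o34, ne_of_lt (by linarith)⟩
    rw [Finset.card_insert_of_notMem h3]
    have h4 : r4 ∉ ({r5} : Finset ℝ) := by
      simp only [Finset.mem_singleton]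
      exact ne_of_lt o45
    rw [Finset.card_insert_of_notMem h4, Finset.card_singleton]
  have hle1 : (5 : ℕ) ≤ c.roots.toFinset.card := by
    calc (5:ℕ) = ({r1, r2, r3, r4, r5} : Finset ℝ).card := hcard5.symm
    _ ≤ c.roots.toFinset.card := Finset.card_le_card hsub
  have hle2 : c.roots.toFinset.card ≤ Multiset.card c.roots := Multiset.toFinset_card_le _
  have hle3 : Multiset.card c.roots ≤ 5 := by
    have := c.card_roots'
    rwa [hd] at this
  have hcard : Multiset.card c.roots = 5 := le_antisymm hle3 (le_trans hle1 hle2)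
  refine ⟨hcard, ?_⟩
  rw [← Multiset.toFinset_card_eq_card_iff_nodup]
  omega

set_option maxHeartbeats 3200000 in
/-- For an even normalized kernel with fourth moment `m₄ ≥ 3`,
with `b₂ = −1/2`, `b₄ = (6 − m₄)/24`, `ũ(W)` as in the paper and
`g(u;W) = (u−u₁)²(u−u₂)²(u−ũ(W))`, the characteristic polynomial
`c = g + b₂σ²g'' + b₄σ⁴g''''` has `5` distinct real roots for every
`W ∈ Ω^{tot} = {w₁ > 0, w₂ > 0, u₁ ≤ u₂, σ > 0}` if and only if `m₄ < 6`
(i.e. the two-node EQMOM system is strictly hyperbolic iff `3 ≤ m₄ < 6`). -/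
theorem two_node_eqmom_strictly_hyperbolic_iff
    (K : ℝ → ℝ) (hKmeas : Measurable K) (hKnonneg : ∀ ξ, 0 ≤ K ξ)
    (hKint : ∀ j : ℕ, Integrable (fun ξ => |ξ| ^ j * K ξ))
    (hKeven : ∀ ξ, K (-ξ) = K ξ)
    (m : ℕ → ℝ) (hm : ∀ j, m j = ∫ ξ, ξ ^ j * K ξ)
    (hm0 : m 0 = 1) (hm1 : m 1 = 0) (hm2 : m 2 = 1)
    (hm4 : 3 ≤ m 4) :
    (∀ w₁ u₁ w₂ u₂ σ : ℝ, 0 < w₁ → 0 < w₂ → u₁ ≤ u₂ → 0 < σ →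
      ∀ ut : ℝ,
        ut = (w₁ * u₁ + w₂ * u₂) / (w₁ + w₂)
          + 4 * (m 4 - 3) * σ ^ 2 * (w₁ - w₂) * (u₁ - u₂)
            / ((w₁ + w₂) * ((u₁ - u₂) ^ 2 + 2 * (m 4 - 3) * σ ^ 2)) →
      ∀ g : Polynomial ℝ,
        g = (X - C u₁) ^ 2 * (X - C u₂) ^ 2 * (X - C ut) →
      ∀ c : Polynomial ℝ,
        c = g + Polynomial.C (-(1 / 2) * σ ^ 2) * derivative^[2] g
              + Polynomial.C ((6 - m 4) / 24 * σ ^ 4) * derivative^[4] g →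
      c.roots.card = 5 ∧ c.roots.Nodup) ↔
    m 4 < 6 := by
  constructor
  · -- forward: instantiate at the degenerate state and derive m 4 < 6
    intro H
    by_contra h6
    push_neg at h6  -- 6 ≤ m 4
    have hut0 : (0:ℝ) = (1 * 0 + 1 * 0) / (1 + 1)
        + 4 * (m 4 - 3) * 1 ^ 2 * (1 - 1) * (0 - 0)
          / ((1 + 1) * ((0 - 0) ^ 2 + 2 * (m 4 - 3) * 1 ^ 2)) := by
      norm_num
    set c : Polynomial ℝ := (X - C 0) ^ 2 * (X - C 0) ^ 2 * (X - C 0)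
        + Polynomial.C (-(1 / 2) * 1 ^ 2) *
            derivative^[2] ((X - C 0) ^ 2 * (X - C 0) ^ 2 * (X - C 0))
        + Polynomial.C ((6 - m 4) / 24 * 1 ^ 4) *
            derivative^[4] ((X - C 0) ^ 2 * (X - C 0) ^ 2 * (X - C 0)) with hcdef
    obtain ⟨hcard, hnodup⟩ :=
      H 1 0 1 0 1 one_pos one_pos le_rfl one_pos 0 hut0
        ((X - C 0) ^ 2 * (X - C 0) ^ 2 * (X - C 0)) rfl
        c hcdef
    have hg5 : ((X - C 0) ^ 2 * (X - C 0) ^ 2 * (X - C 0) : Polynomial ℝ) = X ^ 5 := by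
      simp only [C_0, sub_zero]
      ring
    have hcE : ∀ x : ℝ, c.eval x = x^5 - 10 * x^3 + 5 * (6 - m 4) * x := by
      intro x
      have h2 : derivative^[2] (X ^ 5 : Polynomial ℝ) = 20 * X ^ 3 := by
        simp only [Function.iterate_succ_apply, Function.iterate_zero_apply, derivative_add,
          derivative_C_mul, derivative_X_pow, derivative_X, derivative_C, derivative_zero,
          derivative_mul, derivative_one, derivative_ofNat, derivative_natCast, map_natCast,
          Nat.cast_ofNat, map_ofNat]
        ring
      have h4 : derivative^[4] (X ^ 5 : Polynomial ℝ) = 120 * X := by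
        have h44 : derivative^[4] (X ^ 5 : Polynomial ℝ)
            = derivative^[2] (derivative^[2] (X ^ 5 : Polynomial ℝ)) := by
          rw [← Function.iterate_add_apply]
        rw [h44, h2]
        simp only [Function.iterate_succ_apply, Function.iterate_zero_apply, derivative_add,
          derivative_C_mul, derivative_X_pow, derivative_X, derivative_C, derivative_zero,
          derivative_mul, derivative_one, derivative_ofNat, derivative_natCast, map_natCast,
          Nat.cast_ofNat, map_ofNat]
        ring
      rw [hcdef, hg5, h2, h4]
      simp only [eval_add, eval_mul, eval_sub, eval_pow, eval_X, eval_C, eval_ofNat]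
      ring
    -- the roots are contained in a 3-element set
    set s : ℝ := Real.sqrt (5 * m 4 - 5) with hsdef
    have hs2 : s ^ 2 = 5 * m 4 - 5 := Real.sq_sqrt (by linarith)
    have hs5 : 5 ≤ s := by nlinarith [Real.sqrt_nonneg (5 * m 4 - 5)]
    set a : ℝ := Real.sqrt (5 + s) with hadef
    have ha2 : a ^ 2 = 5 + s := Real.sq_sqrt (by linarith)
    have hsubset : c.roots.toFinset ⊆ ({0, a, -a} : Finset ℝ) := by
      intro r hr
      rw [Multiset.mem_toFinset, mem_roots'] at hr
      have hre : r^5 - 10 * r^3 + 5 * (6 - m 4) * r = 0 := by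
        rw [← hcE r]; exact hr.2
      simp only [Finset.mem_insert, Finset.mem_singleton]
      by_cases hr0 : r = 0
      · exact Or.inl hr0
      · have hq : r^4 - 10 * r^2 + 5 * (6 - m 4) = 0 := by
          have : r * (r^4 - 10 * r^2 + 5 * (6 - m 4)) = 0 := by linarith [hre]
          rcases mul_eq_zero.mp this with h | h
          · exact absurd h hr0
          · exact h
        have hfac : (r^2 - 5 - s) * (r^2 - 5 + s) = 0 := by
          have : (r^2 - 5)^2 = s^2 := by rw [hs2]; nlinarith [hq]
          nlinarith [this]
        rcases mul_eq_zero.mp hfac with h | h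
        · -- r^2 = 5 + s
          have : (r - a) * (r + a) = 0 := by nlinarith [ha2, h]
          rcases mul_eq_zero.mp this with h' | h'
          · right; left; linarith
          · right; right; linarith
        · -- r^2 = 5 - s ≤ 0, impossible for r ≠ 0
          have hr2pos : 0 < r^2 := by positivity
          nlinarith [h]
    have hcard3 : c.roots.toFinset.card ≤ 3 := by
      calc c.roots.toFinset.card ≤ ({0, a, -a} : Finset ℝ).card := Finset.card_le_card hsubset
      _ ≤ 3 := by
        apply le_trans (Finset.card_insert_le _ _)
        apply Nat.succ_le_succ
        apply le_trans (Finset.card_insert_le _ _)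
        simp
    have : c.roots.toFinset.card = 5 := by
      rw [Multiset.toFinset_card_eq_card_iff_nodup.mpr hnodup, hcard]
    omega
  · -- backward: the interlacing certificate
    intro h6
    intro w1 u1 w2 u2 σ hw1 hw2 hu hσ ut hut g hg c hc
    clear hut
    set m4 : ℝ := m 4 with hm4def
    -- expanded form of g and its derivatives
    have hgE : g = X^5 + C (-(ut + 2*u2 + 2*u1)) * X^4
        + C (2*u2*ut + u2*u2 + 2*u1*ut + 4*u1*u2 + u1*u1) * X^3
        + C (-(u2*u2*ut + 4*u1*u2*ut + 2*u1*u2*u2 + u1*u1*ut + 2*u1*u1*u2)) * X^2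
        + C (2*u1*u2*u2*ut + 2*u1*u1*u2*ut + u1*u1*u2*u2) * X
        + C (-(u1*u1*u2*u2*ut)) := by
      rw [hg]
      simp only [C_mul, C_add, C_neg, C_sub, C_1, C_0, map_ofNat]
      ring
    have h2 : derivative^[2] g = 20 * X^3 + 12 * C (-(ut + 2*u2 + 2*u1)) * X^2
        + 6 * C (2*u2*ut + u2*u2 + 2*u1*ut + 4*u1*u2 + u1*u1) * X
        + 2 * C (-(u2*u2*ut + 4*u1*u2*ut + 2*u1*u2*u2 + u1*u1*ut + 2*u1*u1*u2)) := by
      rw [hgE]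
      simp only [Function.iterate_succ_apply, Function.iterate_zero_apply, derivative_add,
        derivative_C_mul, derivative_X_pow, derivative_X, derivative_C, derivative_zero,
        derivative_mul, derivative_one, derivative_ofNat, derivative_natCast, map_natCast,
        Nat.cast_ofNat, map_ofNat]
      ring
    have h4 : derivative^[4] g = 120 * X + 24 * C (-(ut + 2*u2 + 2*u1)) := by
      have h44 : derivative^[4] g = derivative^[2] (derivative^[2] g) := by
        rw [← Function.iterate_add_apply]
      rw [h44, h2]
      simp only [Function.iterate_succ_apply, Function.iterate_zero_apply, derivative_add,
        derivative_C_mul, derivative_X_pow, derivative_X, derivative_C, derivative_zero,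
        derivative_mul, derivative_one, derivative_ofNat, derivative_natCast, map_natCast,
        Nat.cast_ofNat, map_ofNat]
      ring
    have hEval : ∀ x : ℝ, c.eval x =
        (x - ut) * (((x - u1) * (x - u2))^2 - σ^2 * (2*x - u1 - u2)^2
            - 2 * σ^2 * ((x - u1) * (x - u2)) + (6 - m4) * σ^4)
        - σ^2 * (2 * ((x - u1) * (x - u2)) * (2*x - u1 - u2)
            - 2 * (6 - m4) * σ^2 * (2*x - u1 - u2)) := by
      intro x
      rw [hc, h2, h4, hgE]
      simp only [eval_add, eval_mul, eval_sub, eval_pow, eval_X, eval_C, eval_ofNat]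
      ring
    -- Monic and degree
    have hgM : g.Monic := by
      rw [hg]
      exact (((monic_X_sub_C u1).pow 2).mul ((monic_X_sub_C u2).pow 2)).mul (monic_X_sub_C ut)
    have hne1 : ((X - C u1)^2 : Polynomial ℝ) ≠ 0 := pow_ne_zero _ (X_sub_C_ne_zero u1)
    have hne2 : ((X - C u2)^2 : Polynomial ℝ) ≠ 0 := pow_ne_zero _ (X_sub_C_ne_zero u2)
    have hgnd : g.natDegree = 5 := by
      rw [hg, natDegree_mul (mul_ne_zero hne1 hne2) (X_sub_C_ne_zero ut),
        natDegree_mul hne1 hne2, natDegree_pow, natDegree_pow]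
      simp [natDegree_X_sub_C]
    have hgdeg : g.degree = 5 := by
      rw [degree_eq_natDegree hgM.ne_zero, hgnd]; norm_cast
    have ht1 : (Polynomial.C (-(1 / 2) * σ ^ 2) * derivative^[2] g).degree < g.degree := by
      calc (Polynomial.C (-(1 / 2) * σ ^ 2) * derivative^[2] g).degree
          ≤ ((Polynomial.C (-(1 / 2) * σ ^ 2) * derivative^[2] g).natDegree : WithBot ℕ) :=
            degree_le_natDegree
        _ ≤ ((derivative^[2] g).natDegree : WithBot ℕ) := by
            exact_mod_cast natDegree_C_mul_le _ _
        _ ≤ ((3:ℕ) : WithBot ℕ) := by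
            have := natDegree_iterate_derivative g 2
            rw [hgnd] at this
            exact_mod_cast this
        _ < g.degree := by rw [hgdeg]; exact_mod_cast (by norm_num : (3:ℕ) < 5)
    have ht2 : (Polynomial.C ((6 - m4) / 24 * σ ^ 4) * derivative^[4] g).degree < g.degree := by
      calc (Polynomial.C ((6 - m4) / 24 * σ ^ 4) * derivative^[4] g).degree
          ≤ ((Polynomial.C ((6 - m4) / 24 * σ ^ 4) * derivative^[4] g).natDegree : WithBot ℕ) :=
            degree_le_natDegree
        _ ≤ ((derivative^[4] g).natDegree : WithBot ℕ) := by
            exact_mod_cast natDegree_C_mul_le _ _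
        _ ≤ ((1:ℕ) : WithBot ℕ) := by
            have := natDegree_iterate_derivative g 4
            rw [hgnd] at this
            exact_mod_cast this
        _ < g.degree := by rw [hgdeg]; exact_mod_cast (by norm_num : (1:ℕ) < 5)
    have hsum1deg : (g + Polynomial.C (-(1 / 2) * σ ^ 2) * derivative^[2] g).degree = g.degree :=
      degree_add_eq_left_of_degree_lt ht1
    have hcM : c.Monic := by
      rw [hc]
      exact (hgM.add_of_left ht1).add_of_left (by rw [hsum1deg]; exact ht2)
    have hcdeg : c.natDegree = 5 := by
      apply natDegree_eq_of_degree_eq_some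
      rw [hc, degree_add_eq_left_of_degree_lt (by rw [hsum1deg]; exact ht2), hsum1deg, hgdeg]
      norm_cast
    -- the four interlacing points
    have hσ2 : (0:ℝ) < σ^2 := by positivity
    have hσ4 : (0:ℝ) < σ^4 := by positivity
    have hD2σ : (0:ℝ) ≤ (u2 - u1)^2 * σ^2 := by positivity
    have hmσ4 : (0:ℝ) < (3 + m4) * σ^4 := mul_pos (by linarith) hσ4
    set S : ℝ := Real.sqrt ((u2 - u1)^2 * σ^2 + (3 + m4) * σ^4) with hSdef
    have hS2 : S^2 = (u2 - u1)^2 * σ^2 + (3 + m4) * σ^4 :=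
      Real.sq_sqrt (by linarith)
    have hSpos : 0 < S := Real.sqrt_pos.mpr (by linarith)
    set wp : ℝ := ((u2 - u1)/2)^2 + 3*σ^2 + S with hwpdef
    set wm : ℝ := ((u2 - u1)/2)^2 + 3*σ^2 - S with hwmdef
    have hwm : 0 < wm := by
      have hterm : (0:ℝ) < (6 - m4) * σ^4 := mul_pos (by linarith) hσ4
      have hd4 : (0:ℝ) ≤ ((u2-u1)/2)^2 * ((u2-u1)/2)^2 := by positivity
      have h1 : S^2 < (((u2 - u1)/2)^2 + 3*σ^2)^2 := by nlinarith [hS2, hterm, hd4, hD2σ]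
      have h2 : S < ((u2 - u1)/2)^2 + 3*σ^2 := by nlinarith [hSpos]
      simp only [hwmdef]; linarith
    have hwmp : wm < wp := by simp only [hwmdef, hwpdef]; linarith
    set A : ℝ := Real.sqrt wp with hAdef
    set B : ℝ := Real.sqrt wm with hBdef
    have hA2 : A^2 = wp := Real.sq_sqrt (by linarith)
    have hB2 : B^2 = wm := Real.sq_sqrt hwm.le
    have hBpos : 0 < B := Real.sqrt_pos.mpr hwm
    have hBA : B < A := Real.sqrt_lt_sqrt hwm.le hwmp
    have hApos : 0 < A := lt_trans hBpos hBA
    set μ : ℝ := (u1 + u2)/2 with hμdef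
    -- key quantity: S > (m4 - 3) σ²
    have hkey : (m4 - 3) * σ^2 < S := by
      have hprod : (0:ℝ) < ((m4 - 1) * (6 - m4)) * σ^4 :=
        mul_pos (mul_pos (by linarith) (by linarith)) hσ4
      have h1 : ((m4 - 3) * σ^2)^2 < S^2 := by nlinarith [hS2, hD2σ, hprod]
      nlinarith [hSpos, mul_nonneg (sub_nonneg.mpr hm4) hσ2.le]
    have hm43 : 0 ≤ (m4 - 3) * σ^2 := mul_nonneg (sub_nonneg.mpr hm4) hσ2.le
    -- evaluations
    have hqA : ∀ ε : ℝ, ε^2 = wp → (μ + ε - u1) * (μ + ε - u2) = 3*σ^2 + S := by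
      intro ε hε
      simp only [hμdef, hwpdef] at *
      linear_combination hε
    have hqB : ∀ ε : ℝ, ε^2 = wm → (μ + ε - u1) * (μ + ε - u2) = 3*σ^2 - S := by
      intro ε hε
      simp only [hμdef, hwmdef] at *
      linear_combination hε
    have hPzeroA : ∀ ε : ℝ, ε^2 = wp →
        ((3*σ^2 + S)^2 - σ^2 * (2*(μ+ε) - u1 - u2)^2 - 2*σ^2*(3*σ^2 + S) + (6 - m4)*σ^4) = 0 := by
      intro ε hε
      have h2e : 2*(μ+ε) - u1 - u2 = 2*ε := by simp only [hμdef]; ring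
      rw [h2e]
      simp only [hwpdef] at hε
      linear_combination hS2 - 4*σ^2*hε
    have hPzeroB : ∀ ε : ℝ, ε^2 = wm →
        ((3*σ^2 - S)^2 - σ^2 * (2*(μ+ε) - u1 - u2)^2 - 2*σ^2*(3*σ^2 - S) + (6 - m4)*σ^4) = 0 := by
      intro ε hε
      have h2e : 2*(μ+ε) - u1 - u2 = 2*ε := by simp only [hμdef]; ring
      rw [h2e]
      simp only [hwmdef] at hε
      linear_combination hS2 - 4*σ^2*hε
    have hevalA : ∀ ε : ℝ, ε^2 = wp →
        c.eval (μ + ε) = 4 * ε * σ^2 * (S + (m4 - 3)*σ^2) * (-1) := by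
      intro ε hε
      rw [hEval (μ + ε), hqA ε hε]
      have h2e : 2*(μ+ε) - u1 - u2 = 2*ε := by simp only [hμdef]; ring
      rw [h2e]
      have hP := hPzeroA ε hε
      rw [h2e] at hP
      calc (μ + ε - ut) * ((3*σ^2 + S)^2 - σ^2*(2*ε)^2 - 2*σ^2*(3*σ^2 + S) + (6 - m4)*σ^4)
            - σ^2 * (2*(3*σ^2 + S)*(2*ε) - 2*(6 - m4)*σ^2*(2*ε))
          = (μ + ε - ut) * 0 - σ^2 * (2*(3*σ^2 + S)*(2*ε) - 2*(6 - m4)*σ^2*(2*ε)) := by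
            rw [hP]
        _ = 4 * ε * σ^2 * (S + (m4 - 3)*σ^2) * (-1) := by ring
    have hevalB : ∀ ε : ℝ, ε^2 = wm →
        c.eval (μ + ε) = 4 * ε * σ^2 * (S - (m4 - 3)*σ^2) * (-1) * (-1) := by
      intro ε hε
      rw [hEval (μ + ε), hqB ε hε]
      have h2e : 2*(μ+ε) - u1 - u2 = 2*ε := by simp only [hμdef]; ring
      rw [h2e]
      have hP := hPzeroB ε hε
      rw [h2e] at hP
      calc (μ + ε - ut) * ((3*σ^2 - S)^2 - σ^2*(2*ε)^2 - 2*σ^2*(3*σ^2 - S) + (6 - m4)*σ^4)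
            - σ^2 * (2*(3*σ^2 - S)*(2*ε) - 2*(6 - m4)*σ^2*(2*ε))
          = (μ + ε - ut) * 0 - σ^2 * (2*(3*σ^2 - S)*(2*ε) - 2*(6 - m4)*σ^2*(2*ε)) := by
            rw [hP]
        _ = 4 * ε * σ^2 * (S - (m4 - 3)*σ^2) * (-1) * (-1) := by ring
    -- signs
    have hmA2 : (-A)^2 = wp := by rw [neg_pow]; simp [hA2]
    have hmB2 : (-B)^2 = wm := by rw [neg_pow]; simp [hB2]
    have hfA : (0:ℝ) < A * (σ^2 * (S + (m4 - 3)*σ^2)) :=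
      mul_pos hApos (mul_pos hσ2 (by linarith))
    have hfB : (0:ℝ) < B * (σ^2 * (S - (m4 - 3)*σ^2)) :=
      mul_pos hBpos (mul_pos hσ2 (by linarith))
    have e1 : 0 < c.eval (μ + (-A)) := by
      rw [hevalA (-A) hmA2]; nlinarith [hfA]
    have e2 : c.eval (μ + (-B)) < 0 := by
      rw [hevalB (-B) hmB2]; nlinarith [hfB]
    have e3 : 0 < c.eval (μ + B) := by
      rw [hevalB B hB2]; nlinarith [hfB]
    have e4 : c.eval (μ + A) < 0 := by
      rw [hevalA A hA2]; nlinarith [hfA]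
    exact aux_five_roots c hcM hcdeg (μ + (-A)) (μ + (-B)) (μ + B) (μ + A)
      (by linarith) (by linarith) (by linarith) e1 e2 e3 e4
end

section
/- Let f be a real polynomial of degree N ≥ 1 that has N real roots counting multiplicity, and let m(f) denote the maximum multiplicity among its roots. Then for every real s ≠ 0, the polynomial g_s(u) = f(u) + s f'(u) also has N real roots counting multiplicity, and its maximum root multiplicity satisfies m(g_s) = max{m(f) − 1, 1}. -/
/-!
With `h(x) = exp(x/s) f(x)` one has `h' = (exp(x/s)/s) (f + s f')`, so the real roots of
`g = f + s f'` are the critical points of `h`. A root of `f` of multiplicity `m` is a root of `g`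
of multiplicity exactly `m - 1`, which accounts for `N - k` roots of `g`, where `k` is the number
of distinct roots of `f`. Rolle's theorem gives a further root of `g` strictly between any two
consecutive roots of `f`, and since `h → 0` at `-∞` (if `s > 0`) or at `+∞` (if `s < 0`), one
more beyond the extreme root: `k` new roots in all. As `deg g = N`, these are all the roots of
`g` and the new ones are simple.
-/

open Polynomial Filter Topology Set

theorem exists_lt_deriv_eq_zero_of_tendsto_atBot {h : ℝ → ℝ} (hh : Differentiable ℝ h)
    {a l : ℝ} (hl : Tendsto h atBot (𝓝 l)) (ha : h a = l) : ∃ c < a, deriv h c = 0 := by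
  -- Rolle's theorem for `t ↦ h (a + log t)` on `(0, 1)`.
  have hderiv : ∀ t ∈ Ioo (0 : ℝ) 1,
      HasDerivAt (fun t => h (a + Real.log t)) (deriv h (a + Real.log t) * t⁻¹) t :=
    fun t ht => (hh _).hasDerivAt.comp t ((Real.hasDerivAt_log ht.1.ne').const_add a)
  have hzero : Tendsto (fun t => h (a + Real.log t)) (𝓝[>] 0) (𝓝 l) :=
    hl.comp (tendsto_atBot_add_const_left _ a Real.tendsto_log_nhdsGT_zero)
  have hone : Tendsto (fun t => h (a + Real.log t)) (𝓝[<] 1) (𝓝 l) := by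
    have : ContinuousAt (fun t => h (a + Real.log t)) 1 :=
      ((hh _).hasDerivAt.comp 1 ((Real.hasDerivAt_log one_ne_zero).const_add a)).continuousAt
    simpa [ha] using this.tendsto.mono_left nhdsWithin_le_nhds
  obtain ⟨t, ht, hc⟩ := exists_hasDerivAt_eq_zero' zero_lt_one hzero hone hderiv
  exact ⟨a + Real.log t, by linarith [Real.log_neg ht.1 ht.2],
    (mul_eq_zero.1 hc).resolve_right (inv_ne_zero ht.1.ne')⟩

theorem exists_gt_deriv_eq_zero_of_tendsto_atTop {h : ℝ → ℝ} (hh : Differentiable ℝ h)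
    {a l : ℝ} (hl : Tendsto h atTop (𝓝 l)) (ha : h a = l) : ∃ c > a, deriv h c = 0 := by
  obtain ⟨c, hc, hc0⟩ := exists_lt_deriv_eq_zero_of_tendsto_atBot (h := fun x => h (-x))
    (hh.comp differentiable_neg) (hl.comp tendsto_neg_atBot_atTop) (a := -a) (by simpa)
  exact ⟨-c, by linarith, by simpa [deriv_comp_neg] using hc0⟩

theorem card_le_card_sdiff_of_tendsto {h : ℝ → ℝ} (hh : Differentiable ℝ h) {l : ℝ}
    (hl : Tendsto h atBot (𝓝 l) ∨ Tendsto h atTop (𝓝 l)) {T Z : Finset ℝ}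
    (hT : ∀ x ∈ T, h x = l) (hZ : ∀ c, deriv h c = 0 → c ∈ Z) :
    T.card ≤ (Z \ T).card := by
  rcases T.eq_empty_or_nonempty with rfl | hTne
  · simp
  obtain ⟨c, hc, hcT⟩ :
      ∃ c, deriv h c = 0 ∧ ((∀ x ∈ T, c < x) ∨ (∀ x ∈ T, x < c)) := by
    rcases hl with hl | hl
    · obtain ⟨c, hc, hc0⟩ :=
        exists_lt_deriv_eq_zero_of_tendsto_atBot hh hl (hT _ (T.min'_mem hTne))
      exact ⟨c, hc0, .inl fun x hx => hc.trans_le (T.min'_le x hx)⟩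
    · obtain ⟨c, hc, hc0⟩ :=
        exists_gt_deriv_eq_zero_of_tendsto_atTop hh hl (hT _ (T.max'_mem hTne))
      exact ⟨c, hc0, .inr fun x hx => (T.le_max' x hx).trans_lt hc⟩
  have hcZT : c ∈ Z \ T := Finset.mem_sdiff.2 ⟨hZ c hc, fun hcT' => by
    rcases hcT with h' | h' <;> exact lt_irrefl c (h' c hcT')⟩
  rw [← Finset.card_erase_add_one hcZT]
  refine Finset.card_le_of_interleaved fun x hx y hy hxy hgap => ?_
  obtain ⟨z, hz, hz0⟩ := exists_deriv_eq_zero hxy hh.continuous.continuousOn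
    ((hT x hx).trans (hT y hy).symm)
  have hzc : z ≠ c := by
    rintro rfl
    rcases hcT with h' | h'
    · exact (h' x hx).not_gt hz.1
    · exact (h' y hy).not_gt hz.2
  exact ⟨z, Finset.mem_erase.2 ⟨hzc, Finset.mem_sdiff.2 ⟨hZ z hz0, fun hzT => hgap z hzT hz⟩⟩,
    hz⟩

namespace Multiset

variable {α : Type*} [DecidableEq α]

theorem sup_count_le_sup_toFinset_count (A : Finset α) (M : Multiset α) :
    (A.sup fun r => M.count r) ≤ M.toFinset.sup fun r => M.count r := by
  refine Finset.sup_le fun x _ => ?_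
  by_cases hx : x ∈ M
  · exact Finset.le_sup (f := fun r => M.count r) (mem_toFinset.2 hx)
  · simp [count_eq_zero.2 hx]

-- `M` and `F` stand for the roots of `f + s f'` and of `f`.
variable {M F : Multiset α}

theorem card_eq_and_count_eq_one_of_count_eq_sub_one
    (hcount : ∀ x ∈ F, M.count x = F.count x - 1) (hcard : card M ≤ card F)
    (hnew : F.toFinset.card ≤ (M.toFinset \ F.toFinset).card) :
    card M = card F ∧ ∀ x ∈ M.toFinset \ F.toFinset, M.count x = 1 := by
  set T := F.toFinset
  set S := M.toFinset \ T
  have hM : card M = ∑ x ∈ T, M.count x + ∑ x ∈ S, M.count x := by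
    rw [← Finset.sum_union Finset.disjoint_sdiff, Finset.union_sdiff_self_eq_union,
      sum_count_eq_card]
    exact fun a ha => Finset.mem_union_right _ (mem_toFinset.2 ha)
  have hT : ∑ x ∈ T, M.count x + T.card = card F := by
    rw [Finset.card_eq_sum_ones, ← Finset.sum_add_distrib, ← toFinset_sum_count_eq]
    refine Finset.sum_congr rfl fun x hx => ?_
    have := count_pos.2 (mem_toFinset.1 hx)
    rw [hcount x (mem_toFinset.1 hx)]
    omega
  have hpos : ∀ x ∈ S, 1 ≤ M.count x :=
    fun x hx => count_pos.2 (mem_toFinset.1 (Finset.mem_sdiff.1 hx).1)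
  have hS := Finset.sum_le_sum hpos
  rw [← Finset.card_eq_sum_ones] at hS
  have hsum : ∑ x ∈ S, 1 = ∑ x ∈ S, M.count x := by
    rw [← Finset.card_eq_sum_ones]
    omega
  exact ⟨by omega, fun x hx => ((Finset.sum_eq_sum_iff_of_le hpos).1 hsum x hx).symm⟩

theorem sup_count_eq_max_of_count_eq_sub_one (hF : F ≠ 0)
    (hcount : ∀ x ∈ F, M.count x = F.count x - 1)
    (hnew : F.toFinset.card ≤ (M.toFinset \ F.toFinset).card)
    (hone : ∀ x ∈ M.toFinset \ F.toFinset, M.count x = 1) :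
    (M.toFinset.sup fun r => M.count r) = max ((F.toFinset.sup fun r => F.count r) - 1) 1 := by
  set T := F.toFinset
  set S := M.toFinset \ T
  have hS : S.Nonempty :=
    Finset.card_pos.1 ((Finset.card_pos.2 (toFinset_nonempty.2 hF)).trans_le hnew)
  have hT : (T.sup fun r => M.count r) = (T.sup fun r => F.count r) - 1 := by
    rw [Finset.apply_sup_eq_sup_comp_of_linearOrder (· - 1)
      (fun _ _ h => Nat.sub_le_sub_right h 1) rfl]
    exact Finset.sup_congr rfl fun x hx => hcount x (mem_toFinset.1 hx)
  calc (M.toFinset.sup fun r => M.count r) = (T ∪ M.toFinset).sup fun r => M.count r := by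
        rw [Finset.sup_union, sup_eq_right.2 (sup_count_le_sup_toFinset_count T M)]
    _ = (T.sup fun r => M.count r) ⊔ S.sup fun r => M.count r := by
        rw [← Finset.union_sdiff_self_eq_union, Finset.sup_union]
    _ = max ((T.sup fun r => F.count r) - 1) 1 := by
        rw [hT, Finset.sup_congr rfl hone, Finset.sup_const hS]

end Multiset

namespace Polynomial

theorem rootMultiplicity_add_of_lt {R : Type*} [CommRing R] {p q : R[X]} {a : R} (hq : q ≠ 0)
    (hlt : rootMultiplicity a q < rootMultiplicity a p) :
    rootMultiplicity a (p + q) = rootMultiplicity a q := by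
  set n := rootMultiplicity a q
  have hp : (X - C a) ^ (n + 1) ∣ p := (pow_dvd_pow _ hlt).trans (pow_rootMultiplicity_dvd p a)
  have hpq : ¬(X - C a) ^ (n + 1) ∣ p + q := by
    rw [dvd_add_right hp]
    exact pow_rootMultiplicity_not_dvd hq a
  have hpq0 : p + q ≠ 0 := fun h => hpq (h ▸ dvd_zero _)
  refine le_antisymm ((rootMultiplicity_le_iff hpq0 a n).2 hpq) ?_
  exact (le_rootMultiplicity_iff hpq0).2 <| dvd_add
    ((pow_dvd_pow _ hlt.le).trans (pow_rootMultiplicity_dvd p a)) (pow_rootMultiplicity_dvd q a)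

theorem rootMultiplicity_add_C_mul_derivative {R : Type*} [CommRing R] [IsDomain R] [CharZero R]
    {f : R[X]} {a s : R} (hs : s ≠ 0) (ha : f.IsRoot a) :
    rootMultiplicity a (f + C s * derivative f) = rootMultiplicity a f - 1 := by
  rcases eq_or_ne f 0 with rfl | hf
  · simp
  have hpos := (rootMultiplicity_pos hf).2 ha
  have hf' : derivative f ≠ 0 := by
    rw [Ne, derivative_eq_zero]
    intro h
    rw [eq_C_of_natDegree_eq_zero h] at ha hf
    simp_all
  have hsf' : C s * derivative f ≠ 0 := mul_ne_zero (C_ne_zero.2 hs) hf'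
  have hmult : rootMultiplicity a (C s * derivative f) = rootMultiplicity a f - 1 := by
    rw [rootMultiplicity_mul hsf', rootMultiplicity_C, zero_add,
      derivative_rootMultiplicity_of_root ha]
  rw [rootMultiplicity_add_of_lt hsf' (by omega), hmult]

theorem degree_add_C_mul_derivative {R : Type*} [Semiring R] (f : R[X]) (s : R) :
    (f + C s * derivative f).degree = f.degree := by
  rcases eq_or_ne f 0 with rfl | hf
  · simp
  refine degree_add_eq_left_of_degree_lt ?_
  rw [← smul_eq_C_mul]
  exact (degree_smul_le s _).trans_lt (degree_derivative_lt hf)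

theorem hasDerivAt_exp_div_mul_eval (f : ℝ[X]) {s : ℝ} (hs : s ≠ 0) (x : ℝ) :
    HasDerivAt (fun x => Real.exp (x / s) * f.eval x)
      (Real.exp (x / s) / s * (f + C s * derivative f).eval x) x := by
  refine (((hasDerivAt_id' x).div_const s).exp.mul (f.hasDerivAt x)).congr_deriv ?_
  simp only [eval_add, eval_mul, eval_C]
  field_simp

theorem tendsto_exp_div_mul_eval {l : Filter ℝ} (f : ℝ[X]) {s : ℝ} (hs : s ≠ 0)
    (hl : Tendsto (fun x => x / s) l atBot) :
    Tendsto (fun x => Real.exp (x / s) * f.eval x) l (𝓝 0) := by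
  refine ((f.comp (C (-s) * X)).tendsto_div_exp_atTop.comp
    (tendsto_neg_atBot_atTop.comp hl)).congr fun x => ?_
  simp only [Function.comp_apply, eval_comp, eval_mul, eval_C, eval_X, Real.exp_neg]
  field_simp

theorem card_roots_toFinset_le_card_roots_add_C_mul_derivative_sdiff_roots (f : ℝ[X]) {s : ℝ}
    (hs : s ≠ 0) :
    f.roots.toFinset.card ≤
      ((f + C s * derivative f).roots.toFinset \ f.roots.toFinset).card := by
  rcases eq_or_ne f 0 with rfl | hf
  · simp
  have hg : f + C s * derivative f ≠ 0 := by
    rwa [Ne, ← degree_eq_bot, degree_add_C_mul_derivative, degree_eq_bot]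
  have hlim : Tendsto (fun x => Real.exp (x / s) * f.eval x) atBot (𝓝 0) ∨
      Tendsto (fun x => Real.exp (x / s) * f.eval x) atTop (𝓝 0) := by
    rcases hs.lt_or_gt with hs' | hs'
    · exact .inr <| tendsto_exp_div_mul_eval f hs <|
        (tendsto_div_const_atBot_of_neg hs').2 tendsto_id
    · exact .inl <| tendsto_exp_div_mul_eval f hs <|
        (tendsto_div_const_atBot_of_pos hs').2 tendsto_id
  refine card_le_card_sdiff_of_tendsto
    (fun x => (hasDerivAt_exp_div_mul_eval f hs x).differentiableAt) hlim
    (fun x hx => ?_) (fun c hc => ?_)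
  · simp [(isRoot_of_mem_roots (Multiset.mem_toFinset.1 hx)).eq_zero]
  · rw [(hasDerivAt_exp_div_mul_eval f hs c).deriv] at hc
    exact Multiset.mem_toFinset.2 <| (mem_roots hg).2 <|
      (mul_eq_zero.1 hc).resolve_left (div_ne_zero (Real.exp_ne_zero _) hs)

end Polynomial

/-- If a real polynomial `f` of degree `N ≥ 1` has `N` real roots
counting multiplicity, with maximum root multiplicity `m(f)`, then for every `s ≠ 0`
the polynomial `f + s f'` also has `N` real roots counting multiplicity, and its
maximum root multiplicity equals `max (m(f) − 1) 1`. -/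
theorem real_rooted_plus_scaled_derivative (N : ℕ) (hN : 1 ≤ N)
    (f : Polynomial ℝ) (hdeg : f.natDegree = N)
    (hsplit : f.roots.card = N)
    (s : ℝ) (hs : s ≠ 0) :
    (f + C s * derivative f).roots.card = N ∧
    ((f + C s * derivative f).roots.toFinset.sup
        fun r => (f + C s * derivative f).roots.count r)
      = max ((f.roots.toFinset.sup fun r => f.roots.count r) - 1) 1 := by
  have hF : f.roots ≠ 0 := fun h => by simp [h] at hsplit; omega
  have hcount : ∀ x ∈ f.roots,
      (f + C s * derivative f).roots.count x = f.roots.count x - 1 := fun x hx => by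
    rw [count_roots, count_roots,
      rootMultiplicity_add_C_mul_derivative hs (isRoot_of_mem_roots hx)]
  have hcard : (f + C s * derivative f).roots.card ≤ f.roots.card := by
    refine (card_roots' _).trans ?_
    rw [natDegree_eq_of_degree_eq (degree_add_C_mul_derivative f s), hdeg, hsplit]
  have hnew := card_roots_toFinset_le_card_roots_add_C_mul_derivative_sdiff_roots f hs
  obtain ⟨hcardN, hone⟩ :=
    Multiset.card_eq_and_count_eq_one_of_count_eq_sub_one hcount hcard hnew
  exact ⟨hcardN.trans hsplit, Multiset.sup_count_eq_max_of_count_eq_sub_one hF hcount hnew hone⟩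
end

section
/- Let K be an even normalized kernel with fourth moment m₄, and Δ_j(u,σ) = Σ_{k=0}^{j} C(j,k) m_k σ^k u^{j−k} (so m₀ = m₂ = 1, m₁ = m₃ = 0). Fix ρ > 0, θ > 0, U ∈ ℝ, and consider the equations Σ_{i=1}^{2} wᵢ Δ_j(uᵢ,σ) = ρ·Δ_j^{eq} for j = 0,…,4, where (Δ_0^{eq},…,Δ_4^{eq}) = (1, U, U²+θ, U³+3Uθ, U⁴+6U²θ+3θ²) are the Gaussian moments, over (w₁,u₁,w₂,u₂,σ) with w₁,w₂ > 0, u₁ ≤ u₂, σ > 0. Then: if m₄ < 3 there is no solution; if m₄ = 3 the solutions are exactly those with u₁ = u₂ = U, σ = √θ and w₁ + w₂ = ρ; and if m₄ > 3 there is a unique solution, namely w₁ = w₂ = ρ/2, u_{1,2} = U ∓ νσ, σ = (θ/(ν²+1))^{1/2} with ν = ((m₄−3)/2)^{1/4}. -/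
open MeasureTheory Finset

lemma eqmom_core (m4 ρ θ U w1 u1 w2 u2 σ : ℝ) (hρ : 0 < ρ) (hθ : 0 < θ)
    (hw1 : 0 < w1) (hw2 : 0 < w2) (hle : u1 ≤ u2) (hσ : 0 < σ)
    (e0 : w1 * 1 + w2 * 1 = ρ * 1)
    (e1 : w1 * u1 + w2 * u2 = ρ * U)
    (e2 : w1 * (u1 ^ 2 + σ ^ 2) + w2 * (u2 ^ 2 + σ ^ 2) = ρ * (U ^ 2 + θ))
    (e3 : w1 * (u1 ^ 3 + 3 * σ ^ 2 * u1) + w2 * (u2 ^ 3 + 3 * σ ^ 2 * u2)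
        = ρ * (U ^ 3 + 3 * U * θ))
    (e4 : w1 * (u1 ^ 4 + 6 * σ ^ 2 * u1 ^ 2 + m4 * σ ^ 4)
        + w2 * (u2 ^ 4 + 6 * σ ^ 2 * u2 ^ 2 + m4 * σ ^ 4)
        = ρ * (U ^ 4 + 6 * U ^ 2 * θ + 3 * θ ^ 2)) :
    (u1 = U ∧ u2 = U ∧ σ ^ 2 = θ ∧ m4 = 3) ∨
    (w1 = ρ / 2 ∧ w2 = ρ / 2 ∧ u1 < U ∧ u1 + u2 = 2 * U ∧
      (U - u1) ^ 2 = θ - σ ^ 2 ∧ 2 * θ ^ 2 - 4 * θ * σ ^ 2 + (5 - m4) * σ ^ 4 = 0) := by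
  have p1 : w1 * (u1 - U) + w2 * (u2 - U) = 0 := by linear_combination e1 - U * e0
  have p2 : w1 * (u1 - U) ^ 2 + w2 * (u2 - U) ^ 2 = ρ * (θ - σ ^ 2) := by
    linear_combination e2 - 2 * U * e1 + (U ^ 2 - σ ^ 2) * e0
  have p3 : w1 * (u1 - U) ^ 3 + w2 * (u2 - U) ^ 3 = 0 := by
    linear_combination e3 - 3 * U * e2 + (3 * U ^ 2 - 3 * σ ^ 2) * e1 +
      (3 * U * σ ^ 2 - U ^ 3) * e0
  have p4 : w1 * (u1 - U) ^ 4 + w2 * (u2 - U) ^ 4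
      = ρ * (3 * θ ^ 2 - 6 * σ ^ 2 * (θ - σ ^ 2) - m4 * σ ^ 4) := by
    linear_combination e4 - 4 * U * e3 + (6 * U ^ 2 - 6 * σ ^ 2) * e2 +
      (12 * U * σ ^ 2 - 4 * U ^ 3) * e1 +
      (U ^ 4 - m4 * σ ^ 4 - 6 * U ^ 2 * σ ^ 2 + 6 * σ ^ 4) * e0
  have key : w1 * (u1 - U) * ((u1 - u2) * (u1 + u2 - 2 * U)) = 0 := by
    linear_combination p3 - (u2 - U) ^ 2 * p1
  have huu : (u1 = U ∧ u2 = U) ∨ (u1 + u2 = 2 * U ∧ u1 < U) := by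
    rcases mul_eq_zero.mp key with h | h
    · rcases mul_eq_zero.mp h with h | h
      · exact absurd h hw1.ne'
      · have hu1 : u1 = U := by linarith
        have h2 : w2 * (u2 - U) = 0 := by linear_combination p1 - w1 * h
        rcases mul_eq_zero.mp h2 with h2 | h2
        · exact absurd h2 hw2.ne'
        · exact Or.inl ⟨hu1, by linarith⟩
    · rcases mul_eq_zero.mp h with h | h
      · have h0 : (w1 + w2) * (u1 - U) = 0 := by linear_combination p1 + w2 * h
        rcases mul_eq_zero.mp h0 with h0 | h0
        · exact absurd h0 (by positivity)
        · exact Or.inl ⟨by linarith, by linarith⟩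
      · rcases eq_or_lt_of_le (show u1 ≤ U by linarith) with h' | h'
        · exact Or.inl ⟨h', by linarith⟩
        · exact Or.inr ⟨by linarith, h'⟩
  rcases huu with ⟨h1, h2⟩ | ⟨hs, hlt⟩
  · subst h1 h2
    have hσθ : σ ^ 2 = θ := by
      have h := mul_eq_zero.mp (show ρ * (θ - σ ^ 2) = 0 by linear_combination -p2)
      rcases h with h | h
      · exact absurd h hρ.ne'
      · linarith
    left
    refine ⟨rfl, rfl, hσθ, ?_⟩
    have h4 : ρ * (3 * θ ^ 2 - 6 * σ ^ 2 * (θ - σ ^ 2) - m4 * σ ^ 4) = 0 := by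
      linear_combination -p4
    rcases mul_eq_zero.mp h4 with h | h
    · exact absurd h hρ.ne'
    · have hz : (3 - m4) * θ ^ 2 = 0 := by
        linear_combination h + (m4 * (σ ^ 2 + θ) - 6 * σ ^ 2) * hσθ
      rcases mul_eq_zero.mp hz with h' | h'
      · linarith
      · exact absurd h' (by positivity)
  · have hu2 : u2 = 2 * U - u1 := by linarith
    subst hu2
    have hww : (w1 - w2) * (u1 - U) = 0 := by linear_combination p1
    have hw12 : w1 = w2 := by
      rcases mul_eq_zero.mp hww with h | h
      · linarith
      · exact absurd h (by intro hc; linarith)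
    have hw1v : w1 = ρ / 2 := by linarith
    have hw2v : w2 = ρ / 2 := by linarith
    subst hw1v
    have hd2 : (U - u1) ^ 2 = θ - σ ^ 2 := by
      refine mul_left_cancel₀ hρ.ne' ?_
      linear_combination p2 - (U - u1) ^ 2 * hw2v
    have hd4 : (U - u1) ^ 4
        = 3 * θ ^ 2 - 6 * σ ^ 2 * (θ - σ ^ 2) - m4 * σ ^ 4 := by
      refine mul_left_cancel₀ hρ.ne' ?_
      linear_combination p4 - (U - u1) ^ 4 * hw2v
    right
    refine ⟨rfl, hw2v, hlt, by ring, hd2, ?_⟩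
    linear_combination -hd4 + ((U - u1) ^ 2 + (θ - σ ^ 2)) * hd2

lemma eqmom_nu (m4 θ U u1 σ ν : ℝ) (hθ : 0 < θ) (hσ : 0 < σ) (hνpos : 0 < ν)
    (hν4 : ν ^ 4 = (m4 - 3) / 2) (hlt : u1 < U)
    (hD2 : (U - u1) ^ 2 = θ - σ ^ 2)
    (hq : 2 * θ ^ 2 - 4 * θ * σ ^ 2 + (5 - m4) * σ ^ 4 = 0) :
    σ = Real.sqrt (θ / (ν ^ 2 + 1)) ∧ u1 = U - ν * σ := by
  have hν21 : (0 : ℝ) < ν ^ 2 + 1 := by positivity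
  have hθσ : 0 < θ - σ ^ 2 := by
    have h2p : 0 < (U - u1) ^ 2 := pow_pos (by linarith) 2
    rw [hD2] at h2p
    exact h2p
  have hfac : (θ - σ ^ 2 - ν ^ 2 * σ ^ 2) * (θ - σ ^ 2 + ν ^ 2 * σ ^ 2) = 0 := by
    linear_combination (1 / 2) * hq - σ ^ 4 * hν4
  have hfac1 : θ - σ ^ 2 - ν ^ 2 * σ ^ 2 = 0 := by
    rcases mul_eq_zero.mp hfac with h | h
    · exact h
    · exfalso
      have hnn : 0 ≤ ν ^ 2 * σ ^ 2 := by positivity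
      linarith
  have hσ2v : σ ^ 2 = θ / (ν ^ 2 + 1) := by
    rw [eq_div_iff hν21.ne']
    linarith [hfac1]
  have hσv : σ = Real.sqrt (θ / (ν ^ 2 + 1)) := by
    rw [← hσ2v, Real.sqrt_sq hσ.le]
  have hu1fac : (U - u1 - ν * σ) * (U - u1 + ν * σ) = 0 := by
    linear_combination hD2 + hfac1
  have hu1 : u1 = U - ν * σ := by
    rcases mul_eq_zero.mp hu1fac with h | h
    · linarith
    · exfalso
      have hp : 0 < ν * σ := mul_pos hνpos hσ
      linarith
  exact ⟨hσv, hu1⟩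

/-- (Equilibrium manifold of the two-node EQMOM.) For an even
normalized kernel with fourth moment `m₄`, the equations
`Σ_{i=1}^{2} wᵢ Δⱼ(uᵢ,σ) = ρ Δⱼ^{eq}` (`j = 0,…,4`) over
`w₁,w₂ > 0`, `u₁ ≤ u₂`, `σ > 0` have: no solution if `m₄ < 3`; exactly the
solutions `u₁ = u₂ = U`, `σ = √θ`, `w₁ + w₂ = ρ` if `m₄ = 3`; and the unique
solution `w₁ = w₂ = ρ/2`, `u_{1,2} = U ∓ νσ`, `σ = (θ/(ν²+1))^{1/2}`,
`ν = ((m₄−3)/2)^{1/4}` if `m₄ > 3`. -/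
theorem two_node_eqmom_equilibrium
    (K : ℝ → ℝ) (hKmeas : Measurable K) (hKnonneg : ∀ ξ, 0 ≤ K ξ)
    (hKint : ∀ j : ℕ, Integrable (fun ξ => |ξ| ^ j * K ξ))
    (hKeven : ∀ ξ, K (-ξ) = K ξ)
    (m : ℕ → ℝ) (hm : ∀ j, m j = ∫ ξ, ξ ^ j * K ξ)
    (hm0 : m 0 = 1) (hm1 : m 1 = 0) (hm2 : m 2 = 1)
    (Δ : ℕ → ℝ → ℝ → ℝ)
    (hΔ : ∀ j u σ, Δ j u σ =
      ∑ k ∈ Finset.range (j + 1), (j.choose k : ℝ) * m k * σ ^ k * u ^ (j - k))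
    (ρ θ U : ℝ) (hρ : 0 < ρ) (hθ : 0 < θ)
    (Deq : ℕ → ℝ) (hDeq0 : Deq 0 = 1) (hDeq1 : Deq 1 = U)
    (hDeq2 : Deq 2 = U ^ 2 + θ) (hDeq3 : Deq 3 = U ^ 3 + 3 * U * θ)
    (hDeq4 : Deq 4 = U ^ 4 + 6 * U ^ 2 * θ + 3 * θ ^ 2)
    (ν : ℝ) (hν : ν = ((m 4 - 3) / 2) ^ ((1 : ℝ) / 4)) :
    (m 4 < 3 →
      ¬∃ w₁ u₁ w₂ u₂ σ : ℝ, 0 < w₁ ∧ 0 < w₂ ∧ u₁ ≤ u₂ ∧ 0 < σ ∧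
        ∀ j ≤ 4, w₁ * Δ j u₁ σ + w₂ * Δ j u₂ σ = ρ * Deq j) ∧
    (m 4 = 3 →
      ∀ w₁ u₁ w₂ u₂ σ : ℝ, 0 < w₁ → 0 < w₂ → u₁ ≤ u₂ → 0 < σ →
        ((∀ j ≤ 4, w₁ * Δ j u₁ σ + w₂ * Δ j u₂ σ = ρ * Deq j) ↔
          (u₁ = U ∧ u₂ = U ∧ σ = Real.sqrt θ ∧ w₁ + w₂ = ρ))) ∧
    (3 < m 4 →
      ∀ w₁ u₁ w₂ u₂ σ : ℝ,
        ((0 < w₁ ∧ 0 < w₂ ∧ u₁ ≤ u₂ ∧ 0 < σ ∧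
          ∀ j ≤ 4, w₁ * Δ j u₁ σ + w₂ * Δ j u₂ σ = ρ * Deq j) ↔
          (w₁ = ρ / 2 ∧ w₂ = ρ / 2 ∧ σ = Real.sqrt (θ / (ν ^ 2 + 1)) ∧
            u₁ = U - ν * σ ∧ u₂ = U + ν * σ))) := by
  -- third moment vanishes by evenness
  have hm3 : m 3 = 0 := by
    rw [hm 3]
    have hint : Integrable (fun ξ => ξ ^ 3 * K ξ) := by
      refine (hKint 3).mono' ?_ ?_
      · exact ((measurable_id.pow_const 3).mul hKmeas).aestronglyMeasurable
      · filter_upwards with ξ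
        rw [Real.norm_eq_abs, abs_mul, abs_of_nonneg (hKnonneg ξ), abs_pow]
    have h1 : (∫ ξ, (fun ξ => ξ ^ 3 * K ξ) (-ξ)) = ∫ ξ, ξ ^ 3 * K ξ :=
      integral_neg_eq_self (fun ξ => ξ ^ 3 * K ξ) volume
    have h2 : (∫ ξ, (fun ξ => ξ ^ 3 * K ξ) (-ξ)) = -∫ ξ, ξ ^ 3 * K ξ := by
      rw [← integral_neg]
      congr 1
      funext ξ
      simp [hKeven ξ]
      ring
    linarith [h1.symm.trans h2]
  -- explicit low-order Δ's
  have hdgen : ∀ j : ℕ, ∀ u σ : ℝ, Δ j u σ =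
      ∑ k ∈ Finset.range (j + 1), (j.choose k : ℝ) * m k * σ ^ k * u ^ (j - k) := hΔ
  have hd0 : ∀ u σ : ℝ, Δ 0 u σ = 1 := by
    intro u σ; rw [hΔ]
    simp only [Finset.sum_range_succ, Finset.sum_range_zero, hm0]
    norm_num
  have hd1 : ∀ u σ : ℝ, Δ 1 u σ = u := by
    intro u σ; rw [hΔ]
    simp only [Finset.sum_range_succ, Finset.sum_range_zero, hm0, hm1]
    norm_num
  have hd2 : ∀ u σ : ℝ, Δ 2 u σ = u ^ 2 + σ ^ 2 := by
    intro u σ; rw [hΔ]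
    simp only [Finset.sum_range_succ, Finset.sum_range_zero, hm0, hm1, hm2]
    norm_num [Nat.choose]
  have hd3 : ∀ u σ : ℝ, Δ 3 u σ = u ^ 3 + 3 * σ ^ 2 * u := by
    intro u σ; rw [hΔ]
    simp only [Finset.sum_range_succ, Finset.sum_range_zero, hm0, hm1, hm2, hm3]
    norm_num [Nat.choose]
  have hd4 : ∀ u σ : ℝ, Δ 4 u σ = u ^ 4 + 6 * σ ^ 2 * u ^ 2 + m 4 * σ ^ 4 := by
    intro u σ; rw [hΔ]
    simp only [Finset.sum_range_succ, Finset.sum_range_zero, hm0, hm1, hm2, hm3]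
    norm_num [Nat.choose]
  -- extraction of the five equations
  have hE : ∀ w1 u1 w2 u2 σ : ℝ,
      (∀ j ≤ 4, w1 * Δ j u1 σ + w2 * Δ j u2 σ = ρ * Deq j) →
      (w1 * 1 + w2 * 1 = ρ * 1) ∧
      (w1 * u1 + w2 * u2 = ρ * U) ∧
      (w1 * (u1 ^ 2 + σ ^ 2) + w2 * (u2 ^ 2 + σ ^ 2) = ρ * (U ^ 2 + θ)) ∧
      (w1 * (u1 ^ 3 + 3 * σ ^ 2 * u1) + w2 * (u2 ^ 3 + 3 * σ ^ 2 * u2)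
        = ρ * (U ^ 3 + 3 * U * θ)) ∧
      (w1 * (u1 ^ 4 + 6 * σ ^ 2 * u1 ^ 2 + m 4 * σ ^ 4)
        + w2 * (u2 ^ 4 + 6 * σ ^ 2 * u2 ^ 2 + m 4 * σ ^ 4)
        = ρ * (U ^ 4 + 6 * U ^ 2 * θ + 3 * θ ^ 2)) := by
    intro w1 u1 w2 u2 σ hsys
    have E0 := hsys 0 (by norm_num)
    have E1 := hsys 1 (by norm_num)
    have E2 := hsys 2 (by norm_num)
    have E3 := hsys 3 (by norm_num)
    have E4 := hsys 4 (by norm_num)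
    simp only [hd0, hDeq0] at E0
    simp only [hd1, hDeq1] at E1
    simp only [hd2, hDeq2] at E2
    simp only [hd3, hDeq3] at E3
    simp only [hd4, hDeq4] at E4
    exact ⟨E0, E1, E2, E3, E4⟩
  refine ⟨?_, ?_, ?_⟩
  · -- m₄ < 3 : no solution
    rintro hlt ⟨w1, u1, w2, u2, σ, hw1, hw2, hle, hσ, hsys⟩
    obtain ⟨E0, E1, E2, E3, E4⟩ := hE w1 u1 w2 u2 σ hsys
    rcases eqmom_core (m 4) ρ θ U w1 u1 w2 u2 σ hρ hθ hw1 hw2 hle hσ E0 E1 E2 E3 E4 with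
      ⟨-, -, -, hm4⟩ | ⟨-, -, -, -, -, hq⟩
    · linarith
    · nlinarith [sq_nonneg (θ - σ ^ 2), pow_pos hσ 4]
  · -- m₄ = 3
    intro hm43 w1 u1 w2 u2 σ hw1 hw2 hle hσ
    constructor
    · intro hsys
      obtain ⟨E0, E1, E2, E3, E4⟩ := hE w1 u1 w2 u2 σ hsys
      rcases eqmom_core (m 4) ρ θ U w1 u1 w2 u2 σ hρ hθ hw1 hw2 hle hσ E0 E1 E2 E3 E4 with
        ⟨h1, h2, hσθ, -⟩ | ⟨-, -, hlt, -, hD2, hq⟩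
      · exact ⟨h1, h2, by rw [← hσθ, Real.sqrt_sq hσ.le], by linarith⟩
      · exfalso
        have hz : (θ - σ ^ 2) ^ 2 = 0 := by
          linear_combination (1 / 2) * hq + (σ ^ 4 / 2) * hm43
        have hz' : θ - σ ^ 2 = 0 := by
          have := pow_eq_zero_iff (n := 2) (by norm_num) |>.mp hz
          exact this
        have : (U - u1) ^ 2 = 0 := by rw [hD2, hz']
        have : U - u1 = 0 := pow_eq_zero_iff (n := 2) (by norm_num) |>.mp this
        linarith
    · rintro ⟨h1, h2, h3, h4⟩
      have s2 : (Real.sqrt θ) ^ 2 = θ := Real.sq_sqrt hθ.le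
      intro j hj
      interval_cases j <;> simp only [h1, h2, h3]
      · simp only [hd0, hDeq0]; linear_combination h4
      · simp only [hd1, hDeq1]; linear_combination U * h4
      · simp only [hd2, hDeq2]
        linear_combination (U ^ 2 + θ) * h4 + (w1 + w2) * s2
      · simp only [hd3, hDeq3]
        linear_combination (U ^ 3 + 3 * U * θ) * h4 + 3 * U * (w1 + w2) * s2
      · simp only [hd4, hDeq4]
        linear_combination (U ^ 4 + 6 * U ^ 2 * θ + 3 * θ ^ 2) * h4 +
          (w1 + w2) * (6 * U ^ 2 + 3 * (Real.sqrt θ) ^ 2 + 3 * θ) * s2 +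
          (w1 + w2) * ((Real.sqrt θ) ^ 2) ^ 2 * hm43
  · -- 3 < m₄
    intro hgt w1 u1 w2 u2 σ
    have hx : (0 : ℝ) < (m 4 - 3) / 2 := by linarith
    have hν4 : ν ^ 4 = (m 4 - 3) / 2 := by
      rw [hν, ← Real.rpow_natCast (((m 4 - 3) / 2) ^ ((1 : ℝ) / 4)) 4,
        ← Real.rpow_mul hx.le]
      norm_num
    have hνpos : 0 < ν := hν ▸ Real.rpow_pos_of_pos hx _
    have hm4v : m 4 = 2 * ν ^ 4 + 3 := by linarith
    have hν21 : (0 : ℝ) < ν ^ 2 + 1 := by positivity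
    constructor
    · rintro ⟨hw1, hw2, hle, hσ, hsys⟩
      obtain ⟨E0, E1, E2, E3, E4⟩ := hE w1 u1 w2 u2 σ hsys
      rcases eqmom_core (m 4) ρ θ U w1 u1 w2 u2 σ hρ hθ hw1 hw2 hle hσ E0 E1 E2 E3 E4 with
        ⟨-, -, -, hm4⟩ | ⟨hw1v, hw2v, hlt, hs, hD2, hq⟩
      · linarith
      · obtain ⟨hσv, hu1⟩ := eqmom_nu (m 4) θ U u1 σ ν hθ hσ hνpos hν4 hlt hD2 hq
        exact ⟨hw1v, hw2v, hσv, hu1, by linarith⟩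
    · rintro ⟨h1, h2, h3, h4, h5⟩
      subst h1 h2 h3 h4 h5
      have hpos : (0 : ℝ) < θ / (ν ^ 2 + 1) := by positivity
      have hσ : 0 < Real.sqrt (θ / (ν ^ 2 + 1)) := Real.sqrt_pos.mpr hpos
      have hkey : (ν ^ 2 + 1) * (Real.sqrt (θ / (ν ^ 2 + 1))) ^ 2 = θ := by
        rw [Real.sq_sqrt hpos.le]
        field_simp
      have hνσ : 0 < ν * Real.sqrt (θ / (ν ^ 2 + 1)) := mul_pos hνpos hσ
      refine ⟨by positivity, by positivity, by linarith, hσ, ?_⟩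
      intro j hj
      interval_cases j
      · simp only [hd0, hDeq0]; ring
      · simp only [hd1, hDeq1]; ring
      · simp only [hd2, hDeq2]; linear_combination ρ * hkey
      · simp only [hd3, hDeq3]; linear_combination 3 * ρ * U * hkey
      · simp only [hd4, hDeq4]
        linear_combination (6 * ρ * U ^ 2 +
            3 * ρ * ((ν ^ 2 + 1) * (Real.sqrt (θ / (ν ^ 2 + 1))) ^ 2 + θ)) * hkey +
          ρ * (Real.sqrt (θ / (ν ^ 2 + 1))) ^ 4 * hm4v
end

section
/- Let (m_k)_{k≥0} be a real sequence with m₀ = 1, (b_k) its associated b-sequence, Δ_j(u,σ) = Σ_{k=0}^{j} C(j,k) m_k σ^k u^{j−k}, and M*_j(σ) = Σ_{k=0}^{j} b_k σ^k (j!/(j−k)!) M_{j−k}. If M_j = Σ_{i=1}^{n} wᵢ Δ_j(uᵢ,σ) for j = 0,…,2n, for some reals w₁,…,w_n, u₁,…,u_n and σ, then M*_j(σ) = Σ_{i=1}^{n} wᵢ uᵢ^j for every j = 0,…,2n. -/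
open Finset

/-- Triangle sum reindexing: summing over `k ≤ n`, `l ≤ n - k` equals summing over
the total degree `s ≤ n` and `k ≤ s` with `l = s - k`. -/
lemma sum_triangle' (f : ℕ → ℕ → ℝ) (n : ℕ) :
    ∑ k ∈ Finset.range (n + 1), ∑ l ∈ Finset.range (n + 1 - k), f k l =
      ∑ s ∈ Finset.range (n + 1), ∑ k ∈ Finset.range (s + 1), f k (s - k) := by
  rw [Finset.sum_sigma', Finset.sum_sigma']
  refine Finset.sum_nbij' (fun p => ⟨p.1 + p.2, p.1⟩) (fun q => ⟨q.2, q.1 - q.2⟩) ?_ ?_ ?_ ?_ ?_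
  · rintro ⟨k, l⟩ hp
    simp only [Finset.mem_sigma, Finset.mem_range] at hp
    dsimp only
    simp only [Finset.mem_sigma, Finset.mem_range]
    omega
  · rintro ⟨s, k⟩ hq
    simp only [Finset.mem_sigma, Finset.mem_range] at hq
    dsimp only
    simp only [Finset.mem_sigma, Finset.mem_range]
    omega
  · rintro ⟨k, l⟩ hp
    simp only [Finset.mem_sigma, Finset.mem_range] at hp
    dsimp only
    simp only [Sigma.mk.inj_iff, heq_eq_eq]
    exact ⟨trivial, by omega⟩
  · rintro ⟨s, k⟩ hq
    simp only [Finset.mem_sigma, Finset.mem_range] at hq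
    dsimp only
    simp only [Sigma.mk.inj_iff, heq_eq_eq]
    exact ⟨by omega, trivial⟩
  · rintro ⟨k, l⟩ hp
    simp

/-- The defining convolution identity for the `b`-sequence. -/
lemma b_conv (m b : ℕ → ℝ) (hm0 : m 0 = 1) (hb0 : b 0 = 1)
    (hb : ∀ k, 1 ≤ k → b k = -∑ l ∈ Finset.Icc 1 k, m l / (l.factorial : ℝ) * b (k - l))
    (s : ℕ) :
    ∑ k ∈ Finset.range (s + 1), b k * (m (s - k) / ((s - k).factorial : ℝ)) =
      if s = 0 then 1 else 0 := by
  rcases Nat.eq_zero_or_pos s with rfl | hs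
  · simp [hb0, hm0]
  · rw [if_neg (by omega)]
    rw [Finset.sum_range_succ]
    have h1 : ∑ k ∈ Finset.range s, b k * (m (s - k) / ((s - k).factorial : ℝ)) =
        ∑ l ∈ Finset.Icc 1 s, m l / (l.factorial : ℝ) * b (s - l) := by
      refine Finset.sum_nbij' (fun k => s - k) (fun l => s - l) ?_ ?_ ?_ ?_ ?_
      · intro k hk; simp only [Finset.mem_range] at hk; simp only [Finset.mem_Icc]; omega
      · intro l hl; simp only [Finset.mem_Icc] at hl; simp only [Finset.mem_range]; omega
      · intro k hk; simp only [Finset.mem_range] at hk; omega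
      · intro l hl; simp only [Finset.mem_Icc] at hl; omega
      · intro k hk; simp only [Finset.mem_range] at hk
        have : s - (s - k) = k := by omega
        rw [this]; ring
    rw [h1, Nat.sub_self, hm0, hb s hs]
    simp

/-- Cast of a descending factorial as a quotient of factorials. -/
lemma descFactorial_cast_eq (j k : ℕ) (h : k ≤ j) :
    (j.descFactorial k : ℝ) = (j.factorial : ℝ) / ((j - k).factorial : ℝ) := by
  have := Nat.factorial_mul_descFactorial h
  have h2 : ((j - k).factorial : ℝ) * (j.descFactorial k : ℝ) = (j.factorial : ℝ) := by
    exact_mod_cast congrArg (Nat.cast : ℕ → ℝ) this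
  field_simp at h2 ⊢
  linarith

/-- Key coefficient identity: `(j)_k · C(j−k, s−k) = (j)_s / (s−k)!` for `k ≤ s ≤ j`. -/
lemma coeff_identity (j s k : ℕ) (hks : k ≤ s) (_hsj : s ≤ j) :
    (j.descFactorial k : ℝ) * ((j - k).choose (s - k) : ℝ) =
      (j.descFactorial s : ℝ) / (((s - k).factorial : ℝ)) := by
  have hnat : j.descFactorial k * ((s - k).factorial * (j - k).choose (s - k)) =
      j.descFactorial s := by
    rw [← Nat.descFactorial_eq_factorial_mul_choose]
    rw [mul_comm]
    exact Nat.descFactorial_mul_descFactorial hks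
  have h2 : (j.descFactorial k : ℝ) * (((s - k).factorial : ℝ) * ((j - k).choose (s - k) : ℝ)) =
      (j.descFactorial s : ℝ) := by exact_mod_cast congrArg (Nat.cast : ℕ → ℝ) hnat
  have hfac : ((s - k).factorial : ℝ) ≠ 0 := by positivity
  field_simp
  linarith

/-- If `M_j = Σᵢ wᵢ Δ_j(uᵢ,σ)` for `j = 0,…,2n`, where
`Δ_j(u,σ) = Σ_{k≤j} C(j,k) m_k σ^k u^{j−k}`, then the auxiliary moments satisfy
`M*ⱼ(σ) = Σᵢ wᵢ uᵢʲ` for every `j = 0,…,2n`. -/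
theorem auxiliary_moments_eq_power_sums (m : ℕ → ℝ) (hm0 : m 0 = 1)
    (b : ℕ → ℝ) (hb0 : b 0 = 1)
    (hb : ∀ k, 1 ≤ k → b k = -∑ l ∈ Finset.Icc 1 k, m l / (l.factorial : ℝ) * b (k - l))
    (Δ : ℕ → ℝ → ℝ → ℝ)
    (hΔ : ∀ k u σ, Δ k u σ =
      ∑ l ∈ Finset.range (k + 1), (k.choose l : ℝ) * m l * σ ^ l * u ^ (k - l))
    (n : ℕ) (w u : Fin n → ℝ) (σ : ℝ) (M : ℕ → ℝ)
    (hM : ∀ j ≤ 2 * n, M j = ∑ i, w i * Δ j (u i) σ)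
    (Mstar : ℕ → ℝ)
    (hMstar : ∀ j, Mstar j =
      ∑ k ∈ Finset.range (j + 1), b k * σ ^ k * (j.descFactorial k : ℝ) * M (j - k)) :
    ∀ j ≤ 2 * n, Mstar j = ∑ i, w i * u i ^ j := by
  intro j hj
  -- key per-point identity
  have key : ∀ v : ℝ,
      ∑ k ∈ Finset.range (j + 1), b k * σ ^ k * (j.descFactorial k : ℝ) * Δ (j - k) v σ =
        v ^ j := by
    intro v
    have step1 : ∀ k ∈ Finset.range (j + 1),
        b k * σ ^ k * (j.descFactorial k : ℝ) * Δ (j - k) v σ =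
        ∑ l ∈ Finset.range (j + 1 - k),
          b k * σ ^ k * (j.descFactorial k : ℝ) *
            (((j - k).choose l : ℝ) * m l * σ ^ l * v ^ (j - k - l)) := by
      intro k hk
      simp only [Finset.mem_range] at hk
      rw [hΔ, Finset.mul_sum]
      have : j - k + 1 = j + 1 - k := by omega
      rw [this]
    rw [Finset.sum_congr rfl step1]
    rw [sum_triangle' (fun k l => b k * σ ^ k * (j.descFactorial k : ℝ) *
      (((j - k).choose l : ℝ) * m l * σ ^ l * v ^ (j - k - l))) j]
    have step2 : ∀ s ∈ Finset.range (j + 1),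
        ∑ k ∈ Finset.range (s + 1), b k * σ ^ k * (j.descFactorial k : ℝ) *
            (((j - k).choose (s - k) : ℝ) * m (s - k) * σ ^ (s - k) * v ^ (j - k - (s - k))) =
        (if s = 0 then 1 else 0) * ((j.descFactorial s : ℝ) * σ ^ s * v ^ (j - s)) := by
      intro s hs
      simp only [Finset.mem_range] at hs
      have hsj : s ≤ j := by omega
      have term : ∀ k ∈ Finset.range (s + 1),
          b k * σ ^ k * (j.descFactorial k : ℝ) *
            (((j - k).choose (s - k) : ℝ) * m (s - k) * σ ^ (s - k) * v ^ (j - k - (s - k))) =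
          (b k * (m (s - k) / ((s - k).factorial : ℝ))) *
            ((j.descFactorial s : ℝ) * σ ^ s * v ^ (j - s)) := by
        intro k hk
        simp only [Finset.mem_range] at hk
        have hks : k ≤ s := by omega
        have hpow : σ ^ k * σ ^ (s - k) = σ ^ s := by
          rw [← pow_add]; congr 1; omega
        have hv : j - k - (s - k) = j - s := by omega
        rw [hv]
        have hc := coeff_identity j s k hks hsj
        calc b k * σ ^ k * (j.descFactorial k : ℝ) *
              (((j - k).choose (s - k) : ℝ) * m (s - k) * σ ^ (s - k) * v ^ (j - s))
            = ((j.descFactorial k : ℝ) * ((j - k).choose (s - k) : ℝ)) *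
              (b k * m (s - k) * (σ ^ k * σ ^ (s - k)) * v ^ (j - s)) := by ring
          _ = ((j.descFactorial s : ℝ) / ((s - k).factorial : ℝ)) *
              (b k * m (s - k) * σ ^ s * v ^ (j - s)) := by rw [hc, hpow]
          _ = b k * (m (s - k) / ((s - k).factorial : ℝ)) *
              ((j.descFactorial s : ℝ) * σ ^ s * v ^ (j - s)) := by ring
      rw [Finset.sum_congr rfl term, ← Finset.sum_mul,
        b_conv m b hm0 hb0 hb s]
    rw [Finset.sum_congr rfl step2]
    rw [Finset.sum_eq_single 0 (fun x _ hx => by rw [if_neg hx, zero_mul])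
      (fun h => absurd (by simp) h)]
    simp
  -- assemble
  rw [hMstar]
  have hMk : ∀ k ∈ Finset.range (j + 1),
      b k * σ ^ k * (j.descFactorial k : ℝ) * M (j - k) =
      ∑ i, w i * (b k * σ ^ k * (j.descFactorial k : ℝ) * Δ (j - k) (u i) σ) := by
    intro k hk
    rw [hM (j - k) (by omega), Finset.mul_sum]
    exact Finset.sum_congr rfl fun i _ => by ring
  rw [Finset.sum_congr rfl hMk, Finset.sum_comm]
  refine Finset.sum_congr rfl fun i _ => ?_
  rw [← Finset.mul_sum, key (u i)]
end

section
/- Let (m_k)_{k≥0} be a real sequence with m₀ = 1, (b_k) its associated b-sequence, and Δ_j(u,σ) = Σ_{k=0}^{j} C(j,k) m_k σ^k u^{j−k}, regarded as a polynomial in u. Then for every j ≥ 0, σ ∈ ℝ and u ∈ ℝ, u^j = Σ_{k=0}^{j} b_k σ^k (∂/∂u)^k Δ_j(u,σ); equivalently, u^j = Σ_{k=0}^{j} b_k σ^k (j!/(j−k)!) Δ_{j−k}(u,σ). -/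
open Finset Polynomial

lemma tri (N : ℕ) (f : ℕ → ℕ → ℝ) :
    ∑ k ∈ range N, ∑ l ∈ range (N - k), f k l
      = ∑ n ∈ range N, ∑ k ∈ range (n + 1), f k (n - k) := by
  induction N with
  | zero => simp
  | succ N ih =>
    have h1 : ∀ k ∈ range (N + 1), ∑ l ∈ range (N + 1 - k), f k l
        = (∑ l ∈ range (N - k), f k l) + f k (N - k) := by
      intro k hk
      rw [mem_range, Nat.lt_succ_iff] at hk
      rw [show N + 1 - k = (N - k) + 1 by omega, sum_range_succ]
    rw [sum_congr rfl h1, sum_add_distrib, sum_range_succ (fun k => ∑ l ∈ range (N - k), f k l)]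
    simp only [Nat.sub_self, range_zero, sum_empty, add_zero]
    rw [ih, sum_range_succ (fun n => ∑ k ∈ range (n + 1), f k (n - k))]

lemma descFac_comp (j k d : ℕ) :
    j.descFactorial k * (j - k).descFactorial d = j.descFactorial (k + d) := by
  induction d with
  | zero => simp
  | succ d ih =>
    rw [Nat.descFactorial_succ, show k + (d+1) = (k+d)+1 by omega, Nat.descFactorial_succ,
      ← ih, show j - k - d = j - (k + d) by omega]
    ring

/-- With `b` the b-sequence of `(m_k)` (`m₀ = 1`) and
`Δ_j(u,σ) = Σ_{k≤j} C(j,k) m_k σ^k u^{j−k}` regarded as a polynomial in `u`, one has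
`u^j = Σ_{k≤j} b_k σ^k (∂/∂u)^k Δ_j(u,σ)`, and equivalently
`u^j = Σ_{k≤j} b_k σ^k (j!/(j−k)!) Δ_{j−k}(u,σ)`. -/
theorem monomial_from_delta_derivatives (m : ℕ → ℝ) (hm0 : m 0 = 1)
    (b : ℕ → ℝ) (hb0 : b 0 = 1)
    (hb : ∀ k, 1 ≤ k → b k = -∑ l ∈ Finset.Icc 1 k, m l / (l.factorial : ℝ) * b (k - l))
    (σ : ℝ) (Δ : ℕ → Polynomial ℝ)
    (hΔ : ∀ k, Δ k =
      ∑ l ∈ Finset.range (k + 1), C ((k.choose l : ℝ) * m l * σ ^ l) * X ^ (k - l))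
    (u : ℝ) (j : ℕ) :
    u ^ j = ∑ k ∈ Finset.range (j + 1), b k * σ ^ k * (derivative^[k] (Δ j)).eval u ∧
    u ^ j = ∑ k ∈ Finset.range (j + 1),
      b k * σ ^ k * (j.descFactorial k : ℝ) * (Δ (j - k)).eval u := by
  -- the full convolution sum vanishes for n ≥ 1
  have hS : ∀ n, 1 ≤ n → ∑ l ∈ range (n+1), m l / (l.factorial : ℝ) * b (n-l) = 0 := by
    intro n hn
    have hset : range (n+1) = insert 0 (Finset.Icc 1 n) := by
      ext x; simp [Nat.lt_succ_iff]; omega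
    rw [hset, sum_insert (by simp)]
    simp only [Nat.factorial_zero, Nat.cast_one, div_one, hm0, Nat.sub_zero, one_mul]
    rw [hb n hn]; ring
  -- evaluation of Δ
  have heval : ∀ i, (Δ i).eval u
      = ∑ l ∈ range (i+1), (i.choose l : ℝ) * m l * σ ^ l * u ^ (i - l) := by
    intro i; rw [hΔ i]; simp [eval_finset_sum]
  -- derivative of Δ
  have hder : ∀ n, derivative (Δ (n+1)) = (((n+1 : ℕ) : ℝ)) • Δ n := by
    intro n
    rw [hΔ (n+1), hΔ n, derivative_sum, sum_range_succ]
    have hz : derivative (C (((n+1).choose (n+1) : ℝ) * m (n+1) * σ ^ (n+1))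
        * X ^ (n + 1 - (n+1))) = 0 := by
      rw [Nat.sub_self, pow_zero, mul_one, derivative_C]
    rw [hz, add_zero, smul_sum]
    refine sum_congr rfl fun l hl => ?_
    rw [mem_range, Nat.lt_succ_iff] at hl
    have he : n + 1 - l - 1 = n - l := by omega
    have hnat : (n+1).choose l * (n+1-l) = (n+1) * n.choose l := by
      rw [← Nat.choose_mul_succ_eq]; ring
    have hnum : (((n+1).choose l : ℝ)) * ((n + 1 - l : ℕ) : ℝ)
        = ((n+1 : ℕ) : ℝ) * ((n.choose l : ℝ)) := by exact_mod_cast hnat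
    rw [derivative_C_mul, derivative_X_pow, he, smul_eq_C_mul,
      ← mul_assoc, ← mul_assoc, ← C_mul, ← C_mul]
    congr 2
    linear_combination (m l * σ ^ l) * hnum
  -- iterated derivative
  have hiter : ∀ k, k ≤ j → derivative^[k] (Δ j) = ((j.descFactorial k : ℕ) : ℝ) • Δ (j - k) := by
    intro k hk
    induction k with
    | zero => simp
    | succ k ih =>
      have hk' : k ≤ j := by omega
      obtain ⟨d, hd⟩ : ∃ d, j - k = d + 1 := ⟨j - k - 1, by omega⟩
      rw [Function.iterate_succ_apply', ih hk', derivative_smul, hd, hder d, smul_smul,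
        show j - (k+1) = d by omega,
        show j.descFactorial (k+1) = (d+1) * j.descFactorial k by
          rw [Nat.descFactorial_succ, hd]]
      congr 1
      push_cast; ring
  -- the main (second) identity
  have key : ∑ k ∈ Finset.range (j + 1),
      b k * σ ^ k * (j.descFactorial k : ℝ) * (Δ (j - k)).eval u = u ^ j := by
    have step1 : ∑ k ∈ Finset.range (j + 1),
        b k * σ ^ k * (j.descFactorial k : ℝ) * (Δ (j - k)).eval u
        = ∑ k ∈ range (j+1), ∑ l ∈ range (j + 1 - k),
            b k * σ ^ k * (j.descFactorial k : ℝ)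
              * (((j-k).choose l : ℝ) * m l * σ ^ l * u ^ (j - k - l)) := by
      refine sum_congr rfl fun k hk => ?_
      rw [mem_range, Nat.lt_succ_iff] at hk
      rw [heval (j - k), mul_sum, show j + 1 - k = (j - k) + 1 by omega]
    rw [step1, tri (j+1) (fun k l => b k * σ ^ k * (j.descFactorial k : ℝ)
          * (((j-k).choose l : ℝ) * m l * σ ^ l * u ^ (j - k - l)))]
    have step2 : ∀ n ∈ range (j+1),
        ∑ k ∈ range (n+1), b k * σ ^ k * (j.descFactorial k : ℝ)
            * (((j-k).choose (n-k) : ℝ) * m (n-k) * σ ^ (n-k) * u ^ (j - k - (n-k)))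
        = (j.descFactorial n : ℝ) * σ ^ n * u ^ (j - n)
            * ∑ l ∈ range (n+1), m l / (l.factorial : ℝ) * b (n-l) := by
      intro n hn
      rw [mem_range, Nat.lt_succ_iff] at hn
      rw [← Finset.sum_range_reflect (fun l => m l / (l.factorial : ℝ) * b (n-l)) (n+1), mul_sum]
      refine sum_congr rfl fun k hk => ?_
      rw [mem_range, Nat.lt_succ_iff] at hk
      simp only [Nat.add_sub_cancel]
      have h1 : n - (n - k) = k := by omega
      have h2 : j - k - (n - k) = j - n := by omega
      have hfac : (((n-k).factorial : ℕ) : ℝ) ≠ 0 := by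
        exact_mod_cast (Nat.factorial_ne_zero (n-k))
      have hnum : (j.descFactorial k : ℝ) * ((j-k).choose (n-k) : ℝ)
          * (((n-k).factorial : ℕ) : ℝ) = (j.descFactorial n : ℝ) := by
        have : j.descFactorial k * ((j-k).choose (n-k)) * (n-k).factorial
            = j.descFactorial n := by
          rw [mul_assoc, mul_comm ((j-k).choose (n-k)), ← Nat.descFactorial_eq_factorial_mul_choose,
            descFac_comp, show k + (n - k) = n by omega]
        exact_mod_cast this
      have hσ : σ ^ k * σ ^ (n - k) = σ ^ n := by
        rw [← pow_add, show k + (n - k) = n by omega]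
      rw [h1, h2]
      field_simp
      linear_combination (b k * m (n-k) * σ ^ k * σ ^ (n-k) * u ^ (j-n)) * hnum
        + ((j.descFactorial n : ℝ) * u ^ (j-n) * m (n-k) * b k) * hσ
    rw [sum_congr rfl step2]
    rw [Finset.sum_eq_single 0]
    · simp [hm0, hb0]
    · intro n _ hn0
      rw [hS n (by omega), mul_zero]
    · intro h; exact absurd (mem_range.2 (Nat.succ_pos j)) h
  constructor
  · rw [← key]
    refine sum_congr rfl fun k hk => ?_
    rw [mem_range, Nat.lt_succ_iff] at hk
    rw [hiter k hk, eval_smul, smul_eq_mul]; ring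
  · exact key.symm
end

section
/- For an integer j ≥ 0, let K_j(ξ) = ((j+1)/2)(1−|ξ|)^j for |ξ| ≤ 1 and 0 otherwise, and let m̃_{j,k} = ∫_ℝ ξ^k K_j(ξ) dξ. Then m̃_{j,2} = 2/((j+2)(j+3)), m̃_{j,4} = 24/((j+2)(j+3)(j+4)(j+5)), and hence the normalized fourth moment m̃_{j,4}/(m̃_{j,2})² = 6(j+2)(j+3)/((j+4)(j+5)). This ratio lies in [3, 6) if and only if j ≥ 3, and is < 5 if and only if j ≤ 18. -/
open MeasureTheory

private lemma beta_nat' (j : ℕ) : ∀ k : ℕ, ∫ x in (0:ℝ)..1, x ^ k * (1 - x) ^ j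
    = (k.factorial * j.factorial : ℝ) / (k + j + 1).factorial := by
  induction j with
  | zero =>
    intro k
    have hk : ((k+1).factorial : ℝ) = ((k:ℝ)+1) * k.factorial := by
      rw [Nat.factorial_succ]; push_cast; ring
    have h0 : (k.factorial : ℝ) ≠ 0 := Nat.cast_ne_zero.mpr (Nat.factorial_ne_zero _)
    simp only [integral_pow, pow_zero, mul_one, Nat.factorial_zero, Nat.add_zero, Nat.cast_one,
      hk]
    rw [one_pow, zero_pow (by omega), sub_zero]
    field_simp
  | succ j ih =>
    intro k
    have h1 : ∫ x in (0:ℝ)..1, x ^ k * (1 - x) ^ (j+1)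
        = (∫ x in (0:ℝ)..1, x ^ k * (1 - x) ^ j) - ∫ x in (0:ℝ)..1, x ^ (k+1) * (1 - x) ^ j := by
      rw [← intervalIntegral.integral_sub]
      · apply intervalIntegral.integral_congr
        intro x _
        ring
      · exact (((continuous_pow k).mul ((continuous_const.sub continuous_id).pow j)).intervalIntegrable 0 1)
      · exact (((continuous_pow (k+1)).mul ((continuous_const.sub continuous_id).pow j)).intervalIntegrable 0 1)
    rw [h1, ih k, ih (k+1)]
    have e1 : (k + (j+1) + 1) = (k + j + 1) + 1 := by ring
    have e2 : (k + 1 + j + 1) = (k + j + 1) + 1 := by ring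
    rw [e1, e2]
    have hn : (((k+j+1)+1).factorial : ℝ) = ((k:ℝ)+j+2) * (k+j+1).factorial := by
      rw [Nat.factorial_succ]; push_cast; ring
    have hk : ((k+1).factorial : ℝ) = ((k:ℝ)+1) * k.factorial := by
      rw [Nat.factorial_succ]; push_cast; ring
    have hj : ((j+1).factorial : ℝ) = ((j:ℝ)+1) * j.factorial := by
      rw [Nat.factorial_succ]; push_cast; ring
    rw [hn, hk, hj]
    have hF : ((k+j+1).factorial : ℝ) ≠ 0 := Nat.cast_ne_zero.mpr (Nat.factorial_ne_zero _)
    have h2 : ((k:ℝ)+j+2) ≠ 0 := by positivity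
    field_simp
    ring

private lemma moment_eq' (j k : ℕ) (hk : Even k) (Kj : ℝ → ℝ)
    (hK : ∀ ξ, Kj ξ = if |ξ| ≤ 1 then ((j : ℝ) + 1) / 2 * (1 - |ξ|) ^ j else 0) :
    ∫ ξ, ξ ^ k * Kj ξ = ((j:ℝ)+1) * ∫ x in (0:ℝ)..1, x ^ k * (1 - x) ^ j := by
  set g : ℝ → ℝ := fun x => x ^ k * (((j:ℝ)+1)/2 * (1 - |x|) ^ j) with hg
  have hfun : (fun ξ : ℝ => ξ ^ k * Kj ξ) = Set.indicator (Set.Icc (-1:ℝ) 1) g := by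
    funext x
    rw [hK x, Set.indicator_apply]
    simp only [Set.mem_Icc, ← abs_le]
    by_cases h : |x| ≤ 1
    · simp [h, g]
    · simp [h]
  rw [hfun, MeasureTheory.integral_indicator measurableSet_Icc,
    MeasureTheory.integral_Icc_eq_integral_Ioc,
    ← intervalIntegral.integral_of_le (by norm_num : (-1:ℝ) ≤ 1)]
  have hgc : Continuous g := by
    apply (continuous_pow k).mul
    exact continuous_const.mul ((continuous_const.sub continuous_abs).pow j)
  have hsplit : ∫ x in (-1:ℝ)..1, g x = (∫ x in (-1:ℝ)..0, g x) + ∫ x in (0:ℝ)..1, g x :=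
    (intervalIntegral.integral_add_adjacent_intervals (hgc.intervalIntegrable _ _)
      (hgc.intervalIntegrable _ _)).symm
  have hcn := intervalIntegral.integral_comp_neg (a := (0:ℝ)) (b := 1) g
  rw [neg_zero] at hcn
  have hneg : ∫ x in (-1:ℝ)..0, g x = ∫ x in (0:ℝ)..1, g x := by
    rw [← hcn]
    apply intervalIntegral.integral_congr
    intro x _
    simp only [g, abs_neg]
    rw [hk.neg_pow]
  have habs : ∫ x in (0:ℝ)..1, g x = ∫ x in (0:ℝ)..1, x ^ k * (((j:ℝ)+1)/2 * (1 - x) ^ j) := by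
    apply intervalIntegral.integral_congr
    intro x hx
    rw [Set.uIcc_of_le (by norm_num : (0:ℝ) ≤ 1)] at hx
    simp only [g]
    rw [abs_of_nonneg hx.1]
  rw [hsplit, hneg, habs,
    show ((j:ℝ)+1) * ∫ x in (0:ℝ)..1, x ^ k * (1-x)^j
      = ∫ x in (0:ℝ)..1, ((j:ℝ)+1) * (x ^ k * (1-x)^j) from
      (intervalIntegral.integral_const_mul _ _).symm,
    ← two_mul, ← intervalIntegral.integral_const_mul]
  apply intervalIntegral.integral_congr
  intro x _
  ring

/-- For `K_j(ξ) = ((j+1)/2)(1−|ξ|)^j 𝟙_{|ξ|≤1}` with moments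
`m̃_{j,k} = ∫ ξ^k K_j(ξ) dξ`, one has `m̃_{j,2} = 2/((j+2)(j+3))`,
`m̃_{j,4} = 24/((j+2)(j+3)(j+4)(j+5))`, hence the normalized fourth moment
`m̃_{j,4}/m̃_{j,2}² = 6(j+2)(j+3)/((j+4)(j+5))`; this lies in `[3,6)` iff `j ≥ 3`
and is `< 5` iff `j ≤ 18`. -/
theorem piecewise_polynomial_kernel_moments
    (j : ℕ)
    (Kj : ℝ → ℝ)
    (hK : ∀ ξ, Kj ξ = if |ξ| ≤ 1 then ((j : ℝ) + 1) / 2 * (1 - |ξ|) ^ j else 0)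
    (mt : ℕ → ℝ) (hmt : ∀ k, mt k = ∫ ξ, ξ ^ k * Kj ξ) :
    mt 2 = 2 / (((j : ℝ) + 2) * ((j : ℝ) + 3)) ∧
    mt 4 = 24 / (((j : ℝ) + 2) * ((j : ℝ) + 3) * ((j : ℝ) + 4) * ((j : ℝ) + 5)) ∧
    mt 4 / (mt 2) ^ 2 = 6 * ((j : ℝ) + 2) * ((j : ℝ) + 3) / (((j : ℝ) + 4) * ((j : ℝ) + 5)) ∧
    ((3 ≤ mt 4 / (mt 2) ^ 2 ∧ mt 4 / (mt 2) ^ 2 < 6) ↔ 3 ≤ j) ∧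
    (mt 4 / (mt 2) ^ 2 < 5 ↔ j ≤ 18) := by
  set x : ℝ := (j : ℝ) with hx
  have hx0 : (0:ℝ) ≤ x := Nat.cast_nonneg j
  have hjf : (j.factorial : ℝ) ≠ 0 := Nat.cast_ne_zero.mpr (Nat.factorial_ne_zero _)
  have hp2 : (0:ℝ) < x + 2 := by linarith
  have hp3 : (0:ℝ) < x + 3 := by linarith
  have hp4 : (0:ℝ) < x + 4 := by linarith
  have hp5 : (0:ℝ) < x + 5 := by linarith
  -- factorial expansions
  have key3 : (((2:ℕ)+j+1).factorial : ℝ) = (x+3)*((x+2)*((x+1)*j.factorial)) := by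
    have h : (2:ℕ)+j+1 = ((j+1)+1)+1 := by omega
    rw [h, Nat.factorial_succ, Nat.factorial_succ, Nat.factorial_succ]
    push_cast; ring
  have key5 : (((4:ℕ)+j+1).factorial : ℝ) = (x+5)*((x+4)*((x+3)*((x+2)*((x+1)*j.factorial)))) := by
    have h : (4:ℕ)+j+1 = ((((j+1)+1)+1)+1)+1 := by omega
    rw [h, Nat.factorial_succ, Nat.factorial_succ, Nat.factorial_succ, Nat.factorial_succ,
      Nat.factorial_succ]
    push_cast; ring
  have hm2 : mt 2 = 2 / ((x + 2) * (x + 3)) := by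
    rw [hmt 2, moment_eq' j 2 (by decide) Kj hK, beta_nat' j 2, key3]
    have : ((2:ℕ).factorial : ℝ) = 2 := by norm_num [Nat.factorial]
    rw [this]
    have h1 : (0:ℝ) < x + 1 := by linarith
    field_simp
    ring
  have hm4 : mt 4 = 24 / ((x + 2) * (x + 3) * (x + 4) * (x + 5)) := by
    rw [hmt 4, moment_eq' j 4 (by decide) Kj hK, beta_nat' j 4, key5]
    have : ((4:ℕ).factorial : ℝ) = 24 := by norm_num [Nat.factorial]
    rw [this]
    have h1 : (0:ℝ) < x + 1 := by linarith
    field_simp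
    ring
  have hratio : mt 4 / (mt 2) ^ 2 = 6 * (x + 2) * (x + 3) / ((x + 4) * (x + 5)) := by
    rw [hm2, hm4]
    field_simp
    ring
  refine ⟨hm2, hm4, hratio, ?_, ?_⟩
  · rw [hratio]
    constructor
    · rintro ⟨h3, -⟩
      by_contra hlt
      push_neg at hlt
      interval_cases j <;> norm_num [hx] at h3
    · intro h3
      have hx3 : (3:ℝ) ≤ x := by rw [hx]; exact_mod_cast h3
      constructor
      · rw [le_div_iff₀ (by positivity)]
        nlinarith
      · rw [div_lt_iff₀ (by positivity)]
        nlinarith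
  · rw [hratio]
    constructor
    · intro h5
      rw [div_lt_iff₀ (by positivity)] at h5
      by_contra hgt
      push_neg at hgt
      have hx19 : (19:ℝ) ≤ x := by rw [hx]; exact_mod_cast hgt
      nlinarith
    · intro h18
      have hx18 : x ≤ 18 := by rw [hx]; exact_mod_cast h18
      rw [div_lt_iff₀ (by positivity)]
      nlinarith
end

section
/- For an integer j ≥ 1, let K̃_j(ξ) = ((j+1)/(2j))(1−|ξ|^j) for |ξ| ≤ 1 and 0 otherwise, and let m̃_{j,k} = ∫_ℝ ξ^k K̃_j(ξ) dξ. Then m̃_{j,2} = (j+1)/(3(j+3)), m̃_{j,4} = (j+1)/(5(j+5)), and the normalized fourth moment m̃_{j,4}/(m̃_{j,2})² = 9(j+3)²/(5(j+1)(j+5)) is strictly less than 3 for every j ≥ 1. -/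
/-!
Only `[-1, 1]` contributes, and for even `k` the integrand is even, so
`m̃_{j,k} = (j+1)/(2j) · 2 ∫₀¹ ξ^k (1 - ξ^j) dξ = (j+1)/((k+1)(k+j+1))`.
With `k = 2, 4` the ratio bound `9(j+3)² < 15(j+1)(j+5)` reduces to `2j² + 12j > 2`.
-/

open MeasureTheory

theorem intervalIntegral.integral_neg_eq_two_mul_of_even {f : ℝ → ℝ} (hf : ∀ x, f (-x) = f x)
    {a : ℝ} (hint : IntervalIntegrable f volume 0 a) :
    ∫ x in -a..a, f x = 2 * ∫ x in 0..a, f x := by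
  have hint_neg : IntervalIntegrable f volume (-a) 0 := by
    simpa [hf] using (IntervalIntegrable.iff_comp_neg (f := f)).mp hint.symm
  have hreflect : ∫ x in -a..0, f x = ∫ x in 0..a, f x := by
    simpa [hf] using (intervalIntegral.integral_comp_neg (a := 0) (b := a) f).symm
  rw [← intervalIntegral.integral_add_adjacent_intervals hint_neg hint, hreflect, two_mul]

theorem integral_pow_mul_one_sub_pow (j k : ℕ) :
    ∫ x in (0 : ℝ)..1, x ^ k * (1 - x ^ j) = j / ((k + 1) * (k + j + 1)) := by
  have hsplit : ∀ x : ℝ, x ^ k * (1 - x ^ j) = x ^ k - x ^ (k + j) := fun x => by ring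
  simp only [hsplit]
  rw [intervalIntegral.integral_sub ((continuous_pow k).intervalIntegrable _ _)
    ((continuous_pow (k + j)).intervalIntegrable _ _), integral_pow, integral_pow]
  push_cast
  field_simp
  ring

theorem integral_pow_mul_one_sub_abs_pow {j k : ℕ} (hk : Even k) :
    ∫ x in (-1 : ℝ)..1, x ^ k * (1 - |x| ^ j) = 2 * j / ((k + 1) * (k + j + 1)) := by
  have hcongr : Set.EqOn (fun x : ℝ => x ^ k * (1 - |x| ^ j)) (fun x => x ^ k * (1 - x ^ j))
      (Set.uIcc 0 1) := fun x hx => by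
    rw [Set.uIcc_of_le zero_le_one] at hx
    simp only [abs_of_nonneg hx.1]
  rw [intervalIntegral.integral_neg_eq_two_mul_of_even (fun x => by simp [hk.neg_pow])
    (Continuous.intervalIntegrable (by fun_prop) _ _), intervalIntegral.integral_congr hcongr,
    integral_pow_mul_one_sub_pow]
  ring

theorem integral_ite_abs_le_one {f : ℝ → ℝ} :
    ∫ x, (if |x| ≤ 1 then f x else 0) = ∫ x in (-1 : ℝ)..1, f x := by
  have hind : (fun x => if |x| ≤ 1 then f x else 0) = (Set.Icc (-1) 1).indicator f := by
    ext x
    simp only [Set.indicator, Set.mem_Icc, abs_le]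
  rw [hind, integral_indicator measurableSet_Icc, integral_Icc_eq_integral_Ioc,
    intervalIntegral.integral_of_le (by norm_num)]

theorem integral_pow_mul_kernel_of_even {j k : ℕ} (hj : j ≠ 0) {K : ℝ → ℝ}
    (hK : ∀ ξ, K ξ = if |ξ| ≤ 1 then ((j : ℝ) + 1) / (2 * (j : ℝ)) * (1 - |ξ| ^ j) else 0)
    (hk : Even k) :
    ∫ ξ, ξ ^ k * K ξ = (j + 1) / ((k + 1) * (k + j + 1)) := by
  have hmul : ∀ ξ : ℝ, ξ ^ k * K ξ =
      if |ξ| ≤ 1 then ((j : ℝ) + 1) / (2 * j) * (ξ ^ k * (1 - |ξ| ^ j)) else 0 := fun ξ => by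
    rw [hK]
    split_ifs <;> ring
  simp only [hmul]
  rw [integral_ite_abs_le_one, intervalIntegral.integral_const_mul,
    integral_pow_mul_one_sub_abs_pow hk]
  field_simp

theorem nine_mul_sq_div_lt_three {x : ℝ} (hx : 1 ≤ x) :
    9 * (x + 3) ^ 2 / (5 * (x + 1) * (x + 5)) < 3 := by
  rw [div_lt_iff₀ (by positivity)]
  nlinarith

/-- For `K̃_j(ξ) = ((j+1)/(2j))(1−|ξ|^j) 𝟙_{|ξ|≤1}` (`j ≥ 1`) with
moments `m̃_{j,k} = ∫ ξ^k K̃_j(ξ) dξ`, one has `m̃_{j,2} = (j+1)/(3(j+3))`,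
`m̃_{j,4} = (j+1)/(5(j+5))`, and the normalized fourth moment
`m̃_{j,4}/m̃_{j,2}² = 9(j+3)²/(5(j+1)(j+5))` is strictly less than `3`. -/
theorem even_polynomial_kernel_fourth_moment_lt_three
    (j : ℕ) (hj : 1 ≤ j)
    (Kj : ℝ → ℝ)
    (hK : ∀ ξ, Kj ξ = if |ξ| ≤ 1 then ((j : ℝ) + 1) / (2 * (j : ℝ)) * (1 - |ξ| ^ j) else 0)
    (mt : ℕ → ℝ) (hmt : ∀ k, mt k = ∫ ξ, ξ ^ k * Kj ξ) :
    mt 2 = ((j : ℝ) + 1) / (3 * ((j : ℝ) + 3)) ∧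
    mt 4 = ((j : ℝ) + 1) / (5 * ((j : ℝ) + 5)) ∧
    mt 4 / (mt 2) ^ 2 = 9 * ((j : ℝ) + 3) ^ 2 / (5 * ((j : ℝ) + 1) * ((j : ℝ) + 5)) ∧
    mt 4 / (mt 2) ^ 2 < 3 := by
  have hj0 : j ≠ 0 := by omega
  have h2 : mt 2 = ((j : ℝ) + 1) / (3 * ((j : ℝ) + 3)) := by
    rw [hmt, integral_pow_mul_kernel_of_even hj0 hK even_two]
    push_cast
    ring
  have h4 : mt 4 = ((j : ℝ) + 1) / (5 * ((j : ℝ) + 5)) := by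
    rw [hmt, integral_pow_mul_kernel_of_even hj0 hK (by decide)]
    push_cast
    ring
  have hratio : mt 4 / (mt 2) ^ 2
      = 9 * ((j : ℝ) + 3) ^ 2 / (5 * ((j : ℝ) + 1) * ((j : ℝ) + 5)) := by
    rw [h2, h4]
    field_simp
    ring
  exact ⟨h2, h4, hratio, hratio ▸ nine_mul_sq_div_lt_three (by exact_mod_cast hj)⟩
end
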